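/- arXiv:1801.00044 — 10 statements merged into one kernel-verified Lean document; each statement's English description precedes it below -/
import Mathlib

section
/- For every subset D of {1,...,n}, the number of permutations π of {1,...,n} with cyclic descent set D equals the number of permutations with cyclic descent set 1+D, where 1+D is obtained from D by adding 1 modulo n to each element (with representative in {1,...,n}). -/
/-- Entry of the permutation at 1-based position `i`: `π(i)` as a natural number
(value of `π` on the `Fin n` element `i-1`), or `0` if out of range. -/
def permVal (n : ℕ) (π : Equiv.Perm (Fin n)) (i : ℕ) : ℕ :=
  if h : i - 1 < n then ((π ⟨i - 1, h⟩ : Fin n) : ℕ) else 0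

/-- Descent set of a permutation of `{1,...,n}`:
`Des(π) = {i ∈ {1,...,n-1} : π(i) > π(i+1)}`. -/
def permDes (n : ℕ) (π : Equiv.Perm (Fin n)) : Finset ℕ :=
  (Finset.Icc 1 (n - 1)).filter (fun i => permVal n π (i + 1) < permVal n π i)

/-- Cyclic descent set: `cDes(π) = Des(π) ∪ {n}` if `π(n) > π(1)`, else `Des(π)`. -/
def permCDes (n : ℕ) (π : Equiv.Perm (Fin n)) : Finset ℕ :=
  if permVal n π 1 < permVal n π n then permDes n π ∪ {n} else permDes n π

/-- `1 + D`: add 1 modulo `n` to each element of `D`, with representatives in `{1,...,n}`. -/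
def cshift (n : ℕ) (D : Finset ℕ) : Finset ℕ := D.image (fun i => i % n + 1)

lemma permVal_pos {n : ℕ} (π : Equiv.Perm (Fin n)) {i : ℕ} (h : i - 1 < n) :
    permVal n π i = π ⟨i - 1, h⟩ := dif_pos h

lemma finRotate_apply_mk (n i : ℕ) (h' : i < n) (h : i + 1 < n) :
    finRotate n ⟨i, h'⟩ = ⟨i + 1, h⟩ := by
  match n, h with
  | (m+2), h =>
    rw [finRotate_succ_apply]
    ext
    rw [Fin.val_add, Fin.val_one', Nat.one_mod, Nat.mod_eq_of_lt h]

lemma mem_cdes {n : ℕ} (hn : 1 ≤ n) (π : Equiv.Perm (Fin n)) (j : ℕ) :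
    j ∈ permCDes n π ↔
      (1 ≤ j ∧ j ≤ n - 1 ∧ permVal n π (j + 1) < permVal n π j) ∨
      (j = n ∧ permVal n π 1 < permVal n π n) := by
  unfold permCDes permDes
  split
  · next h =>
    simp only [Finset.mem_union, Finset.mem_filter, Finset.mem_Icc, Finset.mem_singleton]
    constructor
    · rintro (⟨⟨h1, h2⟩, h3⟩ | rfl)
      · exact Or.inl ⟨h1, h2, h3⟩
      · exact Or.inr ⟨rfl, h⟩
    · rintro (⟨h1, h2, h3⟩ | ⟨rfl, _⟩)
      · exact Or.inl ⟨⟨h1, h2⟩, h3⟩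
      · exact Or.inr rfl
  · next h =>
    simp only [Finset.mem_filter, Finset.mem_Icc]
    constructor
    · rintro ⟨⟨h1, h2⟩, h3⟩
      exact Or.inl ⟨h1, h2, h3⟩
    · rintro (⟨h1, h2, h3⟩ | ⟨rfl, h1⟩)
      · exact ⟨⟨h1, h2⟩, h3⟩
      · exact absurd h1 h

lemma cdes_subset {n : ℕ} (hn : 1 ≤ n) (π : Equiv.Perm (Fin n)) :
    permCDes n π ⊆ Finset.Icc 1 n := by
  intro j hj
  rw [mem_cdes hn] at hj
  rw [Finset.mem_Icc]
  rcases hj with ⟨h1, h2, _⟩ | ⟨rfl, _⟩ <;> omega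

lemma mod_eq_of_mem {n i : ℕ} (h1 : 1 ≤ i) (h2 : i ≤ n) :
    i % n = if i = n then 0 else i := by
  rcases eq_or_lt_of_le h2 with rfl | h
  · simp
  · rw [if_neg (Nat.ne_of_lt h), Nat.mod_eq_of_lt h]

lemma cshift_injOn {n : ℕ} (hn : 1 ≤ n) {A B : Finset ℕ}
    (hA : A ⊆ Finset.Icc 1 n) (hB : B ⊆ Finset.Icc 1 n)
    (h : cshift n A = cshift n B) : A = B := by
  have key : ∀ (C : Finset ℕ), C ⊆ Finset.Icc 1 n → ∀ i, 1 ≤ i → i ≤ n →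
      (i ∈ C ↔ i % n + 1 ∈ cshift n C) := by
    intro C hC i hi1 hi2
    constructor
    · intro hiC
      exact Finset.mem_image_of_mem _ hiC
    · intro hmem
      rcases Finset.mem_image.mp hmem with ⟨i', hi'C, hi'⟩
      have hi'I := Finset.mem_Icc.mp (hC hi'C)
      have e1 := mod_eq_of_mem hi'I.1 hi'I.2
      have e2 := mod_eq_of_mem hi1 hi2
      have hmod : i' % n + 1 = i % n + 1 := hi'
      have : i' = i := by
        rw [e1, e2] at hmod
        by_cases hc1 : i' = n <;> by_cases hc2 : i = n <;>
          simp [hc1, hc2] at hmod <;> omega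
      rwa [this] at hi'C
  ext i
  by_cases hi : 1 ≤ i ∧ i ≤ n
  · rw [key A hA i hi.1 hi.2, key B hB i hi.1 hi.2, h]
  · constructor <;> intro hm
    · exact absurd (Finset.mem_Icc.mp (hA hm)) (by omega)
    · exact absurd (Finset.mem_Icc.mp (hB hm)) (by omega)

lemma cdes_shift {n : ℕ} (hn : 1 ≤ n) (π : Equiv.Perm (Fin n)) :
    permCDes n (π * (finRotate n)⁻¹) = cshift n (permCDes n π) := by
  set σ := π * (finRotate n)⁻¹ with hσ
  -- value computations
  have hv1 : permVal n σ 1 = permVal n π n := by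
    rw [permVal_pos σ (show 1 - 1 < n by omega), permVal_pos π (show n - 1 < n by omega)]
    congr 1
    rw [hσ, Equiv.Perm.mul_apply]
    congr 1
    rw [Equiv.Perm.inv_eq_iff_eq]
    match n, hn with
    | (m+1), _ =>
      have : (⟨m + 1 - 1, by omega⟩ : Fin (m+1)) = Fin.last m := rfl
      rw [this, finRotate_last]
      rfl
  have hv2 : ∀ i, 2 ≤ i → i ≤ n → permVal n σ i = permVal n π (i - 1) := by
    intro i h2 hle
    rw [permVal_pos σ (show i - 1 < n by omega), permVal_pos π (show i - 1 - 1 < n by omega)]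
    rw [hσ, Equiv.Perm.mul_apply]
    congr 2
    rw [Equiv.Perm.inv_eq_iff_eq]
    rw [finRotate_apply_mk n (i - 1 - 1) (by omega) (by omega)]
    congr 1
    omega
  ext j
  rw [mem_cdes hn, cshift, Finset.mem_image]
  constructor
  · rintro (⟨h1, h2, h3⟩ | ⟨hjn, h3⟩)
    · -- descent of σ at j, 1 ≤ j ≤ n-1
      rcases eq_or_lt_of_le h1 with rfl | hj2
      · -- j = 1 : corresponds to n ∈ cDes π
        have hn2 : 2 ≤ n := by omega
        rw [hv2 2 le_rfl hn2, hv1] at h3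
        refine ⟨n, ?_, ?_⟩
        · rw [mem_cdes hn]
          exact Or.inr ⟨rfl, by simpa using h3⟩
        · simp [Nat.mod_self]
      · -- 2 ≤ j
        rw [hv2 (j+1) (by omega) (by omega), hv2 j (by omega) (by omega)] at h3
        refine ⟨j - 1, ?_, ?_⟩
        · rw [mem_cdes hn]
          refine Or.inl ⟨by omega, by omega, ?_⟩
          have : j - 1 + 1 = j := by omega
          rw [this]
          simpa using h3
        · rw [Nat.mod_eq_of_lt (by omega)]
          omega
    · -- j = n : cyclic descent of σ
      rw [hjn]
      have hn2 : 2 ≤ n := by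
        by_contra hc
        have hn1 : n = 1 := by omega
        subst hn1
        exact absurd h3 (lt_irrefl _)
      rw [hv1, hv2 n (by omega) le_rfl] at h3
      refine ⟨n - 1, ?_, ?_⟩
      · rw [mem_cdes hn]
        refine Or.inl ⟨by omega, by omega, ?_⟩
        rw [show n - 1 + 1 = n by omega]
        exact h3
      · rw [Nat.mod_eq_of_lt (by omega)]
        omega
  · rintro ⟨i, hi, rfl⟩
    rw [mem_cdes hn] at hi
    rcases hi with ⟨h1, h2, h3⟩ | ⟨hin, h3⟩
    · -- i is a descent of π, 1 ≤ i ≤ n - 1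
      rw [Nat.mod_eq_of_lt (by omega)]
      rcases eq_or_lt_of_le h2 with he | hlt
      · -- i = n - 1, so i + 1 = n : becomes cyclic descent of σ
        refine Or.inr ⟨by omega, ?_⟩
        rw [hv1, hv2 n (by omega) le_rfl]
        rw [show i + 1 = n by omega] at h3
        rw [show n - 1 = i by omega]
        exact h3
      · -- i + 1 ≤ n - 1 : descent of σ at i + 1
        refine Or.inl ⟨by omega, by omega, ?_⟩
        rw [hv2 (i + 1 + 1) (by omega) (by omega), hv2 (i + 1) (by omega) (by omega)]
        rw [show i + 1 + 1 - 1 = i + 1 from rfl, show i + 1 - 1 = i from rfl]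
        exact h3
    · -- i = n, cyclic descent of π : becomes descent of σ at 1
      rw [hin]
      have hn2 : 2 ≤ n := by
        by_contra hc
        have hn1 : n = 1 := by omega
        subst hn1
        exact absurd h3 (lt_irrefl _)
      rw [Nat.mod_self]
      refine Or.inl ⟨le_rfl, by omega, ?_⟩
      rw [show (0:ℕ) + 1 + 1 = 2 from rfl, show (0:ℕ) + 1 = 1 from rfl]
      rw [hv2 2 le_rfl (by omega), hv1]
      exact h3

/-- The number of permutations of `{1,...,n}` with cyclic descent set `D` equals the number
with cyclic descent set `1 + D`. -/
theorem stmt_0 (n : ℕ) (hn : 1 ≤ n) (D : Finset ℕ) (hD : D ⊆ Finset.Icc 1 n) :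
    ((Finset.univ : Finset (Equiv.Perm (Fin n))).filter
        (fun π => permCDes n π = D)).card =
    ((Finset.univ : Finset (Equiv.Perm (Fin n))).filter
        (fun π => permCDes n π = cshift n D)).card := by
  classical
  refine Finset.card_bij' (fun π _ => π * (finRotate n)⁻¹)
    (fun π _ => π * finRotate n) ?_ ?_ ?_ ?_
  · intro π hπ
    simp only [Finset.mem_filter, Finset.mem_univ, true_and] at hπ ⊢
    rw [cdes_shift hn, hπ]
  · intro π hπ
    simp only [Finset.mem_filter, Finset.mem_univ, true_and] at hπ ⊢
    have key := cdes_shift hn (π * finRotate n)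
    rw [mul_inv_cancel_right, hπ] at key
    exact cshift_injOn hn (cdes_subset hn _) hD key.symm
  · intro π _
    exact inv_mul_cancel_right π (finRotate n)
  · intro π _
    exact mul_inv_cancel_right π (finRotate n)
end

section
/- Let 1 ≤ k ≤ n-1 and let J = {j_1 < ... < j_t} be a nonempty subset of {1,...,n} with cyclic differences d_1 = j_1 - j_t + n and d_i = j_i - j_{i-1} for 2 ≤ i ≤ t. The number of words w ∈ {1,2}^n with exactly k occurrences of the letter 1 and cyclic descent set cDes(w) = J equals the coefficient of q^k in the product over i=1,...,t of (q + q^2 + ... + q^{d_i - 1}). -/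
/-- Cyclic descent set of a word `w ∈ {1,2}^n`, encoded as `w : Fin n → Fin 2`
(letter at 1-based position `i` is `(w ⟨i-1⟩ : ℕ) + 1`):
`cDes(w) = {i ∈ {1,...,n} : w_i > w_{i+1}}`, indices mod `n`. -/
def cDesW (n : ℕ) [NeZero n] (w : Fin n → Fin 2) : Finset ℕ :=
  (Finset.univ.filter (fun i : Fin n => w (i + 1) < w i)).image (fun i : Fin n => (i : ℕ) + 1)

/-- Number of occurrences of the letter `1` in `w`. -/
def onesW (n : ℕ) (w : Fin n → Fin 2) : ℕ :=
  (Finset.univ.filter (fun i : Fin n => ((w i : ℕ) + 1 = 1))).card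

/-- The cyclic difference `d_i` of the element `j` in the set `J = {j_1 < … < j_t}`:
`j - (largest element of J smaller than j)` if there is one, and `j - j_t + n` otherwise. -/
def dgap (n : ℕ) (J : Finset ℕ) (j : ℕ) : ℕ :=
  if (J.filter (fun x => x < j)).Nonempty then j - (J.filter (fun x => x < j)).sup id
  else j + n - J.sup id

section core
open Fin.NatCast Fin.CommRing
variable {n : ℕ} [NeZero n] (J' : Finset (Fin n))

lemma exE (hne : J'.Nonempty) (i : Fin n) : ∃ m : ℕ, i + (m : Fin n) ∈ J' := by
  obtain ⟨j, hj⟩ := hne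
  exact ⟨((j - i : Fin n) : ℕ), by simpa [Fin.cast_val_eq_self] using hj⟩

lemma exG (hne : J'.Nonempty) (i : Fin n) : ∃ m : ℕ, i - ((m + 1 : ℕ) : Fin n) ∈ J' := by
  obtain ⟨j, hj⟩ := hne
  rcases Nat.eq_zero_or_pos ((i - j : Fin n) : ℕ) with h | h
  · refine ⟨n - 1, ?_⟩
    have hn : 0 < n := Nat.pos_of_ne_zero (NeZero.ne n)
    have h0 : ((n - 1 + 1 : ℕ) : Fin n) = 0 := by
      rw [Nat.sub_add_cancel hn]; simp
    rw [h0, sub_zero]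
    have h1 : (i - j : Fin n) = 0 := by ext; simpa using h
    have : i = j := sub_eq_zero.mp h1
    rwa [this]
  · refine ⟨((i - j : Fin n) : ℕ) - 1, ?_⟩
    rw [Nat.sub_add_cancel h, Fin.cast_val_eq_self]
    simpa using hj

/-- distance forward to the next element of `J'` (0 if `i ∈ J'`). -/
noncomputable def eF (hne : J'.Nonempty) (i : Fin n) : ℕ := Nat.find (exE J' hne i)

/-- distance back to the previous element of `J'` (strictly positive). -/
noncomputable def gF (hne : J'.Nonempty) (i : Fin n) : ℕ := Nat.find (exG J' hne i) + 1

/-- the next element of `J'` (equal to `i` if `i ∈ J'`). -/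
noncomputable def ndF (hne : J'.Nonempty) (i : Fin n) : Fin n := i + ((eF J' hne i : ℕ) : Fin n)

variable (hne : J'.Nonempty)

lemma ndF_mem (i : Fin n) : ndF J' hne i ∈ J' := Nat.find_spec (exE J' hne i)

lemma gF_pos (i : Fin n) : 1 ≤ gF J' hne i := Nat.le_add_left _ _

lemma sub_gF_mem (i : Fin n) : i - ((gF J' hne i : ℕ) : Fin n) ∈ J' :=
  Nat.find_spec (exG J' hne i)

lemma gF_min (i : Fin n) {d : ℕ} (h1 : 1 ≤ d) (h2 : d < gF J' hne i) :
    i - ((d : ℕ) : Fin n) ∉ J' := by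
  have hd : d - 1 < Nat.find (exG J' hne i) := by unfold gF at h2; omega
  have := Nat.find_min (exG J' hne i) hd
  rwa [Nat.sub_add_cancel h1] at this

lemma eF_min (i : Fin n) {m : ℕ} (h : m < eF J' hne i) : i + ((m : ℕ) : Fin n) ∉ J' :=
  Nat.find_min (exE J' hne i) h

lemma eF_eq_zero (i : Fin n) (h : i ∈ J') : eF J' hne i = 0 := by
  simp [eF, Nat.find_eq_zero]
  simpa using h

lemma ndF_self (i : Fin n) (h : i ∈ J') : ndF J' hne i = i := by
  simp [ndF, eF_eq_zero J' hne i h]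

lemma add_cast_succ (i : Fin n) (m : ℕ) :
    i + ((m + 1 : ℕ) : Fin n) = (i + 1) + ((m : ℕ) : Fin n) := by
  push_cast; ring

lemma eF_succ (i : Fin n) (h : i ∉ J') : eF J' hne i = eF J' hne (i + 1) + 1 := by
  unfold eF
  rw [Nat.find_eq_iff]
  constructor
  · have := Nat.find_spec (exE J' hne (i + 1))
    rwa [add_cast_succ]
  · rintro (_ | m) hm
    · simpa using h
    · have hm' : m < Nat.find (exE J' hne (i + 1)) := by omega
      have := Nat.find_min (exE J' hne (i + 1)) hm'
      rwa [add_cast_succ]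

lemma ndF_succ (i : Fin n) (h : i ∉ J') : ndF J' hne (i + 1) = ndF J' hne i := by
  unfold ndF
  rw [eF_succ J' hne i h, add_cast_succ]

lemma gF_succ_self (i : Fin n) (h : i ∈ J') : gF J' hne (i + 1) = 1 := by
  unfold gF
  have : Nat.find (exG J' hne (i + 1)) = 0 := by
    rw [Nat.find_eq_zero]
    simpa using h
  omega

lemma gF_succ (i : Fin n) (h : i ∉ J') : gF J' hne (i + 1) = gF J' hne i + 1 := by
  unfold gF
  have : Nat.find (exG J' hne (i + 1)) = Nat.find (exG J' hne i) + 1 := by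
    rw [Nat.find_eq_iff]
    constructor
    · have := Nat.find_spec (exG J' hne i)
      rw [show ((Nat.find (exG J' hne i) + 1 + 1 : ℕ) : Fin n)
          = ((Nat.find (exG J' hne i) + 1 : ℕ) : Fin n) + 1 from Nat.cast_add_one _]
      rwa [add_sub_add_right_eq_sub]
    · rintro (_ | m) hm
      · simpa using h
      · have hm' : m < Nat.find (exG J' hne i) := by omega
        have := Nat.find_min (exG J' hne i) hm'
        rw [show ((m + 1 + 1 : ℕ) : Fin n) = ((m + 1 : ℕ) : Fin n) + 1 from Nat.cast_add_one _]
        rwa [add_sub_add_right_eq_sub]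
  omega

lemma eF_lt (i : Fin n) : eF J' hne i < n := by
  obtain ⟨j, hj⟩ := id hne
  have : eF J' hne i ≤ ((j - i : Fin n) : ℕ) :=
    Nat.find_le (by simpa [Fin.cast_val_eq_self] using hj)
  exact lt_of_le_of_lt this (Fin.is_lt _)

lemma gF_le (i : Fin n) : gF J' hne i ≤ n := by
  obtain ⟨j, hj⟩ := id hne
  have hn : 0 < n := Nat.pos_of_ne_zero (NeZero.ne n)
  rcases Nat.eq_zero_or_pos ((i - j : Fin n) : ℕ) with h | h
  · have : Nat.find (exG J' hne i) ≤ n - 1 := by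
      apply Nat.find_le
      have h0 : ((n - 1 + 1 : ℕ) : Fin n) = 0 := by
        rw [Nat.sub_add_cancel hn]; simp
      rw [h0, sub_zero]
      have h1 : (i - j : Fin n) = 0 := by ext; simpa using h
      have : i = j := sub_eq_zero.mp h1
      rwa [this]
    unfold gF; omega
  · have : Nat.find (exG J' hne i) ≤ ((i - j : Fin n) : ℕ) - 1 := by
      apply Nat.find_le
      rw [Nat.sub_add_cancel h, Fin.cast_val_eq_self]
      simpa using hj
    have := Fin.is_lt (i - j)
    unfold gF; omega

lemma gF_ndF (i : Fin n) : gF J' hne (ndF J' hne i) = eF J' hne i + gF J' hne i := by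
  generalize hm : eF J' hne i = m
  induction m generalizing i with
  | zero =>
    have hi : i ∈ J' := by
      by_contra h
      rw [eF_succ J' hne i h] at hm; omega
    rw [ndF_self J' hne i hi]; omega
  | succ m ih =>
    have hi : i ∉ J' := by
      intro h
      rw [eF_eq_zero J' hne i h] at hm; omega
    have he : eF J' hne (i + 1) = m := by
      have := eF_succ J' hne i hi; omega
    have := ih (i + 1) he
    rw [ndF_succ J' hne i hi] at this
    rw [this, gF_succ J' hne i hi]
    omega

lemma back (d : ℕ) (i : Fin n) (hd : d < gF J' hne i) :
    gF J' hne (i - (d : Fin n)) = gF J' hne i - d ∧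
    ndF J' hne (i - (d : Fin n)) = ndF J' hne i := by
  induction d generalizing i with
  | zero => simp
  | succ d ih =>
    have h1 : i - 1 ∉ J' := by
      have := gF_min J' hne i (d := 1) le_rfl (by omega)
      simpa using this
    have heq : (i - 1) + 1 = i := by ring
    have hg : gF J' hne (i - 1) = gF J' hne i - 1 := by
      have := gF_succ J' hne (i - 1) h1
      rw [heq] at this; omega
    have hnd : ndF J' hne (i - 1) = ndF J' hne i := by
      have := ndF_succ J' hne (i - 1) h1
      rw [heq] at this
      exact this.symm
    have hd' : d < gF J' hne (i - 1) := by omega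
    have := ih (i - 1) hd'
    have hsub : (i - 1) - (d : Fin n) = i - ((d + 1 : ℕ) : Fin n) := by
      push_cast; ring
    rw [hsub] at this
    rw [this.1, this.2, hg, hnd]
    exact ⟨by omega, rfl⟩

lemma ndF_eq_iff (j : Fin n) (hj : j ∈ J') (i : Fin n) :
    ndF J' hne i = j ↔ ∃ d : ℕ, d < gF J' hne j ∧ i = j - (d : Fin n) := by
  constructor
  · intro h
    refine ⟨eF J' hne i, ?_, ?_⟩
    · have := gF_ndF J' hne i
      rw [h] at this
      have := gF_pos J' hne i
      omega
    · rw [← h]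
      unfold ndF
      rw [add_sub_cancel_right]
  · rintro ⟨d, hd, rfl⟩
    rw [(back J' hne d j hd).2, ndF_self J' hne j hj]

lemma card_block (j : Fin n) (hj : j ∈ J') (c : ℕ) (hc1 : 1 ≤ c) (hc2 : c ≤ gF J' hne j - 1) :
    (Finset.univ.filter (fun i => ndF J' hne i = j ∧ gF J' hne i ≤ c)).card = c := by
  have hgj : c + 1 ≤ gF J' hne j := by
    have := gF_pos J' hne j; omega
  have hset : (Finset.univ.filter (fun i => ndF J' hne i = j ∧ gF J' hne i ≤ c)) =
      (Finset.Icc (gF J' hne j - c) (gF J' hne j - 1)).image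
        (fun d : ℕ => j - (d : Fin n)) := by
    ext i
    simp only [Finset.mem_filter, Finset.mem_univ, true_and, Finset.mem_image, Finset.mem_Icc]
    constructor
    · rintro ⟨hnd, hgi⟩
      obtain ⟨d, hd, rfl⟩ := (ndF_eq_iff J' hne j hj i).mp hnd
      have hb := (back J' hne d j hd).1
      exact ⟨d, ⟨by omega, by omega⟩, rfl⟩
    · rintro ⟨d, ⟨hd1, hd2⟩, rfl⟩
      have hd : d < gF J' hne j := by omega
      have hb := (back J' hne d j hd).1
      refine ⟨(ndF_eq_iff J' hne j hj _).mpr ⟨d, hd, rfl⟩, by omega⟩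
  rw [hset, Finset.card_image_of_injOn, Nat.card_Icc]
  · omega
  · intro a ha b hb hab
    simp only [Finset.coe_Icc, Set.mem_Icc] at ha hb
    have hgn := gF_le J' hne j
    have ha' : a < n := by omega
    have hb' : b < n := by omega
    have : (a : Fin n) = (b : Fin n) := by
      have := sub_right_injective hab
      exact this
    have := congrArg Fin.val this
    rwa [Fin.val_cast_of_lt ha', Fin.val_cast_of_lt hb'] at this

lemma sub_cast_inj (j : Fin n) {a b : ℕ} (ha : a < n) (hb : b < n)
    (h : j - ((a : ℕ) : Fin n) = j - ((b : ℕ) : Fin n)) : a = b := by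
  have : ((a : ℕ) : Fin n) = ((b : ℕ) : Fin n) := sub_right_injective h
  have := congrArg Fin.val this
  rwa [Fin.val_cast_of_lt ha, Fin.val_cast_of_lt hb] at this

/-- number of 0s (letter `1`s) in the block ending at the descent `j`. -/
noncomputable def Fw (hne : J'.Nonempty) (w : Fin n → Fin 2) (j : Fin n) : ℕ :=
  (Finset.univ.filter (fun i => ndF J' hne i = j ∧ w i = 0)).card

lemma upclosed (N : ℕ) (D : Finset ℕ) (hD : D ⊆ Finset.range N)
    (hup : ∀ d ∈ D, ∀ d', d ≤ d' → d' < N → d' ∈ D) (hNe : D.Nonempty) :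
    D = Finset.Icc (N - D.card) (N - 1) := by
  have hm : D = Finset.Icc (D.min' hNe) (N - 1) := by
    ext d
    simp only [Finset.mem_Icc]
    constructor
    · intro hd
      have := Finset.mem_range.mp (hD hd)
      exact ⟨Finset.min'_le D d hd, by omega⟩
    · rintro ⟨h1, h2⟩
      have hmem := D.min'_mem hNe
      have hN : 0 < N := by
        have := Finset.mem_range.mp (hD hmem); omega
      exact hup _ hmem d h1 (by omega)
  have hmN : D.min' hNe < N := Finset.mem_range.mp (hD (D.min'_mem hNe))
  have hcard : D.card = N - D.min' hNe := by
    conv_lhs => rw [hm]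
    rw [Nat.card_Icc]; omega
  rw [hcard, show N - (N - D.min' hNe) = D.min' hNe from by omega]
  exact hm

/-- the set of depths `d` within the block of `j` where the letter is `1` (i.e. `w = 0`). -/
noncomputable def Dset (hne : J'.Nonempty) (w : Fin n → Fin 2) (j : Fin n) : Finset ℕ :=
  (Finset.range (gF J' hne j)).filter (fun d => w (j - ((d : ℕ) : Fin n)) = 0)

section word
variable (hne : J'.Nonempty) (w : Fin n → Fin 2)
    (hw : ∀ i : Fin n, w (i + 1) < w i ↔ i ∈ J')
include hw

lemma des_vals {i : Fin n} (h : i ∈ J') : w i = 1 ∧ w (i + 1) = 0 := by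
  have h2 := (hw i).mpr h
  revert h2
  generalize w (i + 1) = a; generalize w i = b
  revert a b; decide

lemma zprop (j : Fin n) (hj : j ∈ J') :
    ∀ c d : ℕ, d + c < gF J' hne j → w (j - ((d : ℕ) : Fin n)) = 0 →
      w (j - ((d + c : ℕ) : Fin n)) = 0 := by
  intro c
  induction c with
  | zero => intro d _ h0; simpa using h0
  | succ c ih =>
    intro d hdc h0
    have h1 := ih d (by omega) h0
    set i : Fin n := j - ((d + c + 1 : ℕ) : Fin n) with hi
    have hi1 : i + 1 = j - ((d + c : ℕ) : Fin n) := by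
      rw [hi]; push_cast; ring
    have hnotJ : i ∉ J' := gF_min J' hne j (by omega) (by omega)
    have hle : w i ≤ w (i + 1) := le_of_not_gt (fun hlt => hnotJ ((hw i).mp hlt))
    rw [hi1, h1] at hle
    exact le_antisymm hle (Fin.zero_le _)

lemma Dset_eq (j : Fin n) (hj : j ∈ J') :
    Dset J' hne w j = Finset.Icc (gF J' hne j - (Dset J' hne w j).card)
      (gF J' hne j - 1) := by
  apply upclosed
  · exact Finset.filter_subset _ _
  · intro d hd d' h1 h2
    simp only [Dset, Finset.mem_filter, Finset.mem_range] at hd ⊢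
    refine ⟨h2, ?_⟩
    have := zprop J' hne w hw j hj (d' - d) d (by omega) hd.2
    rwa [Nat.add_sub_cancel' h1] at this
  · refine ⟨gF J' hne j - 1, ?_⟩
    simp only [Dset, Finset.mem_filter, Finset.mem_range]
    have hg1 := gF_pos J' hne j
    refine ⟨by omega, ?_⟩
    have hprev := sub_gF_mem J' hne j
    have h0 := (des_vals J' w hw hprev).2
    have heq : (j - ((gF J' hne j : ℕ) : Fin n)) + 1
        = j - ((gF J' hne j - 1 : ℕ) : Fin n) := by
      rw [Nat.cast_sub hg1]; push_cast; ring
    rwa [heq] at h0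

lemma zero_not_mem_Dset (j : Fin n) (hj : j ∈ J') : 0 ∉ Dset J' hne w j := by
  simp only [Dset, Finset.mem_filter, Finset.mem_range, not_and]
  intro _
  have h1 := (des_vals J' w hw hj).1
  simp only [Nat.cast_zero, sub_zero, h1]
  decide

lemma top_mem_Dset (j : Fin n) (hj : j ∈ J') : gF J' hne j - 1 ∈ Dset J' hne w j := by
  simp only [Dset, Finset.mem_filter, Finset.mem_range]
  have hg1 := gF_pos J' hne j
  refine ⟨by omega, ?_⟩
  have hprev := sub_gF_mem J' hne j
  have h0 := (des_vals J' w hw hprev).2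
  have heq : (j - ((gF J' hne j : ℕ) : Fin n)) + 1
      = j - ((gF J' hne j - 1 : ℕ) : Fin n) := by
    rw [Nat.cast_sub hg1]; push_cast; ring
  rwa [heq] at h0

lemma Dset_card_bounds (j : Fin n) (hj : j ∈ J') :
    1 ≤ (Dset J' hne w j).card ∧ (Dset J' hne w j).card ≤ gF J' hne j - 1 := by
  have heq := Dset_eq J' hne w hw j hj
  have h0 := zero_not_mem_Dset J' hne w hw j hj
  have hg1 := gF_pos J' hne j
  have hne' : (Dset J' hne w j).Nonempty := ⟨_, top_mem_Dset J' hne w hw j hj⟩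
  have hc1 : 1 ≤ (Dset J' hne w j).card := Finset.card_pos.mpr hne'
  refine ⟨hc1, ?_⟩
  by_contra hcon
  exact h0 (by rw [heq]; exact Finset.mem_Icc.mpr ⟨by omega, by omega⟩)

lemma Fw_eq_Dset_card (j : Fin n) (hj : j ∈ J') :
    Fw J' hne w j = (Dset J' hne w j).card := by
  unfold Fw
  have hset : (Finset.univ.filter (fun i => ndF J' hne i = j ∧ w i = 0)) =
      (Dset J' hne w j).image (fun d : ℕ => j - ((d : ℕ) : Fin n)) := by
    ext i
    simp only [Finset.mem_filter, Finset.mem_univ, true_and, Finset.mem_image,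
      Dset, Finset.mem_range]
    constructor
    · rintro ⟨hnd, h0⟩
      obtain ⟨d, hd, rfl⟩ := (ndF_eq_iff J' hne j hj i).mp hnd
      exact ⟨d, ⟨hd, h0⟩, rfl⟩
    · rintro ⟨d, ⟨hd, h0⟩, rfl⟩
      exact ⟨(ndF_eq_iff J' hne j hj _).mpr ⟨d, hd, rfl⟩, h0⟩
  rw [hset, Finset.card_image_of_injOn]
  intro a ha b hb hab
  have hgn := gF_le J' hne j
  simp only [Finset.mem_coe, Dset, Finset.mem_filter, Finset.mem_range] at ha hb
  exact sub_cast_inj j (by omega) (by omega) hab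

lemma Fw_bounds (j : Fin n) (hj : j ∈ J') :
    1 ≤ Fw J' hne w j ∧ Fw J' hne w j ≤ gF J' hne j - 1 := by
  rw [Fw_eq_Dset_card J' hne w hw j hj]
  exact Dset_card_bounds J' hne w hw j hj

lemma w_eq_zero_iff (i : Fin n) :
    w i = 0 ↔ gF J' hne i ≤ Fw J' hne w (ndF J' hne i) := by
  set j := ndF J' hne i with hj
  have hjJ : j ∈ J' := ndF_mem J' hne i
  have hd : eF J' hne i < gF J' hne j := by
    have h1 := gF_ndF J' hne i
    have h2 := gF_pos J' hne i
    rw [← hj] at h1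
    omega
  have hieq : i = j - ((eF J' hne i : ℕ) : Fin n) := by
    rw [hj]; unfold ndF; rw [add_sub_cancel_right]
  have hgi : gF J' hne i = gF J' hne j - eF J' hne i := by
    have hb := (back J' hne (eF J' hne i) j hd).1
    rw [← hieq] at hb
    omega
  rw [Fw_eq_Dset_card J' hne w hw j hjJ]
  have heq := Dset_eq J' hne w hw j hjJ
  have hbd := Dset_card_bounds J' hne w hw j hjJ
  constructor
  · intro h0
    have hmem : eF J' hne i ∈ Dset J' hne w j := by
      simp only [Dset, Finset.mem_filter, Finset.mem_range]
      exact ⟨hd, by rw [← hieq]; exact h0⟩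
    rw [heq] at hmem
    have := (Finset.mem_Icc.mp hmem).1
    omega
  · intro hle
    have hmem : eF J' hne i ∈ Dset J' hne w j := by
      rw [heq]
      exact Finset.mem_Icc.mpr ⟨by omega, by omega⟩
    simp only [Dset, Finset.mem_filter, Finset.mem_range] at hmem
    rw [hieq]
    exact hmem.2

end word

lemma p_congr (p : ∀ j ∈ J', ℕ) {a b : Fin n} (h : a = b) (ha : a ∈ J') :
    p a ha = p b (h ▸ ha) := by subst h; rfl

/-- the word built from prescribed numbers of `1`s in each block. -/
noncomputable def Ww (hne : J'.Nonempty) (p : ∀ j ∈ J', ℕ) : Fin n → Fin 2 :=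
  fun i => if gF J' hne i ≤ p (ndF J' hne i) (ndF_mem J' hne i) then 0 else 1

section inv
variable (hne : J'.Nonempty) (p : ∀ j ∈ J', ℕ)
    (hp : ∀ (j : Fin n) (hj : j ∈ J'), 1 ≤ p j hj ∧ p j hj ≤ gF J' hne j - 1)
include hp

lemma Ww_zero_iff (i : Fin n) :
    Ww J' hne p i = 0 ↔ gF J' hne i ≤ p (ndF J' hne i) (ndF_mem J' hne i) := by
  unfold Ww
  split_ifs with h
  · simpa using h
  · simpa using h

lemma Ww_des (i : Fin n) : Ww J' hne p (i + 1) < Ww J' hne p i ↔ i ∈ J' := by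
  constructor
  · intro hlt
    by_contra h
    have himp : Ww J' hne p (i + 1) = 0 → Ww J' hne p i = 0 := by
      intro h0
      rw [Ww_zero_iff J' hne p hp] at h0 ⊢
      have hpc := p_congr J' p (ndF_succ J' hne i h) (ndF_mem J' hne (i + 1))
      rw [hpc, gF_succ J' hne i h] at h0
      omega
    have h2 : Ww J' hne p i ≤ Ww J' hne p (i + 1) := by
      by_cases h0 : Ww J' hne p i = 0
      · rw [h0]; exact Fin.zero_le _
      · have h1 : Ww J' hne p (i + 1) ≠ 0 := fun hc => h0 (himp hc)
        have e1 : Ww J' hne p i = 1 := (by decide : ∀ a : Fin 2, a ≠ 0 → a = 1) _ h0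
        have e2 : Ww J' hne p (i + 1) = 1 := (by decide : ∀ a : Fin 2, a ≠ 0 → a = 1) _ h1
        rw [e1, e2]
    exact absurd hlt (not_lt.mpr h2)
  · intro h
    have h1 : Ww J' hne p i = 1 := by
      have hne0 : ¬ (Ww J' hne p i = 0) := by
        rw [Ww_zero_iff J' hne p hp]
        have hpc := p_congr J' p (ndF_self J' hne i h) (ndF_mem J' hne i)
        rw [hpc]
        have hb : p i ((ndF_self J' hne i h) ▸ (ndF_mem J' hne i)) = p i h := rfl
        rw [hb]
        have := (hp i h).2
        have := gF_pos J' hne i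
        omega
      exact (by decide : ∀ a : Fin 2, a ≠ 0 → a = 1) _ hne0
    have h2 : Ww J' hne p (i + 1) = 0 := by
      rw [Ww_zero_iff J' hne p hp]
      rw [gF_succ_self J' hne i h]
      exact (hp _ (ndF_mem J' hne (i + 1))).1
    rw [h1, h2]
    decide

lemma Fw_Ww (j : Fin n) (hj : j ∈ J') : Fw J' hne (Ww J' hne p) j = p j hj := by
  unfold Fw
  have hset : (Finset.univ.filter (fun i => ndF J' hne i = j ∧ Ww J' hne p i = 0)) =
      (Finset.univ.filter (fun i => ndF J' hne i = j ∧ gF J' hne i ≤ p j hj)) := by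
    apply Finset.filter_congr
    intro i _
    constructor
    · rintro ⟨hnd, h0⟩
      refine ⟨hnd, ?_⟩
      rw [Ww_zero_iff J' hne p hp] at h0
      rw [show p j hj = p (ndF J' hne i) (ndF_mem J' hne i) from by subst hnd; rfl]
      exact h0
    · rintro ⟨hnd, hle⟩
      refine ⟨hnd, ?_⟩
      rw [Ww_zero_iff J' hne p hp]
      rw [show p (ndF J' hne i) (ndF_mem J' hne i) = p j hj from by subst hnd; rfl]
      exact hle
  rw [hset]
  exact card_block J' hne j hj (p j hj) (hp j hj).1 (hp j hj).2

end inv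

lemma onesW_eq (hne : J'.Nonempty) (w : Fin n → Fin 2) :
    onesW n w = ∑ x ∈ J'.attach, Fw J' hne w x.1 := by
  unfold onesW
  have h1 : (Finset.univ.filter (fun i : Fin n => ((w i : ℕ) + 1 = 1))) =
      (Finset.univ.filter (fun i : Fin n => w i = 0)) := by
    apply Finset.filter_congr
    intro i _
    constructor
    · intro h; ext; omega
    · intro h; rw [h]; rfl
  rw [h1]
  rw [Finset.card_eq_sum_card_fiberwise (f := ndF J' hne) (t := J')
    (fun i _ => ndF_mem J' hne i)]
  rw [Finset.sum_attach J' (fun j => Fw J' hne w j)]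
  apply Finset.sum_congr rfl
  intro x _
  unfold Fw
  congr 1
  rw [Finset.filter_filter]
  apply Finset.filter_congr
  intro i _
  tauto

theorem core_count (hne : J'.Nonempty) (k : ℕ) :
    (Finset.univ.filter (fun w : Fin n → Fin 2 =>
        onesW n w = k ∧ ∀ i, (w (i + 1) < w i ↔ i ∈ J'))).card =
    ((J'.pi (fun j => Finset.Icc 1 (gF J' hne j - 1))).filter
        (fun p => ∑ x ∈ J'.attach, p x.1 x.2 = k)).card := by
  apply Finset.card_bij' (i := fun w _ => fun j (_ : j ∈ J') => Fw J' hne w j)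
    (j := fun p _ => Ww J' hne p)
  · intro w hw
    simp only [Finset.mem_filter, Finset.mem_univ, true_and] at hw
    obtain ⟨hones, hdes⟩ := hw
    simp only [Finset.mem_filter, Finset.mem_pi]
    constructor
    · intro j hj
      rw [Finset.mem_Icc]
      exact Fw_bounds J' hne w hdes j hj
    · rw [← onesW_eq J' hne w]
      exact hones
  · intro p hp
    simp only [Finset.mem_filter, Finset.mem_pi, Finset.mem_Icc] at hp
    obtain ⟨hpi, hsum⟩ := hp
    simp only [Finset.mem_filter, Finset.mem_univ, true_and]
    constructor
    · rw [onesW_eq J' hne (Ww J' hne p)]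
      rw [← hsum]
      apply Finset.sum_congr rfl
      intro x _
      exact Fw_Ww J' hne p hpi x.1 x.2
    · exact Ww_des J' hne p hpi
  · intro w hw
    simp only [Finset.mem_filter, Finset.mem_univ, true_and] at hw
    funext i
    by_cases h0 : w i = 0
    · rw [show Ww J' hne (fun j _ => Fw J' hne w j) i = 0 from ?_, h0]
      unfold Ww
      rw [if_pos]
      exact ((w_eq_zero_iff J' hne w hw.2 i)).mp h0
    · have h1 : w i = 1 := by
        have := Fin.is_lt (w i)
        ext
        have : (w i : ℕ) ≠ 0 := fun hc => h0 (by ext; simpa using hc)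
        omega
      rw [h1]
      unfold Ww
      rw [if_neg]
      intro hc
      exact h0 ((w_eq_zero_iff J' hne w hw.2 i).mpr hc)
  · intro p hp
    simp only [Finset.mem_filter, Finset.mem_pi, Finset.mem_Icc] at hp
    funext j hj
    exact Fw_Ww J' hne p hp.1 j hj

lemma val_sub (i : Fin n) {d : ℕ} (hd1 : 1 ≤ d) (hdn : d ≤ n) :
    (i - ((d : ℕ) : Fin n)).val = if d ≤ (i : ℕ) then (i : ℕ) - d else (i : ℕ) + n - d := by
  have hn : 0 < n := Nat.pos_of_ne_zero (NeZero.ne n)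
  have hiv := i.is_lt
  rcases eq_or_lt_of_le hdn with rfl | hlt
  · rw [Fin.natCast_self, sub_zero, if_neg (by omega)]
    omega
  · rw [Fin.sub_def]
    simp only [Fin.val_natCast]
    rw [Nat.mod_eq_of_lt hlt]
    by_cases hdi : d ≤ (i : ℕ)
    · rw [if_pos hdi, show n - d + (i : ℕ) = ((i : ℕ) - d) + n from by omega,
        Nat.add_mod_right, Nat.mod_eq_of_lt (by omega)]
    · rw [if_neg hdi, Nat.mod_eq_of_lt (by omega)]
      omega

lemma gF_eq_of (hne : J'.Nonempty) (i : Fin n) (g : ℕ) (hg1 : 1 ≤ g)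
    (hmem : i - ((g : ℕ) : Fin n) ∈ J')
    (hmin : ∀ d, 1 ≤ d → d < g → i - ((d : ℕ) : Fin n) ∉ J') : gF J' hne i = g := by
  have hle : gF J' hne i ≤ g := by
    have : Nat.find (exG J' hne i) ≤ g - 1 := by
      apply Nat.find_le
      rwa [Nat.sub_add_cancel hg1]
    unfold gF; omega
  rcases eq_or_lt_of_le hle with h | h
  · exact h
  · exact absurd (sub_gF_mem J' hne i) (hmin _ (gF_pos J' hne i) h)

end core

lemma sup_id_mem (s : Finset ℕ) (h : s.Nonempty) : s.sup id ∈ s := by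
  rw [← Finset.sup'_eq_sup h id, ← Finset.max'_eq_sup' s h]
  exact Finset.max'_mem s h

lemma gF_eq_dgap {n : ℕ} [NeZero n] (J : Finset ℕ) (hJ : J ⊆ Finset.Icc 1 n)
    (J' : Finset (Fin n)) (hJ'def : J' = Finset.univ.filter (fun i : Fin n => ((i : ℕ) + 1) ∈ J))
    (hne : J'.Nonempty) (j : ℕ) (hj : j ∈ J) (i : Fin n) (hi : (i : ℕ) = j - 1) :
    gF J' hne i = dgap n J j := by
  have hmemJ' : ∀ x : Fin n, x ∈ J' ↔ ((x : ℕ) + 1) ∈ J := by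
    intro x; rw [hJ'def]; simp
  have hbd : ∀ x ∈ J, 1 ≤ x ∧ x ≤ n := by
    intro x hx; have := hJ hx; rw [Finset.mem_Icc] at this; exact this
  have hj1 := (hbd j hj).1
  have hjn := (hbd j hj).2
  unfold dgap
  by_cases hne2 : (J.filter (fun x => x < j)).Nonempty
  · rw [if_pos hne2]
    set M := (J.filter (fun x => x < j)).sup id with hM
    have hMmem : M ∈ J.filter (fun x => x < j) := sup_id_mem _ hne2
    rw [Finset.mem_filter] at hMmem
    have hM1 := (hbd M hMmem.1).1
    have hMj := hMmem.2
    apply gF_eq_of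
    · omega
    · rw [hmemJ', val_sub i (by omega) (by omega), if_pos (by omega)]
      rw [show (i : ℕ) - (j - M) + 1 = M from by omega]
      exact hMmem.1
    · intro d hd1 hd2
      rw [hmemJ', val_sub i (by omega) (by omega), if_pos (by omega)]
      rw [show (i : ℕ) - d + 1 = j - d from by omega]
      intro hcon
      have : j - d ≤ M := Finset.le_sup (f := id)
        (Finset.mem_filter.mpr ⟨hcon, by omega⟩)
      omega
  · rw [if_neg hne2]
    rw [Finset.not_nonempty_iff_eq_empty, Finset.filter_eq_empty_iff] at hne2
    set M := J.sup id with hM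
    have hJne : J.Nonempty := ⟨j, hj⟩
    have hMmem : M ∈ J := sup_id_mem _ hJne
    have hM1 := (hbd M hMmem).1
    have hMn := (hbd M hMmem).2
    have hjM : j ≤ M := by
      by_contra hcon
      exact hne2 hMmem (by omega)
    apply gF_eq_of
    · omega
    · rw [hmemJ', val_sub i (by omega) (by omega), if_neg (by omega)]
      rw [show (i : ℕ) + n - (j + n - M) + 1 = M from by omega]
      exact hMmem
    · intro d hd1 hd2
      by_cases hdi : d ≤ (i : ℕ)
      · rw [hmemJ', val_sub i (by omega) (by omega), if_pos hdi]
        rw [show (i : ℕ) - d + 1 = j - d from by omega]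
        intro hcon
        exact hne2 hcon (by omega)
      · rw [hmemJ', val_sub i (by omega) (by omega), if_neg hdi]
        rw [show (i : ℕ) + n - d + 1 = j + n - d from by omega]
        intro hcon
        have : j + n - d ≤ M := Finset.le_sup (f := id) hcon
        omega

lemma cDes_iff {n : ℕ} [NeZero n] (J : Finset ℕ) (hJ : J ⊆ Finset.Icc 1 n)
    (w : Fin n → Fin 2) :
    cDesW n w = J ↔ ∀ i : Fin n, (w (i + 1) < w i ↔ ((i : ℕ) + 1) ∈ J) := by
  have hbd : ∀ x ∈ J, 1 ≤ x ∧ x ≤ n := by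
    intro x hx; have := hJ hx; rw [Finset.mem_Icc] at this; exact this
  unfold cDesW
  constructor
  · intro h i
    rw [← h]
    simp only [Finset.mem_image, Finset.mem_filter, Finset.mem_univ, true_and]
    constructor
    · intro hd; exact ⟨i, hd, rfl⟩
    · rintro ⟨i', hd, he⟩
      have : i' = i := Fin.ext (by omega)
      rwa [this] at hd
  · intro h
    ext x
    simp only [Finset.mem_image, Finset.mem_filter, Finset.mem_univ, true_and]
    constructor
    · rintro ⟨i, hd, rfl⟩
      exact (h i).mp hd
    · intro hx
      have hx1 := (hbd x hx).1
      have hxn := (hbd x hx).2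
      refine ⟨⟨x - 1, by omega⟩, ?_, by simp; omega⟩
      apply (h _).mpr
      simpa [show x - 1 + 1 = x from by omega] using hx

lemma coeff_prod (J : Finset ℕ) (D : ℕ → ℕ) (k : ℕ) :
    (∏ j ∈ J, ∑ a ∈ Finset.Icc 1 (D j), (Polynomial.X : Polynomial ℕ) ^ a).coeff k =
    ((J.pi (fun j => Finset.Icc 1 (D j))).filter
        (fun p => ∑ x ∈ J.attach, p x.1 x.2 = k)).card := by
  rw [Finset.prod_sum]
  rw [Finset.sum_congr rfl (fun p _ => Finset.prod_pow_eq_pow_sum J.attach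
    (fun x => p x.1 x.2) (Polynomial.X : Polynomial ℕ))]
  rw [Polynomial.finset_sum_coeff]
  rw [Finset.card_filter]
  apply Finset.sum_congr rfl
  intro p _
  rw [Polynomial.coeff_X_pow]
  simp [eq_comm]

lemma picongr {α : Type*} (S : Finset α) (p : ∀ a ∈ S, ℕ) {a b : α} (h : a = b)
    (ha : a ∈ S) (hb : b ∈ S) : p a ha = p b hb := by subst h; rfl

/-- The number of words `w ∈ {1,2}^n` with exactly `k` occurrences of the letter `1` and
cyclic descent set `J` equals the coefficient of `q^k` in `∏_{i=1}^t (q + ⋯ + q^{d_i-1})`. -/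
theorem stmt_4 (n k : ℕ) [NeZero n] (hk1 : 1 ≤ k) (hk2 : k ≤ n - 1)
    (J : Finset ℕ) (hJ : J ⊆ Finset.Icc 1 n) (hJne : J.Nonempty) :
    ((Finset.univ : Finset (Fin n → Fin 2)).filter
        (fun w => onesW n w = k ∧ cDesW n w = J)).card =
    (∏ j ∈ J, ∑ a ∈ Finset.Icc 1 (dgap n J j - 1),
        (Polynomial.X : Polynomial ℕ) ^ a).coeff k := by
  classical
  have hbd : ∀ x ∈ J, 1 ≤ x ∧ x ≤ n := fun x hx => Finset.mem_Icc.mp (hJ hx)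
  set J' : Finset (Fin n) := Finset.univ.filter (fun i : Fin n => ((i : ℕ) + 1) ∈ J)
    with hJ'def
  have hmemJ' : ∀ i : Fin n, i ∈ J' ↔ ((i : ℕ) + 1) ∈ J := fun i => by rw [hJ'def]; simp
  have hne' : J'.Nonempty := by
    obtain ⟨j, hj⟩ := hJne
    have h1 := (hbd j hj).1
    have h2 := (hbd j hj).2
    refine ⟨⟨j - 1, by omega⟩, (hmemJ' _).mpr ?_⟩
    show j - 1 + 1 ∈ J
    rwa [show j - 1 + 1 = j from by omega]
  have hfeq : ((Finset.univ : Finset (Fin n → Fin 2)).filter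
        (fun w => onesW n w = k ∧ cDesW n w = J)) =
      (Finset.univ.filter (fun w : Fin n → Fin 2 =>
        onesW n w = k ∧ ∀ i, (w (i + 1) < w i ↔ i ∈ J'))) := by
    apply Finset.filter_congr
    intro w _
    exact and_congr_right fun _ =>
      (cDes_iff J hJ w).trans (forall_congr' fun i => iff_congr Iff.rfl (hmemJ' i).symm)
  rw [hfeq, core_count J' hne' k, coeff_prod J (fun j => dgap n J j - 1) k]
  have hfin : ∀ j ∈ J, j - 1 < n := fun j hj => by have := hbd j hj; omega
  have hmm : ∀ (j : ℕ) (hj : j ∈ J), (⟨j - 1, hfin j hj⟩ : Fin n) ∈ J' := by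
    intro j hj
    refine (hmemJ' _).mpr ?_
    show j - 1 + 1 ∈ J
    rwa [show j - 1 + 1 = j from by have := hbd j hj; omega]
  have hgd : ∀ (j : ℕ) (hj : j ∈ J), gF J' hne' (⟨j - 1, hfin j hj⟩ : Fin n) = dgap n J j :=
    fun j hj => gF_eq_dgap J hJ J' hJ'def hne' j hj _ rfl
  apply Finset.card_bij'
    (i := fun p _ => fun j (hj : j ∈ J) => p ⟨j - 1, hfin j hj⟩ (hmm j hj))
    (j := fun q _ => fun i (hi : i ∈ J') => q ((i : ℕ) + 1) ((hmemJ' i).mp hi))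
  · intro p hp
    simp only [Finset.mem_filter, Finset.mem_pi, Finset.mem_Icc] at hp ⊢
    obtain ⟨hpi, hsum⟩ := hp
    constructor
    · intro j hj
      obtain ⟨h1, h2⟩ := hpi _ (hmm j hj)
      exact ⟨h1, by rw [← hgd j hj]; exact h2⟩
    · rw [← hsum]
      apply Finset.sum_bij'
        (i := fun (a : {x // x ∈ J}) _ => (⟨⟨a.1 - 1, hfin a.1 a.2⟩, hmm a.1 a.2⟩ : {y // y ∈ J'}))
        (j := fun (b : {y // y ∈ J'}) _ => (⟨(b.1 : ℕ) + 1, (hmemJ' b.1).mp b.2⟩ : {x // x ∈ J}))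
      · intro a _; exact Finset.mem_attach _ _
      · intro b _; exact Finset.mem_attach _ _
      · intro a _
        apply Subtype.ext
        show a.1 - 1 + 1 = a.1
        have := hbd a.1 a.2; omega
      · intro b _
        apply Subtype.ext
        apply Fin.ext
        show (b.1 : ℕ) + 1 - 1 = (b.1 : ℕ)
        omega
      · intro a _; rfl
  · intro q hq
    simp only [Finset.mem_filter, Finset.mem_pi, Finset.mem_Icc] at hq ⊢
    obtain ⟨hqi, hsum⟩ := hq
    constructor
    · intro i hi
      obtain ⟨h1, h2⟩ := hqi _ ((hmemJ' i).mp hi)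
      refine ⟨h1, ?_⟩
      have he : i = (⟨((i : ℕ) + 1) - 1, hfin _ ((hmemJ' i).mp hi)⟩ : Fin n) :=
        Fin.ext (by show (i : ℕ) = (i : ℕ) + 1 - 1; omega)
      rw [show gF J' hne' i = dgap n J ((i : ℕ) + 1) from by
        rw [he]; exact hgd _ ((hmemJ' i).mp hi)]
      exact h2
    · rw [← hsum]
      apply Finset.sum_bij'
        (i := fun (b : {y // y ∈ J'}) _ => (⟨(b.1 : ℕ) + 1, (hmemJ' b.1).mp b.2⟩ : {x // x ∈ J}))
        (j := fun (a : {x // x ∈ J}) _ => (⟨⟨a.1 - 1, hfin a.1 a.2⟩, hmm a.1 a.2⟩ : {y // y ∈ J'}))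
      · intro a _; exact Finset.mem_attach _ _
      · intro b _; exact Finset.mem_attach _ _
      · intro b _
        apply Subtype.ext
        apply Fin.ext
        show (b.1 : ℕ) + 1 - 1 = (b.1 : ℕ)
        omega
      · intro a _
        apply Subtype.ext
        show a.1 - 1 + 1 = a.1
        have := hbd a.1 a.2; omega
      · intro b _
        rfl
  · intro p hp
    funext i hi
    apply picongr
    apply Fin.ext
    show (i : ℕ) + 1 - 1 = (i : ℕ)
    omega
  · intro q hq
    funext j hj
    apply picongr J
    show (⟨j - 1, hfin j hj⟩ : Fin n).val + 1 = j
    have := hbd j hj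
    show j - 1 + 1 = j
    omega
end

section
/- Let 1 ≤ k ≤ n-1 and let J be a nonempty subset of {1,...,n}. There exists a word w ∈ {1,2}^n with exactly k occurrences of the letter 1 and cDes(w) = J if and only if |J| ≤ min(k, n-k) and no two elements of J are cyclically adjacent modulo n (i.e., for no j ∈ J is j+1 mod n also in J). -/
open Finset
open Fin.CommRing


lemma exists_sum_eq {α : Type*} [DecidableEq α] (D : Finset α) (hi : α → ℕ) :
    ∀ k : ℕ, k ≤ ∑ j ∈ D, hi j →
    ∃ a : α → ℕ, (∀ j ∈ D, a j ≤ hi j) ∧ ∑ j ∈ D, a j = k := by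
  induction D using Finset.induction_on with
  | empty =>
      intro k hk
      simp only [Finset.sum_empty, Nat.le_zero] at hk
      exact ⟨fun _ => 0, fun j hj => by simp at hj, by simp [hk]⟩
  | @insert x s hx ih =>
      intro k hk
      rw [Finset.sum_insert hx] at hk
      obtain ⟨a, ha, hsum⟩ := ih (k - min k (hi x)) (by omega)
      refine ⟨Function.update a x (min k (hi x)), ?_, ?_⟩
      · intro j hj
        rcases Finset.mem_insert.1 hj with rfl | hj2
        · rw [Function.update_self]; omega
        · rw [Function.update_of_ne (by rintro rfl; exact hx hj2)]; exact ha j hj2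
      · rw [Finset.sum_insert hx, Function.update_self,
          Finset.sum_congr rfl
            (fun j hj => Function.update_of_ne (by rintro rfl; exact hx hj) _ a), hsum]
        omega

lemma mod_inj {n m m' : ℕ} (h1 : 1 ≤ m) (h2 : m ≤ n) (h3 : 1 ≤ m') (h4 : m' ≤ n)
    (h : m % n = m' % n) : m = m' := by
  rcases Nat.lt_or_ge m n with hm | hm <;> rcases Nat.lt_or_ge m' n with hm' | hm'
  · rwa [Nat.mod_eq_of_lt hm, Nat.mod_eq_of_lt hm'] at h
  · have : m' = n := le_antisymm h4 hm'
    subst this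
    rw [Nat.mod_eq_of_lt hm, Nat.mod_self] at h
    omega
  · have : m = n := le_antisymm h2 hm
    subst this
    rw [Nat.mod_self, Nat.mod_eq_of_lt hm'] at h
    omega
  · omega

section core
variable {n : ℕ} [NeZero n]

lemma exRL (D : Finset (Fin n)) (hne : D.Nonempty) (i : Fin n) :
    ∃ m : ℕ, 0 < m ∧ i - (m : Fin n) ∈ D := by
  obtain ⟨j, hj⟩ := hne
  rcases eq_or_ne i j with rfl | h
  · exact ⟨n, Nat.pos_of_ne_zero (NeZero.ne n), by simp [Fin.natCast_self, hj]⟩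
  · refine ⟨((i - j : Fin n) : ℕ), ?_, ?_⟩
    · have : i - j ≠ 0 := sub_ne_zero_of_ne h
      exact Nat.pos_of_ne_zero (fun hc => this (Fin.ext hc))
    · rw [Fin.cast_val_eq_self, sub_sub_cancel]; exact hj

lemma exLL (D : Finset (Fin n)) (hne : D.Nonempty) (j : Fin n) :
    ∃ m : ℕ, 0 < m ∧ j + (m : Fin n) ∈ D := by
  obtain ⟨j', hj'⟩ := hne
  rcases eq_or_ne j j' with rfl | h
  · exact ⟨n, Nat.pos_of_ne_zero (NeZero.ne n), by simp [Fin.natCast_self, hj']⟩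
  · refine ⟨((j' - j : Fin n) : ℕ), ?_, ?_⟩
    · have : j' - j ≠ 0 := sub_ne_zero_of_ne (Ne.symm h)
      exact Nat.pos_of_ne_zero (fun hc => this (Fin.ext hc))
    · rw [Fin.cast_val_eq_self, add_sub_cancel]; exact hj'

def rr (D : Finset (Fin n)) (hne : D.Nonempty) (i : Fin n) : ℕ := Nat.find (exRL D hne i)
def LL (D : Finset (Fin n)) (hne : D.Nonempty) (j : Fin n) : ℕ := Nat.find (exLL D hne j)
def pp (D : Finset (Fin n)) (hne : D.Nonempty) (i : Fin n) : Fin n := i - (rr D hne i : Fin n)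

variable (D : Finset (Fin n)) (hne : D.Nonempty)

lemma rr_pos (i : Fin n) : 0 < rr D hne i := (Nat.find_spec (exRL D hne i)).1
lemma rr_mem (i : Fin n) : i - (rr D hne i : Fin n) ∈ D := (Nat.find_spec (exRL D hne i)).2
lemma rr_min {i : Fin n} {m : ℕ} (h1 : 0 < m) (h2 : m < rr D hne i) : i - (m : Fin n) ∉ D :=
  fun h => Nat.find_min (exRL D hne i) h2 ⟨h1, h⟩
lemma LL_pos (j : Fin n) : 0 < LL D hne j := (Nat.find_spec (exLL D hne j)).1
lemma LL_mem (j : Fin n) : j + (LL D hne j : Fin n) ∈ D := (Nat.find_spec (exLL D hne j)).2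
lemma LL_min {j : Fin n} {m : ℕ} (h1 : 0 < m) (h2 : m < LL D hne j) : j + (m : Fin n) ∉ D :=
  fun h => Nat.find_min (exLL D hne j) h2 ⟨h1, h⟩
lemma LL_le {j : Fin n} (hj : j ∈ D) : LL D hne j ≤ n :=
  Nat.find_le ⟨Nat.pos_of_ne_zero (NeZero.ne n), by simp [Fin.natCast_self, hj]⟩
lemma pp_mem (i : Fin n) : pp D hne i ∈ D := rr_mem D hne i
lemma pp_add (i : Fin n) : pp D hne i + (rr D hne i : Fin n) = i := sub_add_cancel i _

lemma LL_two (hadj : ∀ i ∈ D, i + 1 ∉ D) {j : Fin n} (hj : j ∈ D) : 2 ≤ LL D hne j := by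
  have h1 := LL_pos D hne j
  by_contra h
  have he : LL D hne j = 1 := by omega
  have := LL_mem D hne j
  rw [he, Nat.cast_one] at this
  exact hadj j hj this

lemma rr_add {j : Fin n} (hj : j ∈ D) {m : ℕ} (h1 : 0 < m) (h2 : m ≤ LL D hne j) :
    rr D hne (j + (m : Fin n)) = m := by
  apply le_antisymm
  · exact Nat.find_le ⟨h1, by simpa using hj⟩
  · by_contra h
    push_neg at h
    have hsp := rr_mem D hne (j + (m : Fin n))
    set m' := rr D hne (j + (m : Fin n)) with hm'
    have hp : 0 < m' := rr_pos D hne _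
    have hmm : j + ((m - m' : ℕ) : Fin n) ∈ D := by
      rw [Nat.cast_sub (le_of_lt h)]
      have : j + ((m : Fin n) - (m' : Fin n)) = j + (m : Fin n) - (m' : Fin n) := by ring
      rw [this]
      exact hsp
    exact LL_min D hne (by omega) (by omega) hmm

lemma rr_le_LL (i : Fin n) : rr D hne i ≤ LL D hne (pp D hne i) := by
  by_contra h
  push_neg at h
  have hLpos := LL_pos D hne (pp D hne i)
  have hji : pp D hne i + (rr D hne i : Fin n) = i := pp_add D hne i
  have key : i - ((rr D hne i - LL D hne (pp D hne i) : ℕ) : Fin n)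
      = pp D hne i + (LL D hne (pp D hne i) : Fin n) := by
    rw [Nat.cast_sub (le_of_lt h)]
    show i - ((rr D hne i : Fin n) - (LL D hne (pp D hne i) : Fin n))
        = (i - (rr D hne i : Fin n)) + (LL D hne (pp D hne i) : Fin n)
    ring
  have hmem : i - ((rr D hne i - LL D hne (pp D hne i) : ℕ) : Fin n) ∈ D := by
    rw [key]; exact LL_mem D hne _
  exact rr_min D hne (by omega) (by omega) hmem

lemma fiber_eq {j : Fin n} (hj : j ∈ D) {c : ℕ} (hc1 : 0 < c) (hc2 : c ≤ LL D hne j) :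
    univ.filter (fun i => pp D hne i = j ∧ rr D hne i ≤ c)
      = (Finset.Icc 1 c).image (fun m : ℕ => j + (m : Fin n)) := by
  ext i
  simp only [mem_filter, mem_univ, true_and, mem_image, Finset.mem_Icc]
  constructor
  · rintro ⟨hp, hr⟩
    exact ⟨rr D hne i, ⟨rr_pos D hne i, hr⟩, by rw [← hp]; exact pp_add D hne i⟩
  · rintro ⟨m, ⟨h1, h2⟩, rfl⟩
    have hr : rr D hne (j + (m : Fin n)) = m := rr_add D hne hj h1 (h2.trans hc2)
    refine ⟨?_, by rw [hr]; exact h2⟩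
    show (j + (m : Fin n)) - (rr D hne (j + (m : Fin n)) : Fin n) = j
    rw [hr, add_sub_cancel_right]

lemma card_image_fib (j : Fin n) {c : ℕ} (hc : c ≤ n) :
    ((Finset.Icc 1 c).image (fun m : ℕ => j + (m : Fin n))).card = c := by
  rw [Finset.card_image_of_injOn, Nat.card_Icc]
  · omega
  intro m hm m' hm' h
  simp only [Finset.mem_coe, Finset.mem_Icc] at hm hm'
  have hmn : (m : Fin n) = (m' : Fin n) := add_left_cancel h
  have hv : m % n = m' % n := by
    have := congrArg Fin.val hmn
    simpa [Fin.val_natCast] using this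
  exact mod_inj hm.1 (hm.2.trans hc) hm'.1 (hm'.2.trans hc) hv

lemma sum_LL : ∑ j ∈ D, LL D hne j = n := by
  have h := Finset.card_eq_sum_card_fiberwise
    (f := pp D hne) (s := (univ : Finset (Fin n))) (t := D) (fun i _ => pp_mem D hne i)
  rw [Finset.card_univ, Fintype.card_fin] at h
  refine Eq.trans (Finset.sum_congr rfl fun j hj => ?_) h.symm
  have e1 : (univ.filter fun i => pp D hne i = j)
      = univ.filter (fun i => pp D hne i = j ∧ rr D hne i ≤ LL D hne j) := by
    ext i
    simp only [mem_filter, mem_univ, true_and]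
    exact ⟨fun hp => ⟨hp, hp ▸ rr_le_LL D hne i⟩, fun hh => hh.1⟩
  rw [e1, fiber_eq D hne hj (LL_pos D hne j) le_rfl,
    card_image_fib j (LL_le D hne hj)]

lemma core_lemma (hne : D.Nonempty) (hn : 2 ≤ n) (hadj : ∀ i ∈ D, i + 1 ∉ D) {k : ℕ}
    (hd1 : D.card ≤ k) (hd2 : D.card + k ≤ n) :
    ∃ S : Finset (Fin n), S.card = k ∧ ∀ i, ((i ∉ S ∧ i + 1 ∈ S) ↔ i ∈ D) := by
  have hL2 : ∀ j ∈ D, 2 ≤ LL D hne j := fun j hj => LL_two D hne hadj hj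
  have hsum : ∑ j ∈ D, LL D hne j = n := sum_LL D hne
  have hcap : k - D.card ≤ ∑ j ∈ D, (LL D hne j - 2) := by
    have e1 : ∑ j ∈ D, (LL D hne j - 2) + 2 * D.card = n := by
      have e2 : ∑ j ∈ D, ((LL D hne j - 2) + 2) = ∑ j ∈ D, LL D hne j :=
        Finset.sum_congr rfl fun j hj => by have := hL2 j hj; omega
      rw [Finset.sum_add_distrib, Finset.sum_const, smul_eq_mul] at e2
      omega
    omega
  obtain ⟨b, hb, hbsum⟩ := exists_sum_eq D (fun j => LL D hne j - 2) (k - D.card) hcap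
  refine ⟨univ.filter (fun i => rr D hne i ≤ 1 + b (pp D hne i)), ?_, ?_⟩
  · have h := Finset.card_eq_sum_card_fiberwise (f := pp D hne)
      (s := univ.filter (fun i => rr D hne i ≤ 1 + b (pp D hne i))) (t := D)
      (fun i _ => pp_mem D hne i)
    rw [h]
    have e3 : ∀ j ∈ D,
        ((univ.filter (fun i => rr D hne i ≤ 1 + b (pp D hne i))).filter
          (fun i => pp D hne i = j)).card = 1 + b j := by
      intro j hj
      have e1 : (univ.filter (fun i => rr D hne i ≤ 1 + b (pp D hne i))).filter
            (fun i => pp D hne i = j)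
          = univ.filter (fun i => pp D hne i = j ∧ rr D hne i ≤ 1 + b j) := by
        ext i
        simp only [mem_filter, mem_univ, true_and]
        constructor
        · rintro ⟨hr, hp⟩; exact ⟨hp, hp ▸ hr⟩
        · rintro ⟨hp, hr⟩; exact ⟨hp ▸ hr, hp⟩
      have hble : 1 + b j ≤ LL D hne j := by have := hb j hj; have := hL2 j hj; omega
      rw [e1, fiber_eq D hne hj (by omega) hble,
        card_image_fib j (hble.trans (LL_le D hne hj))]
    rw [Finset.sum_congr rfl e3, Finset.sum_add_distrib, Finset.sum_const, smul_eq_mul, hbsum]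
    omega
  · intro i
    simp only [mem_filter, mem_univ, true_and]
    constructor
    · rintro ⟨hiS, hi1S⟩
      by_contra hiD
      apply hiS
      set m := rr D hne (i + 1) with hm
      have hm1 : 0 < m := rr_pos D hne _
      have hm2 : m ≠ 1 := by
        intro hc
        have hmm := rr_mem D hne (i + 1)
        rw [← hm, hc, Nat.cast_one, add_sub_cancel_right] at hmm
        exact hiD hmm
      have hmem : (i + 1) - (m : Fin n) ∈ D := rr_mem D hne (i + 1)
      have hri : rr D hne i = m - 1 := by
        apply le_antisymm
        · apply Nat.find_le
          refine ⟨by omega, ?_⟩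
          have e : i - ((m - 1 : ℕ) : Fin n) = (i + 1) - (m : Fin n) := by
            rw [Nat.cast_sub (by omega : 1 ≤ m), Nat.cast_one]
            ring
          rw [e]; exact hmem
        · by_contra hcon
          push_neg at hcon
          have hsp := rr_mem D hne i
          have e : (i + 1) - ((rr D hne i + 1 : ℕ) : Fin n) = i - (rr D hne i : Fin n) := by
            push_cast
            ring
          have : (i + 1) - ((rr D hne i + 1 : ℕ) : Fin n) ∈ D := by rw [e]; exact hsp
          exact rr_min D hne (by omega) (by omega) this
      have hpi : pp D hne i = pp D hne (i + 1) := by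
        show i - (rr D hne i : Fin n) = (i + 1) - (rr D hne (i + 1) : Fin n)
        rw [hri, ← hm, Nat.cast_sub (by omega : 1 ≤ m), Nat.cast_one]
        ring
      rw [hri, hpi]
      omega
    · intro hiD
      constructor
      · intro hcon
        have h1 : LL D hne (pp D hne i) ≤ rr D hne i :=
          Nat.find_le ⟨rr_pos D hne i, by rw [pp_add]; exact hiD⟩
        have h2 := hb _ (pp_mem D hne i)
        have h3 := hL2 _ (pp_mem D hne i)
        omega
      · have hr1 : rr D hne (i + 1) = 1 := by
          have := rr_add D hne hiD (m := 1) one_pos (LL_pos D hne i)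
          rw [Nat.cast_one] at this
          exact this
        have hp : pp D hne (i + 1) = i := by
          show (i + 1) - (rr D hne (i + 1) : Fin n) = i
          rw [hr1, Nat.cast_one, add_sub_cancel_right]
        rw [hr1, hp]
        omega

end core

/-- There exists a word `w ∈ {1,2}^n` with exactly `k` ones and `cDes(w) = J` iff
`|J| ≤ min(k, n-k)` and no two elements of `J` are cyclically adjacent mod `n`. -/
theorem stmt_5 (n k : ℕ) [NeZero n] (hk1 : 1 ≤ k) (hk2 : k ≤ n - 1)
    (J : Finset ℕ) (hJ : J ⊆ Finset.Icc 1 n) (hJne : J.Nonempty) :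
    (∃ w : Fin n → Fin 2, onesW n w = k ∧ cDesW n w = J) ↔
      (J.card ≤ min k (n - k) ∧ ∀ j ∈ J, j % n + 1 ∉ J) := by
  have hn : 2 ≤ n := by omega
  have hfinj : Function.Injective (fun i : Fin n => (i : ℕ) + 1) := by
    intro a b h
    simp only [add_left_inj] at h
    exact Fin.val_injective h
  have hvadd : ∀ i : Fin n, ((i + 1 : Fin n) : ℕ) = ((i : ℕ) + 1) % n := by
    intro i
    rw [Fin.add_def]
    congr 2
    have : ((1 : ℕ) : Fin n) = (1 : Fin n) := Nat.cast_one
    rw [← this, Fin.val_natCast, Nat.mod_eq_of_lt hn]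
  constructor
  · rintro ⟨w, hones, hdes⟩
    have hJ' : J = (Finset.univ.filter (fun i : Fin n => w (i + 1) < w i)).image
        (fun i : Fin n => (i : ℕ) + 1) := hdes.symm
    set Dw := Finset.univ.filter (fun i : Fin n => w (i + 1) < w i) with hDw
    have hcard : J.card = Dw.card := by rw [hJ', Finset.card_image_of_injective _ hfinj]
    have hSk : (Finset.univ.filter (fun i : Fin n => w i = 0)).card = k := by
      rw [← hones]
      unfold onesW
      congr 1
      ext i
      simp only [Finset.mem_filter, Finset.mem_univ, true_and]
      rw [Fin.ext_iff]
      simp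
    have hw01 : ∀ i ∈ Dw, w i = 1 ∧ w (i + 1) = 0 := by
      intro i hi
      rw [hDw, Finset.mem_filter] at hi
      have h := hi.2
      rw [Fin.lt_def] at h
      have h1 : (w i).val < 2 := (w i).isLt
      have h2 : (w (i + 1)).val < 2 := (w (i + 1)).isLt
      constructor <;> (apply Fin.ext; omega)
    have hb1 : Dw.card ≤ k := by
      rw [← hSk]
      apply Finset.card_le_card_of_injOn (fun i => i + 1)
      · intro i hi
        simp only [Finset.mem_coe, Finset.mem_filter, Finset.mem_univ, true_and]
        exact (hw01 i hi).2
      · intro a _ b _ h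
        exact add_right_cancel h
    have hb2 : Dw.card ≤ n - k := by
      have hsub : Dw ⊆ (Finset.univ.filter (fun i : Fin n => w i = 0))ᶜ := by
        intro i hi
        simp only [Finset.mem_compl, Finset.mem_filter, Finset.mem_univ, true_and]
        rw [(hw01 i hi).1]
        exact one_ne_zero
      have := Finset.card_le_card hsub
      rwa [Finset.card_compl, hSk, Fintype.card_fin] at this
    refine ⟨hcard ▸ le_min hb1 hb2, ?_⟩
    intro j hj
    rw [hJ', Finset.mem_image] at hj
    obtain ⟨i, hi, rfl⟩ := hj
    intro hcon
    rw [hJ', Finset.mem_image] at hcon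
    obtain ⟨i', hi', hieq⟩ := hcon
    have hval : (i' : ℕ) = ((i + 1 : Fin n) : ℕ) := by
      rw [hvadd i]; omega
    have hii : i' = i + 1 := Fin.ext hval
    subst hii
    have h0 := (hw01 i hi).2
    have h1 := (hw01 _ hi').1
    rw [h0] at h1
    exact absurd h1 (by decide)
  · rintro ⟨hcard, hadjJ⟩
    set D := Finset.univ.filter (fun i : Fin n => (i : ℕ) + 1 ∈ J) with hDdef
    have himg : D.image (fun i : Fin n => (i : ℕ) + 1) = J := by
      ext j
      simp only [hDdef, Finset.mem_image, Finset.mem_filter, Finset.mem_univ, true_and]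
      constructor
      · rintro ⟨i, hi, rfl⟩; exact hi
      · intro hj
        have hjn := hJ hj
        rw [Finset.mem_Icc] at hjn
        refine ⟨⟨j - 1, by omega⟩, ?_, ?_⟩
        · show j - 1 + 1 ∈ J
          rw [show j - 1 + 1 = j from by omega]; exact hj
        · show j - 1 + 1 = j
          omega
    have hDcard : D.card = J.card := by
      rw [← himg, Finset.card_image_of_injective _ hfinj]
    have hDne : D.Nonempty := by
      obtain ⟨j, hj⟩ := hJne
      have hjn := hJ hj
      rw [Finset.mem_Icc] at hjn
      refine ⟨⟨j - 1, by omega⟩, ?_⟩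
      rw [hDdef, Finset.mem_filter]
      refine ⟨Finset.mem_univ _, ?_⟩
      show j - 1 + 1 ∈ J
      rw [show j - 1 + 1 = j from by omega]; exact hj
    have hadj : ∀ i ∈ D, i + 1 ∉ D := by
      intro i hi hcon
      rw [hDdef, Finset.mem_filter] at hi hcon
      have h1 := hi.2
      have h2 := hcon.2
      apply hadjJ _ h1
      rw [hvadd i] at h2
      exact h2
    have hd1 : D.card ≤ k := by
      rw [hDcard]; exact le_trans hcard (min_le_left _ _)
    have hd2 : D.card + k ≤ n := by
      have h := le_trans hcard (min_le_right _ _)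
      rw [hDcard]; omega
    obtain ⟨S, hSk, hSd⟩ := core_lemma D hDne hn hadj hd1 hd2
    refine ⟨fun i => if i ∈ S then 0 else 1, ?_, ?_⟩
    · unfold onesW
      rw [← hSk]
      congr 1
      ext i
      by_cases h : i ∈ S <;> simp [h]
    · unfold cDesW
      have hfe : (Finset.univ.filter (fun i : Fin n =>
          (if i + 1 ∈ S then (0 : Fin 2) else 1) < (if i ∈ S then (0 : Fin 2) else 1))) = D := by
        ext i
        simp only [Finset.mem_filter, Finset.mem_univ, true_and]
        rw [← hSd i]
        by_cases h1 : i ∈ S <;> by_cases h2 : i + 1 ∈ S <;>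
          simp [h1, h2] <;> decide
      rw [hfe, himg]
end

section
/- For n ≥ 2, the number of words w in {1,2}^n (not all letters equal) with |cDes(w)| = d equals (n/d)·C(⌊n/2⌋-1, d-1)·C(⌈n/2⌉-1, d-1) when the number of 1's in w is required to be ⌊n/2⌋; that is, summing over words with exactly ⌊n/2⌋ ones, Σ_w q^{|cDes(w)|} = Σ_{d=1}^{⌊n/2⌋} (n/d)·C(⌊n/2⌋-1, d-1)·C(⌈n/2⌉-1, d-1)·q^d. -/
open Finset

namespace Aux6

def zc {n : ℕ} (v : Fin n → Fin 2) : ℕ := ∑ i, if v i = 0 then 1 else 0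

def ldsc {n : ℕ} (v : Fin (n + 1) → Fin 2) : ℕ :=
  ∑ i : Fin n, if v i.succ < v i.castSucc then 1 else 0

lemma zc_cons {n : ℕ} (x : Fin 2) (u : Fin n → Fin 2) :
    zc (Fin.cons x u) = (if x = 0 then 1 else 0) + zc u := by
  rw [zc, Fin.sum_univ_succ, Fin.cons_zero]
  simp only [Fin.cons_succ, zc]

lemma ldsc_cons {n : ℕ} (x : Fin 2) (u : Fin (n + 1) → Fin 2) :
    ldsc (Fin.cons x u) = (if u 0 < x then 1 else 0) + ldsc u := by
  rw [ldsc, Fin.sum_univ_succ]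
  simp only [Fin.castSucc_zero, Fin.cons_zero, Fin.cons_succ, ← Fin.succ_castSucc, ldsc]

lemma last_cons {n : ℕ} (x : Fin 2) (u : Fin (n + 1) → Fin 2) :
    (Fin.cons x u : Fin (n + 2) → Fin 2) (Fin.last (n + 1)) = u (Fin.last n) := by
  simp [← Fin.succ_last]

end Aux6

namespace Aux6

lemma fin2cases (a : Fin 2) : a = 0 ∨ a = 1 := by fin_cases a <;> simp

def Wcnt (n k d : ℕ) (x : Fin 2) : ℕ :=
  ∑ v : Fin (n + 1) → Fin 2,
    if v 0 = x ∧ v (Fin.last n) = 1 ∧ zc v = k ∧ ldsc v = d then 1 else 0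

lemma rec_sum (n k d : ℕ) (x : Fin 2) :
    Wcnt (n + 1) k d x = ∑ u : Fin (n + 1) → Fin 2,
      if (u (Fin.last n) = 1 ∧ (if x = 0 then 1 else 0) + zc u = k ∧
          (if u 0 < x then 1 else 0) + ldsc u = d) then 1 else 0 := by
  rw [Wcnt, ← Equiv.sum_comp (Fin.consEquiv fun _ => Fin 2)]
  rw [Fintype.sum_prod_type]
  rw [Finset.sum_comm]
  apply Finset.sum_congr rfl
  intro u _
  have : ∀ x' : Fin 2,
      (if (Fin.consEquiv fun _ => Fin 2) (x', u) 0 = x ∧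
          (Fin.consEquiv fun _ => Fin 2) (x', u) (Fin.last (n + 1)) = 1 ∧
          zc ((Fin.consEquiv fun _ => Fin 2) (x', u)) = k ∧
          ldsc ((Fin.consEquiv fun _ => Fin 2) (x', u)) = d then (1:ℕ) else 0) =
      if x' = x then (if (u (Fin.last n) = 1 ∧ (if x' = 0 then 1 else 0) + zc u = k ∧
          (if u 0 < x' then 1 else 0) + ldsc u = d) then 1 else 0) else 0 := by
    intro x'
    have h1 : (Fin.consEquiv fun _ : Fin (n+2) => Fin 2) (x', u) = Fin.cons x' u := rfl
    rw [h1, zc_cons, ldsc_cons, last_cons, Fin.cons_zero]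
    by_cases h : x' = x <;> simp [h, and_assoc]
  simp only [this]
  rw [Finset.sum_ite_eq' Finset.univ x]
  simp

lemma wcnt_zero (n k d : ℕ) : Wcnt 0 k d 0 = 0 := by
  rw [Wcnt]
  apply Finset.sum_eq_zero
  intro v _
  have : Fin.last 0 = 0 := rfl
  rw [this]
  by_cases h : v 0 = 0 <;> simp [h]

lemma wcnt_zero' (n k d : ℕ) : Wcnt 0 k d 1 = if k = 0 ∧ d = 0 then 1 else 0 := by
  rw [Wcnt, ← Equiv.sum_comp (Equiv.funUnique (Fin 1) (Fin 2)).symm, Fin.sum_univ_two]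
  have e0 : ((Equiv.funUnique (Fin 1) (Fin 2)).symm (0 : Fin 2)) = fun _ => (0:Fin 2) := rfl
  have e1 : ((Equiv.funUnique (Fin 1) (Fin 2)).symm (1 : Fin 2)) = fun _ => (1:Fin 2) := rfl
  rw [e0, e1]
  have hz0 : zc (fun _ : Fin 1 => (0:Fin 2)) = 1 := by simp [zc]
  have hz1 : zc (fun _ : Fin 1 => (1:Fin 2)) = 0 := by simp [zc]
  have hl0 : ldsc (fun _ : Fin 1 => (0:Fin 2)) = 0 := by simp [ldsc]
  have hl1 : ldsc (fun _ : Fin 1 => (1:Fin 2)) = 0 := by simp [ldsc]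
  simp [hz0, hz1, hl0, hl1, eq_comm]

end Aux6

namespace Aux6

lemma rec00 (n d : ℕ) : Wcnt (n + 1) 0 d 0 = 0 := by
  rw [rec_sum]
  apply Finset.sum_eq_zero
  intro u _
  simp

lemma rec0 (n k d : ℕ) : Wcnt (n + 1) (k + 1) d 0 = Wcnt n k d 0 + Wcnt n k d 1 := by
  rw [rec_sum, Wcnt, Wcnt, ← Finset.sum_add_distrib]
  apply Finset.sum_congr rfl
  intro u _
  rcases fin2cases (u 0) with h | h <;>
    simp [h, and_assoc, Fin.lt_iff_val_lt_val, Nat.one_add, Nat.succ_inj]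

end Aux6

namespace Aux6

lemma rec1 (n k d : ℕ) :
    Wcnt (n + 1) k (d + 1) 1 = Wcnt n k d 0 + Wcnt n k (d + 1) 1 := by
  rw [rec_sum, Wcnt, Wcnt, ← Finset.sum_add_distrib]
  apply Finset.sum_congr rfl
  intro u _
  rcases fin2cases (u 0) with h | h <;>
    simp [h, and_assoc, Fin.lt_iff_val_lt_val, Nat.one_add, Nat.succ_inj]

lemma rec10 (n k : ℕ) : Wcnt (n + 1) k 0 1 = Wcnt n k 0 1 := by
  rw [rec_sum, Wcnt]
  apply Finset.sum_congr rfl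
  intro u _
  rcases fin2cases (u 0) with h | h <;>
    simp [h, and_assoc, Fin.lt_iff_val_lt_val]

end Aux6

namespace Aux6

def Ff (n k d : ℕ) : ℕ :=
  if 1 ≤ k ∧ k ≤ n then (k - 1).choose d * (n - k).choose d else 0

def Ft (n k d : ℕ) : ℕ :=
  if k = 0 then (if d = 0 then 1 else 0)
  else if 1 ≤ d ∧ k ≤ n then (k - 1).choose (d - 1) * (n - k).choose d else 0

lemma Ff_rec (n k d : ℕ) : Ff (n + 1) (k + 1) d = Ff n k d + Ft n k d := by
  cases k with
  | zero => cases d <;> simp [Ff, Ft]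
  | succ k =>
    cases d with
    | zero =>
      simp only [Ff, Ft, Nat.choose_zero_right, mul_one, one_mul]
      split_ifs <;> first | contradiction | omega
    | succ d =>
      simp only [Ff, Ft, Nat.add_sub_cancel]
      rw [show n + 1 - (k + 1 + 1) = n - (k + 1) from by omega]
      split_ifs <;>
        first
          | contradiction
          | omega
          | (rw [Nat.choose_succ_succ k d]; ring)

lemma Ft_rec (n k d : ℕ) : Ft (n + 1) k (d + 1) = Ff n k d + Ft n k (d + 1) := by
  cases k with
  | zero => simp [Ff, Ft]
  | succ k =>
    simp only [Ff, Ft, Nat.add_sub_cancel]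
    split_ifs <;>
      first
        | contradiction
        | omega
        | (rw [show n + 1 - (k + 1) = (n - (k + 1)) + 1 from by omega,
            Nat.choose_succ_succ, mul_add])
        | (rw [show n + 1 - (k + 1) = 0 from by omega]; simp)

lemma Ft_rec0 (n k : ℕ) : Ft (n + 1) k 0 = Ft n k 0 := by
  cases k with
  | zero => simp [Ft]
  | succ k => simp only [Ft]; split_ifs <;> first | contradiction | omega

lemma wcnt_closed : ∀ n k d : ℕ, Wcnt n k d 0 = Ff n k d ∧ Wcnt n k d 1 = Ft n k d := by
  intro n
  induction n with
  | zero =>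
    intro k d
    constructor
    · rw [wcnt_zero 0 k d]
      simp only [Ff]
      rw [if_neg (by omega)]
    · rw [wcnt_zero' 0 k d]
      rcases Nat.eq_zero_or_pos k with hk | hk
      · subst hk; simp [Ft]
      · simp only [Ft]
        rw [if_neg (by omega), if_neg (by omega)]
        simp [Nat.pos_iff_ne_zero.mp hk]
  | succ n ih =>
    intro k d
    constructor
    · rcases Nat.eq_zero_or_pos k with hk | hk
      · subst hk
        rw [rec00]
        simp only [Ff]
        rw [if_neg (by omega)]
      · obtain ⟨k', rfl⟩ := Nat.exists_eq_add_of_le hk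
        have hq : 1 + k' = k' + 1 := by omega
        rw [hq, rec0, (ih k' d).1, (ih k' d).2, Ff_rec]
    · rcases Nat.eq_zero_or_pos d with hd | hd
      · subst hd
        rw [rec10, (ih k 0).2, Ft_rec0]
      · obtain ⟨d', rfl⟩ := Nat.exists_eq_add_of_le hd
        have hq : 1 + d' = d' + 1 := by omega
        rw [hq, rec1, (ih k d').1, (ih k (d' + 1)).2, Ft_rec]

end Aux6

namespace Aux6

lemma lt2 (a b : Fin 2) : a < b ↔ a = 0 ∧ b = 1 := by revert a b; decide

def cdsc {m : ℕ} (w : Fin (m + 1) → Fin 2) : ℕ :=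
  ∑ i : Fin (m + 1), if w (i + 1) < w i then 1 else 0

lemma cdsc_eq_ldsc {m : ℕ} (w : Fin (m + 1) → Fin 2) :
    cdsc w = ldsc w + (if w 0 < w (Fin.last m) then 1 else 0) := by
  rw [cdsc, Fin.sum_univ_castSucc, Fin.last_add_one, ldsc]
  congr 1
  apply Finset.sum_congr rfl
  intro i _
  rw [Fin.coeSucc_eq_succ]

/-- rotation of a word -/
def rot {m : ℕ} (j : Fin (m + 1)) (w : Fin (m + 1) → Fin 2) : Fin (m + 1) → Fin 2 :=
  fun t => w (t + j)

lemma zc_rot {m : ℕ} (j : Fin (m + 1)) (w : Fin (m + 1) → Fin 2) :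
    zc (rot j w) = zc w := by
  rw [zc, zc]
  exact Equiv.sum_comp (Equiv.addRight j) (fun t => if w t = 0 then 1 else 0)

lemma rot_desc {m : ℕ} (j : Fin (m + 1)) (w : Fin (m + 1) → Fin 2) (t : Fin (m + 1)) :
    (rot j w (t + 1) < rot j w t) ↔ (w ((t + j) + 1) < w (t + j)) := by
  simp only [rot]
  have h : t + 1 + j = t + j + 1 := add_right_comm _ _ _
  rw [h]

lemma cdsc_rot {m : ℕ} (j : Fin (m + 1)) (w : Fin (m + 1) → Fin 2) :
    cdsc (rot j w) = cdsc w := by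
  rw [cdsc, cdsc]
  rw [← Equiv.sum_comp (Equiv.addRight j) (fun t => if w (t + 1) < w t then 1 else 0)]
  apply Finset.sum_congr rfl
  intro t _
  simp only [Equiv.coe_addRight]
  rw [if_congr (rot_desc j w t) rfl rfl]
  rfl

end Aux6

namespace Aux6

def Ncnt (m k d : ℕ) : ℕ :=
  ∑ w : Fin (m + 1) → Fin 2, if zc w = k ∧ cdsc w = d then 1 else 0

def Mcnt (m k d : ℕ) : ℕ :=
  ∑ w : Fin (m + 1) → Fin 2,
    if zc w = k ∧ cdsc w = d ∧ w (Fin.last m + 1) < w (Fin.last m) then 1 else 0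

lemma Mcnt_eq_Wcnt (m k d : ℕ) : Mcnt m k (d + 1) = Wcnt m k d 0 := by
  rw [Mcnt, Wcnt]
  apply Finset.sum_congr rfl
  intro w _
  apply if_congr _ rfl rfl
  rw [Fin.last_add_one, cdsc_eq_ldsc]
  constructor
  · rintro ⟨hz, hc, hlt⟩
    have h01 := (lt2 _ _).mp hlt
    rw [if_pos hlt] at hc
    exact ⟨h01.1, h01.2, hz, by omega⟩
  · rintro ⟨h0, h1, hz, hl⟩
    have hlt := (lt2 (w 0) (w (Fin.last m))).mpr ⟨h0, h1⟩
    exact ⟨hz, by rw [if_pos hlt]; omega, hlt⟩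

lemma inner_count (m k d : ℕ) (i : Fin (m + 1)) :
    (∑ w : Fin (m + 1) → Fin 2,
      if zc w = k ∧ cdsc w = d ∧ w (i + 1) < w i then 1 else 0) = Mcnt m k d := by
  rw [Mcnt, ← Equiv.sum_comp
    (Equiv.arrowCongr (Equiv.addRight (i + 1)).symm (Equiv.refl (Fin 2)))
    (fun v => if zc v = k ∧ cdsc v = d ∧ v (Fin.last m + 1) < v (Fin.last m) then (1:ℕ) else 0)]
  apply Finset.sum_congr rfl
  intro w _
  have he : (Equiv.arrowCongr (Equiv.addRight (i + 1)).symm (Equiv.refl (Fin 2))) w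
      = rot (i + 1) w := rfl
  rw [he, zc_rot, cdsc_rot]
  have h2 : Fin.last m + (i + 1) = i := by
    have h : Fin.last m + (i + 1) = i + (Fin.last m + 1) := by
      rw [add_comm (Fin.last m), add_assoc, add_comm 1 (Fin.last m)]
    rw [h, Fin.last_add_one, add_zero]
  have h3 : (rot (i + 1) w (Fin.last m + 1) < rot (i + 1) w (Fin.last m))
      ↔ (w (i + 1) < w i) := by
    rw [rot_desc, h2]
  exact if_congr (and_congr_right fun _ => and_congr_right fun _ => h3.symm) rfl rfl

lemma key (m k d : ℕ) : d * Ncnt m k d = (m + 1) * Mcnt m k d := by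
  have lhs : d * Ncnt m k d = ∑ i : Fin (m + 1), ∑ w : Fin (m + 1) → Fin 2,
      (if zc w = k ∧ cdsc w = d ∧ w (i + 1) < w i then 1 else 0) := by
    rw [Finset.sum_comm, Ncnt, Finset.mul_sum]
    apply Finset.sum_congr rfl
    intro w _
    by_cases h : zc w = k ∧ cdsc w = d
    · rw [if_pos h, mul_one]
      have hcg : ∀ i : Fin (m + 1),
          (if zc w = k ∧ cdsc w = d ∧ (w (i + 1) < w i) then (1:ℕ) else 0)
          = (if w (i + 1) < w i then 1 else 0) :=
        fun i => if_congr (by tauto) rfl rfl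
      rw [Finset.sum_congr rfl (fun i _ => hcg i)]
      exact h.2.symm
    · rw [if_neg h, mul_zero]
      symm
      apply Finset.sum_eq_zero
      intro i _
      rw [if_neg]
      tauto
  rw [lhs, Finset.sum_congr rfl (fun i _ => inner_count m k d i)]
  simp [Finset.sum_const, Finset.card_univ]

end Aux6

namespace Aux6

lemma Ncnt_card (m k d : ℕ) :
    Ncnt m k d = (Finset.univ.filter
      (fun w : Fin (m + 1) → Fin 2 => zc w = k ∧ cdsc w = d)).card :=
  (Finset.card_filter _ _).symm

lemma Ncnt_val (m k d : ℕ) (hk1 : 1 ≤ k) (hk2 : k ≤ m) :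
    (d + 1) * Ncnt m k (d + 1) = (m + 1) * ((k - 1).choose d * (m - k).choose d) := by
  rw [key, Mcnt_eq_Wcnt, (wcnt_closed m k d).1, Ff, if_pos ⟨hk1, hk2⟩]

lemma cdsc_le_zc {m : ℕ} (w : Fin (m + 1) → Fin 2) : cdsc w ≤ zc w := by
  rw [cdsc, zc]
  rw [← Equiv.sum_comp (Equiv.addRight (1 : Fin (m + 1)))
    (fun t => if w t = 0 then (1:ℕ) else 0)]
  apply Finset.sum_le_sum
  intro i _
  simp only [Equiv.coe_addRight]
  by_cases h : w (i + 1) < w i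
  · rw [if_pos h]; have h0 := ((lt2 _ _).mp h).1; exact le_of_eq (if_pos h0).symm
  · rw [if_neg h]
    exact Nat.zero_le _

lemma cdsc_pos {m k : ℕ} (w : Fin (m + 1) → Fin 2) (hz : zc w = k)
    (h1 : 1 ≤ k) (h2 : k ≤ m) : 1 ≤ cdsc w := by
  by_contra hc
  have hc0 : cdsc w = 0 := by omega
  have hnd : ∀ i : Fin (m + 1), w i ≤ w (i + 1) := by
    intro i
    by_contra hlt
    rw [not_le] at hlt
    have := Finset.sum_eq_zero_iff.mp hc0 i (Finset.mem_univ i)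
    rw [if_pos hlt] at this
    exact one_ne_zero this
  have step : ∀ b : ℕ, (hb : b < m) → w ⟨b, by omega⟩ ≤ w ⟨b + 1, by omega⟩ := by
    intro b hb
    have : (⟨b, by omega⟩ : Fin (m + 1)) + 1 = ⟨b + 1, by omega⟩ := by
      apply Fin.ext
      rw [Fin.val_add_one_of_lt]
      rw [Fin.lt_iff_val_lt_val]
      simp [Fin.last]
      omega
    rw [← this]
    exact hnd _
  have chain : ∀ b : ℕ, ∀ hb : b ≤ m, ∀ a : ℕ, ∀ ha : a ≤ b,
      w ⟨a, Nat.lt_succ_of_le (le_trans ha hb)⟩ ≤ w ⟨b, Nat.lt_succ_of_le hb⟩ := by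
    intro b
    induction b with
    | zero =>
      intro hb a ha
      have h0 : a = 0 := Nat.le_zero.mp ha
      subst h0
      exact le_refl _
    | succ b ih =>
      intro hb a ha
      by_cases h : a = b + 1
      · subst h; exact le_refl _
      · have ha' : a ≤ b := by omega
        have hh1 := ih (by omega) a ha'
        have hh2 := step b (by omega)
        exact le_trans hh1 hh2
  have hlast0 : w (Fin.last m) ≤ w 0 := by
    have := hnd (Fin.last m)
    rwa [Fin.last_add_one] at this
  have hconst : ∀ i : Fin (m + 1), w i = w 0 := by
    intro i
    have e1 : (⟨i.val, by omega⟩ : Fin (m + 1)) = i := Fin.ext rfl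
    have e0 : (⟨0, by omega⟩ : Fin (m + 1)) = 0 := rfl
    have em : (⟨m, by omega⟩ : Fin (m + 1)) = Fin.last m := rfl
    have hi1 : w 0 ≤ w i := by
      have h := chain i.val (by omega) 0 (Nat.zero_le _)
      rwa [e1, e0] at h
    have hi2 : w i ≤ w 0 := by
      have h := chain m (le_refl m) i.val (by omega)
      rw [e1, em] at h
      exact le_trans h hlast0
    exact le_antisymm hi2 hi1
  have hzc : zc w = if w 0 = 0 then m + 1 else 0 := by
    rw [zc]
    rw [Finset.sum_congr rfl (fun i _ => by rw [hconst i])]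
    rw [Finset.sum_const, Finset.card_univ, Fintype.card_fin, smul_eq_mul]
    by_cases h : w 0 = 0
    · rw [if_pos h, if_pos h, mul_one]
    · rw [if_neg h, if_neg h, mul_zero]
  rw [hz] at hzc
  by_cases h : w 0 = 0
  · rw [if_pos h] at hzc; omega
  · rw [if_neg h] at hzc; omega

end Aux6


/-- Summing over words `w ∈ {1,2}^n` with exactly `⌊n/2⌋` ones,
`Σ_w q^{|cDes(w)|} = Σ_{d=1}^{⌊n/2⌋} (n/d)·C(⌊n/2⌋-1, d-1)·C(⌈n/2⌉-1, d-1)·q^d`,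
where `⌈n/2⌉ = n - ⌊n/2⌋`. -/
theorem stmt_6 (n : ℕ) [NeZero n] (hn : 2 ≤ n) :
    ∑ w ∈ (Finset.univ : Finset (Fin n → Fin 2)).filter (fun w => onesW n w = n / 2),
        (Polynomial.X : Polynomial ℚ) ^ (cDesW n w).card =
    ∑ d ∈ Finset.Icc 1 (n / 2),
        Polynomial.C ((n : ℚ) / (d : ℚ) * ((n / 2 - 1).choose (d - 1) : ℚ) *
            (((n - n / 2) - 1).choose (d - 1) : ℚ)) *
          (Polynomial.X : Polynomial ℚ) ^ d := by
  obtain ⟨m, rfl⟩ : ∃ m, n = m + 1 := ⟨n - 1, by omega⟩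
  set k := (m + 1) / 2 with hkdef
  have hk1 : 1 ≤ k := by omega
  have hk2 : k ≤ m := by omega
  have h1 : ∀ w : Fin (m + 1) → Fin 2, onesW (m + 1) w = Aux6.zc w := by
    intro w
    rw [onesW, Finset.card_filter, Aux6.zc]
    apply Finset.sum_congr rfl
    intro i _
    apply if_congr _ rfl rfl
    constructor
    · intro h; exact Fin.ext (by omega)
    · intro h; rw [h]; rfl
  have h2 : ∀ w : Fin (m + 1) → Fin 2, (cDesW (m + 1) w).card = Aux6.cdsc w := by
    intro w
    rw [cDesW, Finset.card_image_of_injective _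
      (fun a b hab => Fin.ext (by omega : (a : ℕ) = (b : ℕ)))]
    rw [Finset.card_filter]
    rfl
  have hfe : (Finset.univ : Finset (Fin (m+1) → Fin 2)).filter
        (fun w => onesW (m + 1) w = (m + 1) / 2)
      = Finset.univ.filter (fun w => Aux6.zc w = k) := by
    apply Finset.filter_congr
    intro w _
    rw [h1 w]
  rw [hfe]
  have hmap : ∀ w ∈ (Finset.univ : Finset (Fin (m+1) → Fin 2)).filter
      (fun w => Aux6.zc w = k), Aux6.cdsc w ∈ Finset.Icc 1 k := by
    intro w hw
    rw [Finset.mem_filter] at hw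
    rw [Finset.mem_Icc]
    exact ⟨Aux6.cdsc_pos w hw.2 hk1 hk2, hw.2 ▸ Aux6.cdsc_le_zc w⟩
  rw [← Finset.sum_fiberwise_of_maps_to hmap
    (fun w => (Polynomial.X : Polynomial ℚ) ^ (cDesW (m + 1) w).card)]
  apply Finset.sum_congr rfl
  intro d hd
  rw [Finset.mem_Icc] at hd
  have inner : ∑ w ∈ ((Finset.univ : Finset (Fin (m+1) → Fin 2)).filter
        (fun w => Aux6.zc w = k)).filter (fun w => Aux6.cdsc w = d),
      (Polynomial.X : Polynomial ℚ) ^ (cDesW (m + 1) w).card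
      = (Aux6.Ncnt m k d) • (Polynomial.X : Polynomial ℚ) ^ d := by
    rw [Finset.sum_congr rfl (fun w hw => by
      rw [h2 w, (Finset.mem_filter.mp hw).2])]
    rw [Finset.sum_const, Finset.filter_filter, Aux6.Ncnt_card]
  rw [inner]
  have harith := Aux6.Ncnt_val m k (d - 1) hk1 hk2
  rw [show d - 1 + 1 = d from by omega] at harith
  have hq : ((m + 1 : ℕ) : ℚ) / (d : ℚ) * (((m + 1) / 2 - 1).choose (d - 1) : ℚ) *
      (((m + 1 - (m + 1) / 2) - 1).choose (d - 1) : ℚ) = (Aux6.Ncnt m k d : ℚ) := by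
    have e1 : (m + 1) / 2 - 1 = k - 1 := rfl
    have e2 : (m + 1 - (m + 1) / 2) - 1 = m - k := by omega
    rw [e1, e2]
    have hd0 : (d : ℚ) ≠ 0 := by
      have : 1 ≤ d := hd.1
      positivity
    have hc : ((d : ℚ)) * (Aux6.Ncnt m k d : ℚ)
        = ((m + 1 : ℕ) : ℚ) * (((k - 1).choose (d - 1) : ℚ) * ((m - k).choose (d - 1) : ℚ)) := by
      exact_mod_cast congrArg (fun x : ℕ => (x : ℚ)) harith
    push_cast at hc
    field_simp
    push_cast
    linear_combination -hc
  rw [hq]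
  rw [nsmul_eq_mul]
  norm_cast
end

section
/- Let n_1 ≤ n_2 be positive integers with n_1 + n_2 = n. Then for each 1 ≤ d ≤ n_1, the identity C(n_1-1, d-1)·C(n_2-1, d-1) + C(n_1, d)·C(n_2, d) - C(n_1-1, d)·C(n_2-1, d) = (n/d)·C(n_1-1, d-1)·C(n_2-1, d-1) holds. -/
/-- For positive integers `n₁ ≤ n₂` with `n₁ + n₂ = n` and `1 ≤ d ≤ n₁`:
`C(n₁-1,d-1)·C(n₂-1,d-1) + C(n₁,d)·C(n₂,d) - C(n₁-1,d)·C(n₂-1,d)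
  = (n/d)·C(n₁-1,d-1)·C(n₂-1,d-1)` (as rational numbers). -/
theorem stmt_8 (n n₁ n₂ d : ℕ) (hn₁ : 0 < n₁) (hn₂ : 0 < n₂) (h12 : n₁ ≤ n₂)
    (hsum : n₁ + n₂ = n) (hd1 : 1 ≤ d) (hd2 : d ≤ n₁) :
    (((n₁ - 1).choose (d - 1) * (n₂ - 1).choose (d - 1) : ℕ) : ℚ) +
      ((n₁.choose d * n₂.choose d : ℕ) : ℚ) -
      (((n₁ - 1).choose d * (n₂ - 1).choose d : ℕ) : ℚ) =
    ((n : ℚ) / (d : ℚ)) * (((n₁ - 1).choose (d - 1) * (n₂ - 1).choose (d - 1) : ℕ) : ℚ) := by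
  obtain ⟨a, rfl⟩ : ∃ a, d = a + 1 := ⟨d - 1, (Nat.succ_pred_eq_of_pos hd1).symm⟩
  obtain ⟨m₁, rfl⟩ : ∃ m, n₁ = m + 1 := ⟨n₁ - 1, (Nat.succ_pred_eq_of_pos hn₁).symm⟩
  obtain ⟨m₂, rfl⟩ : ∃ m, n₂ = m + 1 := ⟨n₂ - 1, (Nat.succ_pred_eq_of_pos hn₂).symm⟩
  subst hsum
  simp only [Nat.add_sub_cancel]
  have ha₁ : a ≤ m₁ := by omega
  have ha₂ : a ≤ m₂ := by omega
  have h1 : ((m₁ + 1).choose (a + 1) * (a + 1) : ℚ) = (m₁ + 1) * m₁.choose a := by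
    exact_mod_cast congrArg (Nat.cast : ℕ → ℚ) (Nat.add_one_mul_choose_eq m₁ a).symm
  have h2 : ((m₂ + 1).choose (a + 1) * (a + 1) : ℚ) = (m₂ + 1) * m₂.choose a := by
    exact_mod_cast congrArg (Nat.cast : ℕ → ℚ) (Nat.add_one_mul_choose_eq m₂ a).symm
  have h3 : (m₁.choose (a + 1) * (a + 1) : ℚ) = m₁.choose a * ((m₁ : ℚ) - a) := by
    have := Nat.choose_succ_right_eq m₁ a
    have : ((m₁.choose (a + 1) * (a + 1) : ℕ) : ℚ) = ((m₁.choose a * (m₁ - a) : ℕ) : ℚ) := by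
      exact_mod_cast congrArg (Nat.cast : ℕ → ℚ) this
    push_cast [ha₁] at this
    exact_mod_cast this
  have h4 : (m₂.choose (a + 1) * (a + 1) : ℚ) = m₂.choose a * ((m₂ : ℚ) - a) := by
    have := Nat.choose_succ_right_eq m₂ a
    have : ((m₂.choose (a + 1) * (a + 1) : ℕ) : ℚ) = ((m₂.choose a * (m₂ - a) : ℕ) : ℚ) := by
      exact_mod_cast congrArg (Nat.cast : ℕ → ℚ) this
    push_cast [ha₂] at this
    exact_mod_cast this
  have hd : ((a : ℚ) + 1) ≠ 0 := by positivity
  push_cast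
  field_simp
  apply mul_left_cancel₀ hd
  linear_combination ((m₂ + 1).choose (a + 1) : ℚ) * ((a:ℚ)+1) * h1 +
    ((m₁ : ℚ) + 1) * (m₁.choose a : ℚ) * h2 -
    (m₂.choose (a + 1) : ℚ) * ((a:ℚ)+1) * h3 -
    (m₁.choose a : ℚ) * ((m₁:ℚ) - a) * h4
end

section
/- Let A_n^h denote the set of lattice paths with n steps U=(1,1) and D=(1,-1) starting at the origin and ending at height h, and Q_n^h ⊆ A_n^h the subset of paths that go strictly below the x-axis at some point. For 1 ≤ k ≤ n/2, there is a bijection from A_n^{n-2k+2} to Q_n^{n-2k} that preserves the peak set, where the peak set of a path P is Peak(P) = {i : the i-th step of P is a U followed by a D}. -/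
/-- A lattice path with `n` steps `U = (1,1)` and `D = (1,-1)` starting at the origin,
encoded as `w : Fin n → Bool` with `true` an `U` step. -/
def cntU (n : ℕ) (w : Fin n → Bool) (i : ℕ) : ℕ :=
  ((Finset.univ : Finset (Fin n)).filter (fun j : Fin n => (j : ℕ) < i ∧ w j = true)).card

/-- Height of the path after the first `i` steps (for `i ≤ n`): `#U - #D = 2·#U - i`. -/
def prefH (n : ℕ) (w : Fin n → Bool) (i : ℕ) : ℤ :=
  2 * (cntU n w i : ℤ) - (i : ℤ)

/-- The ending height of the path. -/
def endH (n : ℕ) (w : Fin n → Bool) : ℤ := prefH n w n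

/-- The `i`-th step in 1-based indexing, extended by `false` out of range. -/
def stepv (n : ℕ) (w : Fin n → Bool) (i : ℕ) : Bool :=
  if h : i - 1 < n then w ⟨i - 1, h⟩ else false

/-- Peak set: `Peak(P) = {i ∈ {1,…,n-1} : step i is U and step i+1 is D}`. -/
def PeakUD (n : ℕ) (w : Fin n → Bool) : Finset ℕ :=
  (Finset.Icc 1 (n - 1)).filter
    (fun i => stepv n w i = true ∧ stepv n w (i + 1) = false)


section lemmas
variable (n : ℕ) (w : Fin n → Bool)

lemma cntU_succ (i : ℕ) (h : i < n) :
    cntU n w (i+1) = cntU n w i + (if w ⟨i,h⟩ = true then 1 else 0) := by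
  classical
  unfold cntU
  have hsplit : (Finset.univ.filter (fun j : Fin n => (j : ℕ) < i+1 ∧ w j = true))
      = (Finset.univ.filter (fun j : Fin n => (j : ℕ) < i ∧ w j = true))
        ∪ (Finset.univ.filter (fun j : Fin n => j = ⟨i,h⟩ ∧ w j = true)) := by
    ext j
    simp only [Finset.mem_filter, Finset.mem_union, Finset.mem_univ, true_and,
      Nat.lt_succ_iff_lt_or_eq, Fin.ext_iff]
    tauto
  rw [hsplit, Finset.card_union_of_disjoint]
  · congr 1
    by_cases hw : w ⟨i,h⟩ = true
    · rw [if_pos hw]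
      have : (Finset.univ.filter (fun j : Fin n => j = ⟨i,h⟩ ∧ w j = true)) = {⟨i,h⟩} := by
        ext j; simp only [Finset.mem_filter, Finset.mem_univ, true_and, Finset.mem_singleton]
        constructor
        · rintro ⟨rfl, -⟩; rfl
        · rintro rfl; exact ⟨rfl, hw⟩
      rw [this]; simp
    · rw [if_neg hw]
      have : (Finset.univ.filter (fun j : Fin n => j = ⟨i,h⟩ ∧ w j = true)) = ∅ := by
        ext j; simp only [Finset.mem_filter, Finset.mem_univ, true_and, Finset.notMem_empty,
          iff_false]
        rintro ⟨rfl, hw'⟩; exact hw hw'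
      rw [this]; simp
  · rw [Finset.disjoint_left]
    rintro j hj hj'
    simp only [Finset.mem_filter] at hj hj'
    obtain ⟨-, hlt, -⟩ := hj
    obtain ⟨-, rfl, -⟩ := hj'
    exact absurd hlt (lt_irrefl i)

lemma prefH_zero : prefH n w 0 = 0 := by simp [prefH, cntU]

lemma prefH_succ (i : ℕ) (h : i < n) :
    prefH n w (i+1) = prefH n w i + (if w ⟨i,h⟩ = true then 1 else -1) := by
  simp only [prefH, cntU_succ n w i h]
  by_cases hw : w ⟨i,h⟩ = true <;> simp [hw] <;> push_cast <;> ring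

lemma cntU_update (c : Fin n) (b : Bool) (i : ℕ) :
    cntU n (Function.update w c b) i + (if (c:ℕ) < i ∧ w c = true then 1 else 0)
      = cntU n w i + (if (c:ℕ) < i ∧ b = true then 1 else 0) := by
  classical
  unfold cntU
  rw [Finset.card_filter, Finset.card_filter]
  rw [← Finset.sum_erase_add _ _ (Finset.mem_univ c),
      ← Finset.sum_erase_add _ _ (Finset.mem_univ c)]
  have hsum : ∀ j ∈ Finset.univ.erase c,
      (if (j:ℕ) < i ∧ (Function.update w c b) j = true then 1 else 0)
        = (if (j:ℕ) < i ∧ w j = true then (1:ℕ) else 0) := by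
    intro j hj
    rw [Function.update_of_ne (Finset.ne_of_mem_erase hj)]
  rw [Finset.sum_congr rfl hsum, Function.update_self]
  ring
end lemmas

section more
variable (n : ℕ) (w : Fin n → Bool)

lemma prefH_update (c : Fin n) (b : Bool) (i : ℕ) :
    prefH n (Function.update w c b) i
      = prefH n w i + 2 * ((if (c:ℕ) < i ∧ b = true then (1:ℤ) else 0)
          - (if (c:ℕ) < i ∧ w c = true then (1:ℤ) else 0)) := by
  have h := cntU_update n w c b i
  have h' : (cntU n (Function.update w c b) i : ℤ)
      + (if (c:ℕ) < i ∧ w c = true then (1:ℤ) else 0)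
      = (cntU n w i : ℤ) + (if (c:ℕ) < i ∧ b = true then (1:ℤ) else 0) := by
    exact_mod_cast congrArg (Nat.cast : ℕ → ℤ) h
  simp only [prefH]
  linarith
lemma prefH_flip_down (c : Fin n) (hc : w c = true) (i : ℕ) :
    prefH n (Function.update w c false) i
      = prefH n w i - (if (c:ℕ) < i then 2 else 0) := by
  rw [prefH_update]
  by_cases h : (c:ℕ) < i <;> simp [h, hc] <;> ring

lemma prefH_flip_up (c : Fin n) (hc : w c = false) (i : ℕ) :
    prefH n (Function.update w c true) i
      = prefH n w i + (if (c:ℕ) < i then 2 else 0) := by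
  rw [prefH_update]
  by_cases h : (c:ℕ) < i <;> simp [h, hc]

end more

noncomputable section mins

def minH (n : ℕ) (w : Fin n → Bool) : ℤ :=
  (Finset.range (n+1)).inf' ⟨0, Finset.mem_range.2 (Nat.succ_pos n)⟩ (prefH n w)

def minSet (n : ℕ) (w : Fin n → Bool) : Finset ℕ :=
  (Finset.range (n+1)).filter (fun i => prefH n w i = minH n w)

lemma minSet_nonempty (n : ℕ) (w : Fin n → Bool) : (minSet n w).Nonempty := by
  obtain ⟨i, hi, hval⟩ := Finset.exists_mem_eq_inf' (⟨0, Finset.mem_range.2 (Nat.succ_pos n)⟩ :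
    (Finset.range (n+1)).Nonempty) (prefH n w)
  exact ⟨i, Finset.mem_filter.2 ⟨hi, hval.symm⟩⟩

def lastMin (n : ℕ) (w : Fin n → Bool) : ℕ := (minSet n w).max' (minSet_nonempty n w)
def firstMin (n : ℕ) (w : Fin n → Bool) : ℕ := (minSet n w).min' (minSet_nonempty n w)

variable (n : ℕ) (w : Fin n → Bool)

lemma minH_le {i : ℕ} (hi : i ≤ n) : minH n w ≤ prefH n w i :=
  Finset.inf'_le _ (Finset.mem_range.2 (Nat.lt_succ_of_le hi))

lemma minH_nonpos : minH n w ≤ 0 := by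
  simpa [prefH_zero] using minH_le n w (Nat.zero_le n)

lemma lastMin_mem : lastMin n w ∈ minSet n w := Finset.max'_mem _ _
lemma firstMin_mem : firstMin n w ∈ minSet n w := Finset.min'_mem _ _

lemma lastMin_le_n : lastMin n w ≤ n :=
  Nat.lt_succ_iff.1 (Finset.mem_range.1 (Finset.mem_filter.1 (lastMin_mem n w)).1)
lemma firstMin_le_n : firstMin n w ≤ n :=
  Nat.lt_succ_iff.1 (Finset.mem_range.1 (Finset.mem_filter.1 (firstMin_mem n w)).1)

lemma prefH_lastMin : prefH n w (lastMin n w) = minH n w :=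
  (Finset.mem_filter.1 (lastMin_mem n w)).2
lemma prefH_firstMin : prefH n w (firstMin n w) = minH n w :=
  (Finset.mem_filter.1 (firstMin_mem n w)).2

lemma le_lastMin {i : ℕ} (hi : i ≤ n) (h : prefH n w i = minH n w) : i ≤ lastMin n w :=
  Finset.le_max' _ _ (Finset.mem_filter.2 ⟨Finset.mem_range.2 (Nat.lt_succ_of_le hi), h⟩)
lemma firstMin_le {i : ℕ} (hi : i ≤ n) (h : prefH n w i = minH n w) : firstMin n w ≤ i :=
  Finset.min'_le _ _ (Finset.mem_filter.2 ⟨Finset.mem_range.2 (Nat.lt_succ_of_le hi), h⟩)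

lemma minH_lt_after {i : ℕ} (hi : i ≤ n) (h : lastMin n w < i) : minH n w < prefH n w i := by
  rcases lt_or_eq_of_le (minH_le n w hi) with h' | h'
  · exact h'
  · exact absurd (le_lastMin n w hi h'.symm) (not_le.2 h)

lemma minH_lt_before {i : ℕ} (hi : i ≤ n) (h : i < firstMin n w) : minH n w < prefH n w i := by
  rcases lt_or_eq_of_le (minH_le n w hi) with h' | h'
  · exact h'
  · exact absurd (firstMin_le n w hi h'.symm) (not_le.2 h)

end mins

section steps
variable (n : ℕ) (w : Fin n → Bool)

lemma step_at_lastMin (h : lastMin n w < n) : w ⟨lastMin n w, h⟩ = true := by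
  set m := lastMin n w with hm
  have h1 : prefH n w (m+1) = prefH n w m + (if w ⟨m,h⟩ = true then 1 else -1) :=
    prefH_succ n w m h
  have h2 : minH n w < prefH n w (m+1) := minH_lt_after n w (by omega) (by omega)
  rw [prefH_lastMin] at h1
  by_contra hfalse
  simp only [show w ⟨m,h⟩ = false from by simpa using hfalse] at h1
  simp only [Bool.false_eq_true, if_false] at h1
  omega

lemma prefH_lastMin_succ (h : lastMin n w < n) :
    prefH n w (lastMin n w + 1) = minH n w + 1 := by
  have := prefH_succ n w (lastMin n w) h
  rw [prefH_lastMin, step_at_lastMin n w h, if_pos rfl] at this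
  exact this

lemma step_before_lastMin (h1 : 1 ≤ lastMin n w) (h2 : lastMin n w - 1 < n) :
    w ⟨lastMin n w - 1, h2⟩ = false := by
  set m := lastMin n w with hm
  have hs : prefH n w (m-1+1) = prefH n w (m-1) + (if w ⟨m-1,h2⟩ = true then 1 else -1) :=
    prefH_succ n w (m-1) h2
  have hm1 : m - 1 + 1 = m := by omega
  rw [hm1, prefH_lastMin] at hs
  have h3 : minH n w ≤ prefH n w (m-1) := minH_le n w (by have := lastMin_le_n n w; omega)
  by_contra htrue
  simp only [Bool.not_eq_false] at htrue
  rw [htrue, if_pos rfl] at hs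
  omega

lemma step_after_succ_lastMin (h : lastMin n w + 1 < n) :
    w ⟨lastMin n w + 1, h⟩ = true := by
  set m := lastMin n w with hm
  have hs : prefH n w (m+1+1) = prefH n w (m+1) + (if w ⟨m+1,h⟩ = true then 1 else -1) :=
    prefH_succ n w (m+1) h
  rw [prefH_lastMin_succ n w (by omega)] at hs
  have h2 : minH n w < prefH n w (m+1+1) := minH_lt_after n w (by omega) (by omega)
  by_contra hfalse
  simp only [show w ⟨m+1,h⟩ = false from by simpa using hfalse, Bool.false_eq_true, if_false] at hs
  omega

lemma firstMin_pos (hneg : minH n w < 0) : 1 ≤ firstMin n w := by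
  by_contra h
  have h0 : firstMin n w = 0 := by omega
  have := prefH_firstMin n w
  rw [h0, prefH_zero] at this
  omega

lemma step_into_firstMin (h1 : 1 ≤ firstMin n w) (h2 : firstMin n w - 1 < n) :
    w ⟨firstMin n w - 1, h2⟩ = false ∧ prefH n w (firstMin n w - 1) = minH n w + 1 := by
  set f := firstMin n w with hf
  have hs : prefH n w (f-1+1) = prefH n w (f-1) + (if w ⟨f-1,h2⟩ = true then 1 else -1) :=
    prefH_succ n w (f-1) h2
  have hm1 : f - 1 + 1 = f := by omega
  rw [hm1, prefH_firstMin] at hs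
  have h3 : minH n w < prefH n w (f-1) := minH_lt_before n w (by omega) (by omega)
  by_cases htrue : w ⟨f-1,h2⟩ = true
  · rw [htrue, if_pos rfl] at hs; omega
  · rw [if_neg htrue] at hs
    refine ⟨by simpa using htrue, by rw [← hf]; omega⟩

end steps

section flips
variable (n : ℕ) (w : Fin n → Bool)

-- φ : flip the U-step just after the last minimum
lemma phi_prefH (hm : lastMin n w < n) (i : ℕ) :
    prefH n (Function.update w ⟨lastMin n w, hm⟩ false) i
      = prefH n w i - (if lastMin n w < i then 2 else 0) :=
  prefH_flip_down n w _ (step_at_lastMin n w hm) i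

lemma phi_minH (hm : lastMin n w < n) :
    minH n (Function.update w ⟨lastMin n w, hm⟩ false) = minH n w - 1 := by
  set w' := Function.update w ⟨lastMin n w, hm⟩ false with hw'
  apply le_antisymm
  · have h1 : prefH n w' (lastMin n w + 1) = minH n w - 1 := by
      rw [phi_prefH n w hm, prefH_lastMin_succ n w hm, if_pos (by omega)]; ring
    have := minH_le n w' (i := lastMin n w + 1) (by omega)
    omega
  · apply Finset.le_inf'
    intro i hi
    have hi' : i ≤ n := Nat.lt_succ_iff.1 (Finset.mem_range.1 hi)
    rw [phi_prefH n w hm]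
    by_cases hcase : lastMin n w < i
    · have := minH_lt_after n w hi' hcase
      rw [if_pos hcase]; omega
    · have := minH_le n w hi'
      rw [if_neg hcase]; omega

lemma phi_firstMin (hm : lastMin n w < n) :
    firstMin n (Function.update w ⟨lastMin n w, hm⟩ false) = lastMin n w + 1 := by
  set w' := Function.update w ⟨lastMin n w, hm⟩ false with hw'
  have hmin : minH n w' = minH n w - 1 := phi_minH n w hm
  have hattain : prefH n w' (lastMin n w + 1) = minH n w' := by
    rw [phi_prefH n w hm, prefH_lastMin_succ n w hm, if_pos (by omega), hmin]; ring
  have hle : firstMin n w' ≤ lastMin n w + 1 := firstMin_le n w' (by omega) hattain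
  have hge : lastMin n w + 1 ≤ firstMin n w' := by
    by_contra hlt
    push_neg at hlt
    have h1 : firstMin n w' ≤ lastMin n w := by omega
    have h2 : prefH n w' (firstMin n w') = minH n w' := prefH_firstMin n w'
    rw [phi_prefH n w hm, if_neg (by omega), hmin] at h2
    have := minH_le n w (i := firstMin n w') (by have := lastMin_le_n n w; omega)
    omega
  omega

lemma phi_endH (hm : lastMin n w < n) :
    endH n (Function.update w ⟨lastMin n w, hm⟩ false) = endH n w - 2 := by
  unfold endH
  rw [phi_prefH n w hm, if_pos hm]

-- ψ : flip the D-step entering the first minimum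
lemma psi_prefH (h1 : 1 ≤ firstMin n w) (hf : firstMin n w - 1 < n) (i : ℕ) :
    prefH n (Function.update w ⟨firstMin n w - 1, hf⟩ true) i
      = prefH n w i + (if firstMin n w - 1 < i then 2 else 0) :=
  prefH_flip_up n w _ (step_into_firstMin n w h1 hf).1 i

lemma psi_minH (h1 : 1 ≤ firstMin n w) (hf : firstMin n w - 1 < n) :
    minH n (Function.update w ⟨firstMin n w - 1, hf⟩ true) = minH n w + 1 := by
  set w' := Function.update w ⟨firstMin n w - 1, hf⟩ true with hw'
  apply le_antisymm
  · have h2 : prefH n w' (firstMin n w - 1) = minH n w + 1 := by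
      rw [psi_prefH n w h1 hf, if_neg (lt_irrefl _), (step_into_firstMin n w h1 hf).2]; ring
    have := minH_le n w' (i := firstMin n w - 1) (by have := firstMin_le_n n w; omega)
    omega
  · apply Finset.le_inf'
    intro i hi
    have hi' : i ≤ n := Nat.lt_succ_iff.1 (Finset.mem_range.1 hi)
    rw [psi_prefH n w h1 hf]
    by_cases hcase : firstMin n w - 1 < i
    · have := minH_le n w hi'
      rw [if_pos hcase]; omega
    · have := minH_lt_before n w hi' (by omega)
      rw [if_neg hcase]; omega

lemma psi_lastMin (h1 : 1 ≤ firstMin n w) (hf : firstMin n w - 1 < n) :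
    lastMin n (Function.update w ⟨firstMin n w - 1, hf⟩ true) = firstMin n w - 1 := by
  set w' := Function.update w ⟨firstMin n w - 1, hf⟩ true with hw'
  have hmin : minH n w' = minH n w + 1 := psi_minH n w h1 hf
  have hattain : prefH n w' (firstMin n w - 1) = minH n w' := by
    rw [psi_prefH n w h1 hf, if_neg (lt_irrefl _), (step_into_firstMin n w h1 hf).2, hmin]; ring
  have hle : firstMin n w - 1 ≤ lastMin n w' :=
    le_lastMin n w' (by have := firstMin_le_n n w; omega) hattain
  have hge : lastMin n w' ≤ firstMin n w - 1 := by
    by_contra hlt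
    push_neg at hlt
    have h2 : prefH n w' (lastMin n w') = minH n w' := prefH_lastMin n w'
    rw [psi_prefH n w h1 hf, if_pos hlt, hmin] at h2
    have := minH_le n w (i := lastMin n w') (lastMin_le_n n w')
    omega
  omega

lemma psi_endH (h1 : 1 ≤ firstMin n w) (hf : firstMin n w - 1 < n) :
    endH n (Function.update w ⟨firstMin n w - 1, hf⟩ true) = endH n w + 2 := by
  unfold endH
  rw [psi_prefH n w h1 hf, if_pos hf]

end flips

section peaks
variable (n : ℕ) (w : Fin n → Bool)

lemma stepv_eq' (i : ℕ) (h : i - 1 < n) : stepv n w i = w ⟨i-1, h⟩ := dif_pos h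

lemma stepv_update_ne (c : Fin n) (b : Bool) (i : ℕ) (hne : i - 1 ≠ (c:ℕ)) :
    stepv n (Function.update w c b) i = stepv n w i := by
  unfold stepv
  split_ifs with h
  · exact Function.update_of_ne (fun he => hne (congrArg Fin.val he)) _ _
  · rfl

lemma stepv_update_self (c : Fin n) (b : Bool) :
    stepv n (Function.update w c b) ((c:ℕ)+1) = b := by
  have h : (c:ℕ)+1-1 < n := by simpa using c.2
  rw [stepv_eq' n _ _ h,
    show (⟨(c:ℕ)+1-1, h⟩ : Fin n) = c from Fin.ext (by simp), Function.update_self]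

lemma phi_peak (hm : lastMin n w < n) :
    PeakUD n (Function.update w ⟨lastMin n w, hm⟩ false) = PeakUD n w := by
  set m := lastMin n w with hmdef
  unfold PeakUD
  apply Finset.filter_congr
  intro i hi
  rw [Finset.mem_Icc] at hi
  obtain ⟨hi1, hi2⟩ := hi
  by_cases hA : i = m + 1
  · subst hA
    have hL : stepv n (Function.update w ⟨m, hm⟩ false) (m+1) = false := by
      simpa using stepv_update_self n w ⟨m, hm⟩ false
    have hmn : m + 1 < n := by omega
    have hR : stepv n w (m+1+1) = true := by
      rw [stepv_eq' n w (m+1+1) (by simpa using hmn)]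
      simpa using step_after_succ_lastMin n w hmn
    rw [hL]; simp [hR]
  · by_cases hB : i = m
    · subst hB
      have h1m : 1 ≤ m := hi1
      have hmn : m - 1 < n := by omega
      have hstep : stepv n w m = false := by
        rw [stepv_eq' n w m hmn]
        exact step_before_lastMin n w h1m hmn
      have hL : stepv n (Function.update w ⟨m, hm⟩ false) m = stepv n w m :=
        stepv_update_ne n w _ _ _ (by simp only [Fin.val_mk]; omega)
      rw [hL]; simp [hstep]
    · have hL1 : stepv n (Function.update w ⟨m, hm⟩ false) i = stepv n w i :=
        stepv_update_ne n w _ _ _ (by simp only [Fin.val_mk]; omega)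
      have hL2 : stepv n (Function.update w ⟨m, hm⟩ false) (i+1) = stepv n w (i+1) :=
        stepv_update_ne n w _ _ _ (by simp only [Fin.val_mk]; omega)
      rw [hL1, hL2]

end peaks

noncomputable def phiMap (n : ℕ) (w : Fin n → Bool) : Fin n → Bool :=
  if h : lastMin n w < n then Function.update w ⟨lastMin n w, h⟩ false else w

noncomputable def psiMap (n : ℕ) (w : Fin n → Bool) : Fin n → Bool :=
  if h : firstMin n w - 1 < n then Function.update w ⟨firstMin n w - 1, h⟩ true else w

lemma phiMap_spec (n k : ℕ) (h2 : 2 * k ≤ n) (w : Fin n → Bool)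
    (hend : endH n w = (n:ℤ) - 2*k + 2) :
    endH n (phiMap n w) = (n:ℤ) - 2*k
      ∧ (∃ i ≤ n, prefH n (phiMap n w) i < 0)
      ∧ psiMap n (phiMap n w) = w
      ∧ PeakUD n (phiMap n w) = PeakUD n w := by
  have hcast : (2*k : ℤ) ≤ (n:ℤ) := by exact_mod_cast h2
  have hm : lastMin n w < n := by
    by_contra h
    have h1 : lastMin n w = n := le_antisymm (lastMin_le_n n w) (by omega)
    have h3 := minH_nonpos n w
    have h4 := prefH_lastMin n w
    rw [h1] at h4
    have : prefH n w n = endH n w := rfl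
    rw [this, hend] at h4
    omega
  have hphi : phiMap n w = Function.update w ⟨lastMin n w, hm⟩ false := dif_pos hm
  refine ⟨?_, ?_, ?_, ?_⟩
  · rw [hphi, phi_endH n w hm, hend]; ring
  · refine ⟨lastMin n w + 1, by omega, ?_⟩
    rw [hphi, phi_prefH n w hm, prefH_lastMin_succ n w hm, if_pos (by omega)]
    have := minH_nonpos n w
    omega
  · rw [hphi]
    have hf : firstMin n (Function.update w ⟨lastMin n w, hm⟩ false) = lastMin n w + 1 :=
      phi_firstMin n w hm
    unfold psiMap
    rw [hf]
    simp only [Nat.add_sub_cancel]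
    rw [dif_pos hm, Function.update_idem, ← step_at_lastMin n w hm, Function.update_eq_self]
  · rw [hphi]; exact phi_peak n w hm

lemma psiMap_spec (n k : ℕ) (w : Fin n → Bool)
    (hend : endH n w = (n:ℤ) - 2*k) (hdip : ∃ i ≤ n, prefH n w i < 0) :
    endH n (psiMap n w) = (n:ℤ) - 2*k + 2 ∧ phiMap n (psiMap n w) = w := by
  have hneg : minH n w < 0 := by
    obtain ⟨i, hi, hlt⟩ := hdip
    exact lt_of_le_of_lt (minH_le n w hi) hlt
  have h1 : 1 ≤ firstMin n w := firstMin_pos n w hneg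
  have hf : firstMin n w - 1 < n := by
    have := firstMin_le_n n w
    omega
  have hpsi : psiMap n w = Function.update w ⟨firstMin n w - 1, hf⟩ true := dif_pos hf
  constructor
  · rw [hpsi, psi_endH n w h1 hf, hend]
  · rw [hpsi]
    have hl : lastMin n (Function.update w ⟨firstMin n w - 1, hf⟩ true) = firstMin n w - 1 :=
      psi_lastMin n w h1 hf
    unfold phiMap
    rw [hl, dif_pos hf, Function.update_idem, ← (step_into_firstMin n w h1 hf).1,
      Function.update_eq_self]

/-- For `1 ≤ k ≤ n/2`, there is a peak-set-preserving bijection from the set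
`A_n^{n-2k+2}` of paths ending at height `n-2k+2` to the set `Q_n^{n-2k}` of paths
ending at height `n-2k` that go strictly below the x-axis at some point. -/
theorem stmt_10 (n k : ℕ) (hk : 1 ≤ k) (h2 : 2 * k ≤ n) :
    ∃ e : {w : Fin n → Bool // endH n w = (n : ℤ) - 2 * k + 2} ≃
        {w : Fin n → Bool // endH n w = (n : ℤ) - 2 * k ∧ ∃ i ≤ n, prefH n w i < 0},
      ∀ w, PeakUD n ((e w) : Fin n → Bool) = PeakUD n (w : Fin n → Bool) := by
  refine ⟨⟨fun p => ⟨phiMap n p.1, (phiMap_spec n k h2 p.1 p.2).1,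
      (phiMap_spec n k h2 p.1 p.2).2.1⟩,
    fun q => ⟨psiMap n q.1, (psiMap_spec n k q.1 q.2.1 q.2.2).1⟩,
    fun p => Subtype.ext (phiMap_spec n k h2 p.1 p.2).2.2.1,
    fun q => Subtype.ext (psiMap_spec n k q.1 q.2.1 q.2.2).2⟩,
    fun p => (phiMap_spec n k h2 p.1 p.2).2.2.2⟩
end

section
/- For 1 ≤ k ≤ n/2 and any I ⊆ {1,...,n-1}, the number of lattice paths with n steps U=(1,1) and D=(1,-1) that never go below the x-axis, end at height n-2k, and have peak set I equals the number of paths with n steps ending at height n-2k with peak set I minus the number of paths with n steps ending at height n-2k+2 with peak set I (all paths start at the origin, with no constraint about the x-axis in the latter two counts). -/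
namespace Stmt11

variable {n : ℕ}

lemma prefH_zero (w : Fin n → Bool) : prefH n w 0 = 0 := by
  simp [prefH, cntU]

lemma cntU_succ (w : Fin n → Bool) {i : ℕ} (hi : i < n) :
    cntU n w (i+1) = cntU n w i + (if w ⟨i, hi⟩ = true then 1 else 0) := by
  classical
  unfold cntU
  by_cases hw : w ⟨i, hi⟩ = true
  · rw [if_pos hw]
    have hset : (Finset.univ.filter (fun j : Fin n => (j:ℕ) < i+1 ∧ w j = true))
        = insert ⟨i,hi⟩ (Finset.univ.filter (fun j : Fin n => (j:ℕ) < i ∧ w j = true)) := by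
      ext j
      simp only [Finset.mem_filter, Finset.mem_insert, Finset.mem_univ, true_and]
      constructor
      · rintro ⟨hj, hwj⟩
        rcases Nat.lt_succ_iff_lt_or_eq.mp hj with h | h
        · exact Or.inr ⟨h, hwj⟩
        · exact Or.inl (Fin.ext h)
      · rintro (rfl | ⟨hj, hwj⟩)
        · exact ⟨Nat.lt_succ_self i, hw⟩
        · exact ⟨Nat.lt_succ_of_lt hj, hwj⟩
    rw [hset, Finset.card_insert_of_notMem (by simp)]
  · rw [if_neg hw, add_zero]
    congr 1
    ext j
    simp only [Finset.mem_filter, Finset.mem_univ, true_and]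
    constructor
    · rintro ⟨hj, hwj⟩
      rcases Nat.lt_succ_iff_lt_or_eq.mp hj with h | h
      · exact ⟨h, hwj⟩
      · exact absurd ((Fin.ext h : j = ⟨i,hi⟩) ▸ hwj) hw
    · rintro ⟨hj, hwj⟩
      exact ⟨Nat.lt_succ_of_lt hj, hwj⟩

lemma prefH_succ (w : Fin n → Bool) {i : ℕ} (hi : i < n) :
    prefH n w (i+1) = prefH n w i + (if w ⟨i, hi⟩ = true then 1 else -1) := by
  unfold prefH
  rw [cntU_succ w hi]
  push_cast
  split <;> ring

lemma prefH_succ_cases (w : Fin n → Bool) {i : ℕ} (hi : i < n) :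
    (w ⟨i, hi⟩ = true ∧ prefH n w (i+1) = prefH n w i + 1) ∨
    (w ⟨i, hi⟩ = false ∧ prefH n w (i+1) = prefH n w i - 1) := by
  have h := prefH_succ w hi
  by_cases hw : w ⟨i, hi⟩ = true
  · left; refine ⟨hw, ?_⟩; rw [h, if_pos hw]
  · right; refine ⟨Bool.eq_false_iff.mpr hw, ?_⟩; rw [h, if_neg hw]; ring

lemma cntU_update_false (w : Fin n → Bool) (j : Fin n) (hj : w j = true) (i : ℕ) :
    cntU n w i = cntU n (Function.update w j false) i + (if (j:ℕ) < i then 1 else 0) := by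
  classical
  unfold cntU
  by_cases hji : (j:ℕ) < i
  · rw [if_pos hji]
    have hset : (Finset.univ.filter (fun x : Fin n => (x:ℕ) < i ∧ w x = true))
        = insert j (Finset.univ.filter
            (fun x : Fin n => (x:ℕ) < i ∧ Function.update w j false x = true)) := by
      ext x
      simp only [Finset.mem_filter, Finset.mem_insert, Finset.mem_univ, true_and]
      by_cases hx : x = j
      · subst hx
        simp [hji, hj]
      · rw [Function.update_of_ne hx]
        tauto
    rw [hset, Finset.card_insert_of_notMem (by simp [Function.update_self])]
  · rw [if_neg hji, add_zero]
    congr 1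
    ext x
    simp only [Finset.mem_filter, Finset.mem_univ, true_and]
    by_cases hx : x = j
    · subst hx; simp [hji]
    · rw [Function.update_of_ne hx]

lemma prefH_update_false (w : Fin n → Bool) (j : Fin n) (hj : w j = true) (i : ℕ) :
    prefH n (Function.update w j false) i
      = prefH n w i - (if (j:ℕ) < i then 2 else 0) := by
  have h := cntU_update_false w j hj i
  unfold prefH
  have : (cntU n w i : ℤ)
      = (cntU n (Function.update w j false) i : ℤ) + (if (j:ℕ) < i then 1 else 0) := by
    rw [h]; push_cast; split <;> simp
  rw [this]
  split <;> ring

lemma prefH_update_true (w : Fin n → Bool) (j : Fin n) (hj : w j = false) (i : ℕ) :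
    prefH n (Function.update w j true) i
      = prefH n w i + (if (j:ℕ) < i then 2 else 0) := by
  have h1 : Function.update (Function.update w j true) j false = w := by
    rw [Function.update_idem, ← hj, Function.update_eq_self]
  have h2 := prefH_update_false (Function.update w j true) j (Function.update_self j true w) i
  rw [h1] at h2
  rw [h2]
  split <;> ring

lemma stepv_update_ne (w : Fin n → Bool) (jn : ℕ) (hjn : jn < n) (b : Bool) {i : ℕ}
    (hne : i - 1 ≠ jn) :
    stepv n (Function.update w ⟨jn, hjn⟩ b) i = stepv n w i := by
  unfold stepv
  split
  · apply Function.update_of_ne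
    intro hh
    exact hne (congrArg Fin.val hh)
  · rfl

lemma peak_update (w : Fin n → Bool) (jn : ℕ) (hjn : jn < n) (b : Bool)
    (hprev : ∀ (_ : 1 ≤ jn) (hlt : jn - 1 < n), w ⟨jn - 1, hlt⟩ = false)
    (hnext : ∀ (h2 : jn + 1 < n), w ⟨jn + 1, h2⟩ = true) :
    PeakUD n (Function.update w ⟨jn, hjn⟩ b) = PeakUD n w := by
  classical
  unfold PeakUD
  apply Finset.filter_congr
  intro p hp
  simp only [Finset.mem_Icc] at hp
  obtain ⟨hp1, hp2⟩ := hp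
  set w' := Function.update w ⟨jn, hjn⟩ b with hw'
  by_cases hcase1 : p = jn
  · -- first component is w[p-1]=w[jn-1]=false on both sides
    subst hcase1
    have h1 : 1 ≤ p := hp1
    have hlt : p - 1 < n := by omega
    have hv : stepv n w p = false := by
      unfold stepv
      rw [dif_pos hlt]
      exact hprev h1 hlt
    have hv' : stepv n w' p = false := by
      rw [stepv_update_ne w p hjn b (by omega)]
      exact hv
    simp [hv, hv']
  · by_cases hcase2 : p = jn + 1
    · -- second component is w[p] = w[jn+1] = true on both sides
      subst hcase2
      have hlt : jn + 1 < n := by omega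
      have hv : stepv n w (jn + 1 + 1) = true := by
        unfold stepv
        have heq : jn + 1 + 1 - 1 = jn + 1 := by omega
        rw [dif_pos (by omega : jn + 1 + 1 - 1 < n)]
        simp only [heq]
        exact hnext hlt
      have hv' : stepv n w' (jn + 1 + 1) = true := by
        rw [stepv_update_ne w jn hjn b (by omega)]
        exact hv
      simp [hv, hv']
    · have e1 : stepv n w' p = stepv n w p :=
        stepv_update_ne w jn hjn b (by omega)
      have e2 : stepv n w' (p+1) = stepv n w (p+1) :=
        stepv_update_ne w jn hjn b (by omega)
      rw [e1, e2]

/-- minimum value of `prefH` over `0..n` -/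
noncomputable def mv (n : ℕ) (w : Fin n → Bool) : ℤ :=
  (Finset.range (n+1)).inf' ⟨0, Finset.mem_range.mpr (Nat.succ_pos n)⟩ (prefH n w)

/-- set of argmins -/
noncomputable def AT (n : ℕ) (w : Fin n → Bool) : Finset ℕ :=
  (Finset.range (n+1)).filter (fun i => prefH n w i = mv n w)

lemma AT_nonempty (w : Fin n → Bool) : (AT n w).Nonempty := by
  classical
  obtain ⟨i, hi, hv⟩ := Finset.exists_mem_eq_inf'
    (⟨0, Finset.mem_range.mpr (Nat.succ_pos n)⟩ : (Finset.range (n+1)).Nonempty) (prefH n w)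
  exact ⟨i, Finset.mem_filter.mpr ⟨hi, hv.symm⟩⟩

noncomputable def tm (n : ℕ) (w : Fin n → Bool) : ℕ := (AT n w).max' (AT_nonempty w)
noncomputable def sm (n : ℕ) (w : Fin n → Bool) : ℕ := (AT n w).min' (AT_nonempty w)

lemma mv_le (w : Fin n → Bool) {i : ℕ} (hi : i ≤ n) : mv n w ≤ prefH n w i :=
  Finset.inf'_le _ (Finset.mem_range.mpr (Nat.lt_succ_of_le hi))

lemma mv_nonpos (w : Fin n → Bool) : mv n w ≤ 0 := by
  have := mv_le w (Nat.zero_le n)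
  rwa [prefH_zero] at this

lemma mem_AT_iff {w : Fin n → Bool} {i : ℕ} :
    i ∈ AT n w ↔ i ≤ n ∧ prefH n w i = mv n w := by
  classical
  simp [AT, Finset.mem_filter, Finset.mem_range, Nat.lt_succ_iff]

lemma tm_le (w : Fin n → Bool) : tm n w ≤ n := (mem_AT_iff.mp ((AT n w).max'_mem _)).1
lemma prefH_tm (w : Fin n → Bool) : prefH n w (tm n w) = mv n w :=
  (mem_AT_iff.mp ((AT n w).max'_mem _)).2
lemma le_tm (w : Fin n → Bool) {i : ℕ} (hi : i ≤ n) (hv : prefH n w i = mv n w) :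
    i ≤ tm n w := Finset.le_max' _ _ (mem_AT_iff.mpr ⟨hi, hv⟩)

lemma sm_le (w : Fin n → Bool) : sm n w ≤ n := (mem_AT_iff.mp ((AT n w).min'_mem _)).1
lemma prefH_sm (w : Fin n → Bool) : prefH n w (sm n w) = mv n w :=
  (mem_AT_iff.mp ((AT n w).min'_mem _)).2
lemma sm_le' (w : Fin n → Bool) {i : ℕ} (hi : i ≤ n) (hv : prefH n w i = mv n w) :
    sm n w ≤ i := Finset.min'_le _ _ (mem_AT_iff.mpr ⟨hi, hv⟩)

lemma mv_eq_of (w : Fin n → Bool) (c : ℤ) (hle : ∀ i ≤ n, c ≤ prefH n w i)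
    (i0 : ℕ) (h0 : i0 ≤ n) (hv : prefH n w i0 = c) : mv n w = c := by
  refine le_antisymm (hv ▸ mv_le w h0) ?_
  exact Finset.le_inf' _ _ (fun i hi => hle i (Nat.lt_succ_iff.mp (Finset.mem_range.mp hi)))

lemma tm_eq_of (w : Fin n → Bool) (i0 : ℕ) (h0 : i0 ≤ n) (hv : prefH n w i0 = mv n w)
    (hmax : ∀ i ≤ n, prefH n w i = mv n w → i ≤ i0) : tm n w = i0 :=
  le_antisymm (Finset.max'_le _ _ _ (fun i hi =>
      hmax i (mem_AT_iff.mp hi).1 (mem_AT_iff.mp hi).2))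
    (le_tm w h0 hv)

lemma sm_eq_of (w : Fin n → Bool) (i0 : ℕ) (h0 : i0 ≤ n) (hv : prefH n w i0 = mv n w)
    (hmin : ∀ i ≤ n, prefH n w i = mv n w → i0 ≤ i) : sm n w = i0 :=
  le_antisymm (sm_le' w h0 hv)
    (Finset.le_min' _ _ _ (fun i hi => hmin i (mem_AT_iff.mp hi).1 (mem_AT_iff.mp hi).2))

variable {w : Fin n → Bool}

lemma tm_lt (hend : mv n w < endH n w) : tm n w < n := by
  rcases Nat.lt_or_ge (tm n w) n with h | h
  · exact h
  · exfalso
    have h1 : tm n w = n := le_antisymm (tm_le w) h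
    have := prefH_tm w
    rw [h1] at this
    exact absurd (this ▸ hend) (lt_irrefl _)

lemma w_tm (hend : mv n w < endH n w) : ∀ (hlt : tm n w < n), w ⟨tm n w, hlt⟩ = true := by
  intro hlt
  rcases prefH_succ_cases w hlt with ⟨hb, _⟩ | ⟨hb, hval⟩
  · exact hb
  · exfalso
    have h1 : mv n w ≤ prefH n w (tm n w + 1) := mv_le w (by omega)
    rw [hval, prefH_tm w] at h1
    omega

lemma prefH_tm_succ (hend : mv n w < endH n w) : prefH n w (tm n w + 1) = mv n w + 1 := by
  have hlt := tm_lt hend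
  have := prefH_succ w hlt
  rw [w_tm hend hlt, if_pos rfl, prefH_tm w] at this
  exact this

lemma w_tm_prev : ∀ (_ : 1 ≤ tm n w) (hlt : tm n w - 1 < n), w ⟨tm n w - 1, hlt⟩ = false := by
  intro h1 hlt
  rcases prefH_succ_cases w hlt with ⟨hb, hval⟩ | ⟨hb, _⟩
  · exfalso
    have heq : tm n w - 1 + 1 = tm n w := by omega
    rw [heq, prefH_tm w] at hval
    have h2 : mv n w ≤ prefH n w (tm n w - 1) := mv_le w (by omega)
    omega
  · exact hb

lemma w_tm_next (hend : mv n w < endH n w) : ∀ (hlt : tm n w + 1 < n), w ⟨tm n w + 1, hlt⟩ = true := by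
  intro hlt
  rcases prefH_succ_cases w hlt with ⟨hb, _⟩ | ⟨hb, hval⟩
  · exact hb
  · exfalso
    rw [prefH_tm_succ hend] at hval
    have h2 : tm n w + 2 ≤ tm n w := le_tm w (by omega) (by rw [hval]; ring)
    omega

lemma sm_pos (hneg : mv n w ≤ -1) : 1 ≤ sm n w := by
  by_contra h
  have h0 : sm n w = 0 := by omega
  have := prefH_sm w
  rw [h0, prefH_zero] at this
  omega

lemma sm_lt (hneg : mv n w ≤ -1) (hend : mv n w < endH n w) : sm n w < n := by
  rcases Nat.lt_or_ge (sm n w) n with h | h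
  · exact h
  · exfalso
    have h1 : sm n w = n := le_antisymm (sm_le w) h
    have := prefH_sm w
    rw [h1] at this
    exact absurd (this ▸ hend) (lt_irrefl _)

lemma w_sm (hneg : mv n w ≤ -1) : ∀ (hlt : sm n w - 1 < n), w ⟨sm n w - 1, hlt⟩ = false := by
  intro hlt
  have h1 := sm_pos hneg
  rcases prefH_succ_cases w hlt with ⟨hb, hval⟩ | ⟨hb, _⟩
  · exfalso
    have heq : sm n w - 1 + 1 = sm n w := by omega
    rw [heq, prefH_sm w] at hval
    have h2 : mv n w ≤ prefH n w (sm n w - 1) := mv_le w (by omega)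
    omega
  · exact hb

lemma prefH_sm_pred (hneg : mv n w ≤ -1) : prefH n w (sm n w - 1) = mv n w + 1 := by
  have h1 := sm_pos hneg
  have hlt : sm n w - 1 < n := by have := sm_le w; omega
  have := prefH_succ w hlt
  rw [w_sm hneg hlt] at this
  simp only [Bool.false_eq_true, if_neg (by simp : ¬False)] at this
  have heq : sm n w - 1 + 1 = sm n w := by omega
  rw [heq, prefH_sm w] at this
  omega

lemma w_sm_prev (hneg : mv n w ≤ -1) : ∀ (_ : 1 ≤ sm n w - 1) (hlt : sm n w - 1 - 1 < n),
    w ⟨sm n w - 1 - 1, hlt⟩ = false := by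
  intro h1 hlt
  rcases prefH_succ_cases w hlt with ⟨hb, hval⟩ | ⟨hb, _⟩
  · exfalso
    have heq : sm n w - 1 - 1 + 1 = sm n w - 1 := by omega
    rw [heq, prefH_sm_pred hneg] at hval
    have h2 : mv n w ≤ prefH n w (sm n w - 1 - 1) := mv_le w (by omega)
    have h3 : prefH n w (sm n w - 1 - 1) = mv n w := by omega
    have h4 := sm_le' w (i := sm n w - 1 - 1) (by omega) h3
    omega
  · exact hb

lemma w_sm_next (hneg : mv n w ≤ -1) (hend : mv n w < endH n w) :
    ∀ (hlt : sm n w - 1 + 1 < n), w ⟨sm n w - 1 + 1, hlt⟩ = true := by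
  intro hlt
  have h1 := sm_pos hneg
  have heq : sm n w - 1 + 1 = sm n w := by omega
  rcases prefH_succ_cases w hlt with ⟨hb, _⟩ | ⟨hb, hval⟩
  · exact hb
  · exfalso
    rw [heq, prefH_sm w] at hval
    have h2 : mv n w ≤ prefH n w (sm n w + 1) := mv_le w (by omega)
    omega

noncomputable def Fm (n : ℕ) (w : Fin n → Bool) : Fin n → Bool :=
  if h : tm n w < n then Function.update w ⟨tm n w, h⟩ false else w

noncomputable def Gm (n : ℕ) (w : Fin n → Bool) : Fin n → Bool :=
  if h : sm n w - 1 < n then Function.update w ⟨sm n w - 1, h⟩ true else w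

variable {w : Fin n → Bool}

lemma prefH_Fm (hend : mv n w < endH n w) (i : ℕ) :
    prefH n (Fm n w) i = prefH n w i - (if tm n w < i then 2 else 0) := by
  have hlt := tm_lt hend
  unfold Fm
  rw [dif_pos hlt]
  exact prefH_update_false w ⟨tm n w, hlt⟩ (w_tm hend hlt) i

lemma endH_Fm (hend : mv n w < endH n w) : endH n (Fm n w) = endH n w - 2 := by
  have hlt := tm_lt hend
  have h := prefH_Fm hend n
  unfold endH
  rw [h, if_pos hlt]

lemma peak_Fm (hend : mv n w < endH n w) : PeakUD n (Fm n w) = PeakUD n w := by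
  have hlt := tm_lt hend
  unfold Fm
  rw [dif_pos hlt]
  exact peak_update w (tm n w) hlt false (w_tm_prev) (w_tm_next hend)

lemma mv_Fm (hend : mv n w < endH n w) : mv n (Fm n w) = mv n w - 1 := by
  have hlt := tm_lt hend
  refine mv_eq_of _ _ ?_ (tm n w + 1) (by omega) ?_
  · intro i hi
    rw [prefH_Fm hend i]
    by_cases hti : tm n w < i
    · rw [if_pos hti]
      have h1 : mv n w ≤ prefH n w i := mv_le w hi
      have h2 : prefH n w i ≠ mv n w := fun h => absurd (le_tm w hi h) (by omega)
      omega
    · rw [if_neg hti]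
      have := mv_le w hi
      omega
  · rw [prefH_Fm hend, if_pos (by omega), prefH_tm_succ hend]
    ring

lemma sm_Fm (hend : mv n w < endH n w) : sm n (Fm n w) = tm n w + 1 := by
  have hlt := tm_lt hend
  refine sm_eq_of _ (tm n w + 1) (by omega) ?_ ?_
  · rw [mv_Fm hend, prefH_Fm hend, if_pos (by omega), prefH_tm_succ hend]
    ring
  · intro i hi hv
    rw [mv_Fm hend, prefH_Fm hend i] at hv
    by_contra hcon
    push_neg at hcon
    rw [if_neg (by omega)] at hv
    have := mv_le w hi
    omega

lemma Gm_Fm (hend : mv n w < endH n w) : Gm n (Fm n w) = w := by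
  have hlt := tm_lt hend
  have hs := sm_Fm hend
  have hj : sm n (Fm n w) - 1 = tm n w := by rw [hs]; omega
  have hlt2 : sm n (Fm n w) - 1 < n := by rw [hj]; exact hlt
  have hGmF : Gm n (Fm n w) = Function.update (Fm n w) ⟨sm n (Fm n w) - 1, hlt2⟩ true :=
    dif_pos hlt2
  have hFm : Fm n w = Function.update w ⟨tm n w, hlt⟩ false := dif_pos hlt
  rw [hGmF]
  simp only [hj]
  show Function.update (Fm n w) ⟨tm n w, hlt⟩ true = w
  rw [hFm, Function.update_idem]
  calc Function.update w ⟨tm n w, hlt⟩ true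
      = Function.update w ⟨tm n w, hlt⟩ (w ⟨tm n w, hlt⟩) := by rw [w_tm hend hlt]
    _ = w := Function.update_eq_self _ _

lemma sm_sub_one_lt (hneg : mv n w ≤ -1) : sm n w - 1 < n := by
  have h1 := sm_pos hneg
  have h2 := sm_le w
  omega

lemma prefH_Gm (hneg : mv n w ≤ -1) (i : ℕ) :
    prefH n (Gm n w) i = prefH n w i + (if sm n w - 1 < i then 2 else 0) := by
  have hlt := sm_sub_one_lt hneg
  unfold Gm
  rw [dif_pos hlt]
  exact prefH_update_true w ⟨sm n w - 1, hlt⟩ (w_sm hneg hlt) i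

lemma endH_Gm (hneg : mv n w ≤ -1) : endH n (Gm n w) = endH n w + 2 := by
  have hlt := sm_sub_one_lt hneg
  have h := prefH_Gm hneg n
  unfold endH
  rw [h, if_pos hlt]

lemma peak_Gm (hneg : mv n w ≤ -1) (hend : mv n w < endH n w) :
    PeakUD n (Gm n w) = PeakUD n w := by
  have hlt := sm_sub_one_lt hneg
  unfold Gm
  rw [dif_pos hlt]
  exact peak_update w (sm n w - 1) hlt true (w_sm_prev hneg) (w_sm_next hneg hend)

lemma mv_Gm (hneg : mv n w ≤ -1) : mv n (Gm n w) = mv n w + 1 := by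
  have h1 := sm_pos hneg
  have h2 := sm_le w
  refine mv_eq_of _ _ ?_ (sm n w - 1) (by omega) ?_
  · intro i hi
    rw [prefH_Gm hneg i]
    by_cases hti : sm n w - 1 < i
    · rw [if_pos hti]
      have := mv_le w hi
      omega
    · rw [if_neg hti]
      have h3 : mv n w ≤ prefH n w i := mv_le w hi
      have h4 : prefH n w i ≠ mv n w := fun h => absurd (sm_le' w hi h) (by omega)
      omega
  · rw [prefH_Gm hneg, if_neg (by omega), prefH_sm_pred hneg]
    ring

lemma tm_Gm (hneg : mv n w ≤ -1) : tm n (Gm n w) = sm n w - 1 := by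
  have h1 := sm_pos hneg
  have h2 := sm_le w
  refine tm_eq_of _ (sm n w - 1) (by omega) ?_ ?_
  · rw [mv_Gm hneg, prefH_Gm hneg, if_neg (by omega), prefH_sm_pred hneg]
    ring
  · intro i hi hv
    rw [mv_Gm hneg, prefH_Gm hneg i] at hv
    by_contra hcon
    push_neg at hcon
    rw [if_pos (by omega)] at hv
    have := mv_le w hi
    omega

lemma Fm_Gm (hneg : mv n w ≤ -1) : Fm n (Gm n w) = w := by
  have hlt := sm_sub_one_lt hneg
  have ht := tm_Gm hneg
  have hlt2 : tm n (Gm n w) < n := by rw [ht]; exact hlt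
  have hFmG : Fm n (Gm n w) = Function.update (Gm n w) ⟨tm n (Gm n w), hlt2⟩ false :=
    dif_pos hlt2
  have hGm : Gm n w = Function.update w ⟨sm n w - 1, hlt⟩ true := dif_pos hlt
  rw [hFmG]
  simp only [ht]
  show Function.update (Gm n w) ⟨sm n w - 1, hlt⟩ false = w
  rw [hGm, Function.update_idem]
  calc Function.update w ⟨sm n w - 1, hlt⟩ false
      = Function.update w ⟨sm n w - 1, hlt⟩ (w ⟨sm n w - 1, hlt⟩) := by
        rw [w_sm hneg hlt]
    _ = w := Function.update_eq_self _ _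

end Stmt11

/-- For `1 ≤ k ≤ n/2` and `I ⊆ {1,…,n-1}`: the number of `n`-step U/D paths never going
below the x-axis, ending at height `n-2k`, with peak set `I`, equals the number of `n`-step
paths ending at height `n-2k` with peak set `I` minus the number of `n`-step paths ending
at height `n-2k+2` with peak set `I`. -/
theorem stmt_11 (n k : ℕ) (hk : 1 ≤ k) (h2 : 2 * k ≤ n)
    (I : Finset ℕ) (hI : I ⊆ Finset.Icc 1 (n - 1)) :
    (((Finset.univ : Finset (Fin n → Bool)).filter
        (fun w => endH n w = (n : ℤ) - 2 * k ∧ (∀ i ≤ n, 0 ≤ prefH n w i) ∧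
          PeakUD n w = I)).card : ℤ) =
    (((Finset.univ : Finset (Fin n → Bool)).filter
        (fun w => endH n w = (n : ℤ) - 2 * k ∧ PeakUD n w = I)).card : ℤ) -
    (((Finset.univ : Finset (Fin n → Bool)).filter
        (fun w => endH n w = (n : ℤ) - 2 * k + 2 ∧ PeakUD n w = I)).card : ℤ) := by
  classical
  have hk2 : (0:ℤ) ≤ (n:ℤ) - 2*k := by
    have : ((2*k : ℕ) : ℤ) ≤ (n : ℤ) := Int.ofNat_le.mpr h2
    push_cast at this
    linarith
  -- the bijection between paths ending at n-2k+2 and "bad" paths ending at n-2k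
  have hbij :
      ((Finset.univ : Finset (Fin n → Bool)).filter
        (fun w => endH n w = (n : ℤ) - 2 * k + 2 ∧ PeakUD n w = I)).card =
      ((Finset.univ : Finset (Fin n → Bool)).filter
        (fun w => (endH n w = (n : ℤ) - 2 * k ∧ PeakUD n w = I) ∧
          ¬ (∀ i ≤ n, 0 ≤ prefH n w i))).card := by
    apply Finset.card_nbij' (Stmt11.Fm n) (Stmt11.Gm n)
    · intro w hw
      simp only [Finset.mem_coe, Finset.mem_filter, Finset.mem_univ, true_and] at hw ⊢
      obtain ⟨hw1, hw2⟩ := hw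
      have hend : Stmt11.mv n w < endH n w := by
        have := Stmt11.mv_nonpos w
        rw [hw1]; linarith
      refine ⟨⟨?_, ?_⟩, ?_⟩
      · rw [Stmt11.endH_Fm hend, hw1]; ring
      · rw [Stmt11.peak_Fm hend]; exact hw2
      · intro hNN
        have hlt := Stmt11.tm_lt hend
        have h3 := hNN (Stmt11.tm n w + 1) (by omega)
        rw [Stmt11.prefH_Fm hend, if_pos (by omega), Stmt11.prefH_tm_succ hend] at h3
        have := Stmt11.mv_nonpos w
        linarith
    · intro w hw
      simp only [Finset.mem_coe, Finset.mem_filter, Finset.mem_univ, true_and] at hw ⊢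
      obtain ⟨⟨hw1, hw2⟩, hw3⟩ := hw
      push_neg at hw3
      obtain ⟨i, hi, hvi⟩ := hw3
      have hneg : Stmt11.mv n w ≤ -1 := by
        have := Stmt11.mv_le w hi
        omega
      have hend : Stmt11.mv n w < endH n w := by
        rw [hw1]; linarith
      refine ⟨?_, ?_⟩
      · rw [Stmt11.endH_Gm hneg, hw1]
      · rw [Stmt11.peak_Gm hneg hend]; exact hw2
    · intro w hw
      simp only [Finset.mem_coe, Finset.mem_filter, Finset.mem_univ, true_and] at hw
      obtain ⟨hw1, hw2⟩ := hw
      have hend : Stmt11.mv n w < endH n w := by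
        have := Stmt11.mv_nonpos w
        rw [hw1]; linarith
      exact Stmt11.Gm_Fm hend
    · intro w hw
      simp only [Finset.mem_coe, Finset.mem_filter, Finset.mem_univ, true_and] at hw
      obtain ⟨⟨hw1, hw2⟩, hw3⟩ := hw
      push_neg at hw3
      obtain ⟨i, hi, hvi⟩ := hw3
      have hneg : Stmt11.mv n w ≤ -1 := by
        have := Stmt11.mv_le w hi
        omega
      exact Stmt11.Fm_Gm hneg
  -- split the unconstrained count into good + bad
  have hsplit := Finset.card_filter_add_card_filter_not
      (s := (Finset.univ : Finset (Fin n → Bool)).filter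
        (fun w => endH n w = (n : ℤ) - 2 * k ∧ PeakUD n w = I))
      (fun w => ∀ i ≤ n, 0 ≤ prefH n w i)
  rw [Finset.filter_filter, Finset.filter_filter] at hsplit
  have e1 : ((Finset.univ : Finset (Fin n → Bool)).filter
      (fun w => (endH n w = (n : ℤ) - 2 * k ∧ PeakUD n w = I) ∧ (∀ i ≤ n, 0 ≤ prefH n w i)))
      = ((Finset.univ : Finset (Fin n → Bool)).filter
        (fun w => endH n w = (n : ℤ) - 2 * k ∧ (∀ i ≤ n, 0 ≤ prefH n w i) ∧
          PeakUD n w = I)) := by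
    apply Finset.filter_congr
    intro w _
    tauto
  rw [e1] at hsplit
  rw [hbij]
  omega
end

section
/- Let λ/μ be a skew shape with n cells, let c be the maximum length of a column of λ/μ and r the maximum length of a row. Then the minimum of |Des(T)| over all standard Young tableaux T of shape λ/μ equals c − 1, and the maximum equals n − r. In particular (c−1) + (r−1) ≤ n − 1. -/
open Finset

/-- The cells of the skew shape `λ/μ`. -/
def skewCells (lam mu : YoungDiagram) : Finset (ℕ × ℕ) := lam.cells \ mu.cells

/-- A standard Young tableau of skew shape `λ/μ` with `n` cells: a bijective filling of the
cells by `0,…,n-1` (entries are read as the values plus one, i.e. `1,…,n`), strictly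
increasing along rows and down columns. Cells are `(row, column)` pairs, rows increasing
downwards. -/
def IsSkewSYT (lam mu : YoungDiagram)
    (T : {c // c ∈ skewCells lam mu} → Fin (skewCells lam mu).card) : Prop :=
  Function.Bijective T ∧
  (∀ c c' : {c // c ∈ skewCells lam mu}, (c : ℕ × ℕ).1 = (c' : ℕ × ℕ).1 →
      (c : ℕ × ℕ).2 < (c' : ℕ × ℕ).2 → T c < T c') ∧
  (∀ c c' : {c // c ∈ skewCells lam mu}, (c : ℕ × ℕ).2 = (c' : ℕ × ℕ).2 →
      (c : ℕ × ℕ).1 < (c' : ℕ × ℕ).1 → T c < T c')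

/-- The type of standard Young tableaux of skew shape `λ/μ`. -/
def SkewSYT (lam mu : YoungDiagram) :=
  {T : {c // c ∈ skewCells lam mu} → Fin (skewCells lam mu).card // IsSkewSYT lam mu T}

/-- Descent set of a skew SYT: `Des(T) = {i ∈ {1,…,n-1} : i+1 lies in a strictly lower row
than i}` (the entry in cell `c` is `(T c : ℕ) + 1`). -/
def DesT (lam mu : YoungDiagram) (T : SkewSYT lam mu) : Finset ℕ :=
  (Finset.Icc 1 ((skewCells lam mu).card - 1)).filter
    (fun i => ∃ c c' : {c // c ∈ skewCells lam mu},
      ((T.1 c : ℕ) + 1 = i) ∧ ((T.1 c' : ℕ) + 1 = i + 1) ∧ (c : ℕ × ℕ).1 < (c' : ℕ × ℕ).1)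

/-- The maximum length of a column of `λ/μ`. -/
def colMax (lam mu : YoungDiagram) : ℕ :=
  (skewCells lam mu).sup
    (fun p => ((skewCells lam mu).filter (fun q => q.2 = p.2)).card)

/-- The maximum length of a row of `λ/μ`. -/
def rowMax (lam mu : YoungDiagram) : ℕ :=
  (skewCells lam mu).sup
    (fun p => ((skewCells lam mu).filter (fun q => q.1 = p.1)).card)

namespace SkewProof

variable {lam mu : YoungDiagram}

lemma mem_skew_col {p : ℕ × ℕ} :
    p ∈ skewCells lam mu ↔ mu.colLen p.2 ≤ p.1 ∧ p.1 < lam.colLen p.2 := by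
  cases p with
  | mk a b =>
    simp only [skewCells, Finset.mem_sdiff, YoungDiagram.mem_cells,
      YoungDiagram.mem_iff_lt_colLen]
    omega

lemma mem_skew_row {p : ℕ × ℕ} :
    p ∈ skewCells lam mu ↔ mu.rowLen p.1 ≤ p.2 ∧ p.2 < lam.rowLen p.1 := by
  cases p with
  | mk a b =>
    simp only [skewCells, Finset.mem_sdiff, YoungDiagram.mem_cells,
      YoungDiagram.mem_iff_lt_rowLen]
    omega

lemma col_card (b : ℕ) :
    ((skewCells lam mu).filter fun q => q.2 = b).card = lam.colLen b - mu.colLen b := by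
  have h : ((skewCells lam mu).filter fun q => q.2 = b)
      = (Finset.Ico (mu.colLen b) (lam.colLen b)).image (fun a => (a, b)) := by
    ext ⟨x, y⟩
    simp only [Finset.mem_filter, Finset.mem_image, Finset.mem_Ico, mem_skew_col]
    constructor
    · rintro ⟨⟨h1, h2⟩, rfl⟩
      exact ⟨x, ⟨h1, h2⟩, rfl⟩
    · rintro ⟨a, ⟨h1, h2⟩, h3⟩
      cases h3
      exact ⟨⟨h1, h2⟩, rfl⟩
  rw [h, Finset.card_image_of_injective _ (fun a a' h => by simpa using h), Nat.card_Ico]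

lemma row_card (a : ℕ) :
    ((skewCells lam mu).filter fun q => q.1 = a).card = lam.rowLen a - mu.rowLen a := by
  have h : ((skewCells lam mu).filter fun q => q.1 = a)
      = (Finset.Ico (mu.rowLen a) (lam.rowLen a)).image (fun b => (a, b)) := by
    ext ⟨x, y⟩
    simp only [Finset.mem_filter, Finset.mem_image, Finset.mem_Ico, mem_skew_row]
    constructor
    · rintro ⟨⟨h1, h2⟩, rfl⟩
      exact ⟨y, ⟨h1, h2⟩, rfl⟩
    · rintro ⟨c, ⟨h1, h2⟩, h3⟩
      cases h3
      exact ⟨⟨h1, h2⟩, rfl⟩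
  rw [h, Finset.card_image_of_injective _ (fun c c' h => by simpa using h), Nat.card_Ico]

lemma sup_id_mem {s : Finset ℕ} (h : s.Nonempty) : s.sup id ∈ s := by
  obtain ⟨b, hb, he⟩ := Finset.exists_mem_eq_sup s h id
  rw [he]; exact hb

lemma exists_descent (T : SkewSYT lam mu) (k : ℕ) :
    ∀ u v : {c // c ∈ skewCells lam mu}, (T.1 v : ℕ) - (T.1 u : ℕ) ≤ k →
    (u : ℕ × ℕ).1 < (v : ℕ × ℕ).1 → (T.1 u : ℕ) < (T.1 v : ℕ) →
    ∃ i ∈ DesT lam mu T, (T.1 u : ℕ) + 1 ≤ i ∧ i ≤ (T.1 v : ℕ) := by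
  induction k with
  | zero => intro u v hk hr hlt; omega
  | succ k ih =>
    intro u v hk hr hlt
    have hvn := (T.1 v).2
    have hcard : (T.1 u : ℕ) + 1 < (skewCells lam mu).card := by omega
    obtain ⟨w, hw⟩ := T.2.1.2 ⟨(T.1 u : ℕ) + 1, hcard⟩
    have hTw : (T.1 w : ℕ) = (T.1 u : ℕ) + 1 := by rw [hw]
    by_cases hrw : (u : ℕ × ℕ).1 < (w : ℕ × ℕ).1
    · refine ⟨(T.1 u : ℕ) + 1, ?_, le_refl _, hlt⟩
      rw [DesT, Finset.mem_filter, Finset.mem_Icc]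
      exact ⟨⟨by omega, by omega⟩, u, w, rfl, by omega, hrw⟩
    · have hne : w ≠ v := by
        intro h; subst h; omega
      have hlt' : (T.1 w : ℕ) < (T.1 v : ℕ) := by
        have h1 : T.1 w ≠ T.1 v := fun h => hne (T.2.1.1 h)
        have h2 : (T.1 w : ℕ) ≠ (T.1 v : ℕ) := fun h => h1 (Fin.ext h)
        omega
      obtain ⟨i, hi, h1, h2⟩ := ih w v (by omega) (by omega) hlt'
      exact ⟨i, hi, by omega, h2⟩

lemma exists_nondescent (T : SkewSYT lam mu) (k : ℕ) :
    ∀ u v : {c // c ∈ skewCells lam mu}, (T.1 v : ℕ) - (T.1 u : ℕ) ≤ k →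
    (v : ℕ × ℕ).1 ≤ (u : ℕ × ℕ).1 → (T.1 u : ℕ) < (T.1 v : ℕ) →
    ∃ i ∈ (Finset.Icc 1 ((skewCells lam mu).card - 1)) \ DesT lam mu T,
      (T.1 u : ℕ) + 1 ≤ i ∧ i ≤ (T.1 v : ℕ) := by
  induction k with
  | zero => intro u v hk hr hlt; omega
  | succ k ih =>
    intro u v hk hr hlt
    have hvn := (T.1 v).2
    have hcard : (T.1 u : ℕ) + 1 < (skewCells lam mu).card := by omega
    obtain ⟨w, hw⟩ := T.2.1.2 ⟨(T.1 u : ℕ) + 1, hcard⟩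
    have hTw : (T.1 w : ℕ) = (T.1 u : ℕ) + 1 := by rw [hw]
    by_cases hrw : (u : ℕ × ℕ).1 < (w : ℕ × ℕ).1
    · have hne : w ≠ v := by
        intro h; subst h; omega
      have hlt' : (T.1 w : ℕ) < (T.1 v : ℕ) := by
        have h1 : T.1 w ≠ T.1 v := fun h => hne (T.2.1.1 h)
        have h2 : (T.1 w : ℕ) ≠ (T.1 v : ℕ) := fun h => h1 (Fin.ext h)
        omega
      obtain ⟨i, hi, h1, h2⟩ := ih w v (by omega) (by omega) hlt'
      exact ⟨i, hi, by omega, h2⟩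
    · refine ⟨(T.1 u : ℕ) + 1, ?_, le_refl _, hlt⟩
      rw [Finset.mem_sdiff, Finset.mem_Icc]
      refine ⟨⟨by omega, by omega⟩, ?_⟩
      rw [DesT, Finset.mem_filter]
      rintro ⟨-, c, c', hc, hc', hrow⟩
      have hcu : c = u := T.2.1.1 (Fin.ext (by omega : (T.1 c : ℕ) = (T.1 u : ℕ)))
      have hcw : c' = w := T.2.1.1 (Fin.ext (by omega : (T.1 c' : ℕ) = (T.1 w : ℕ)))
      subst hcu; subst hcw
      exact hrw hrow

lemma col_bound (T : SkewSYT lam mu) (p : ℕ × ℕ) (hp : p ∈ skewCells lam mu) :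
    lam.colLen p.2 - mu.colLen p.2 ≤ (DesT lam mu T).card + 1 := by
  set D := DesT lam mu T with hD
  set b := p.2
  set L := mu.colLen b with hL
  set K := lam.colLen b with hK
  have hcell : ∀ a, L ≤ a → a < K → (a, b) ∈ skewCells lam mu := fun a h1 h2 =>
    mem_skew_col.2 ⟨h1, h2⟩
  let val : ℕ → ℕ := fun a =>
    if h : (a, b) ∈ skewCells lam mu then (T.1 ⟨(a, b), h⟩ : ℕ) else 0
  have hval : ∀ a (h : (a, b) ∈ skewCells lam mu), val a = (T.1 ⟨(a, b), h⟩ : ℕ) :=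
    fun a h => dif_pos h
  have hmono : ∀ a a', L ≤ a → a < a' → a' < K → val a < val a' := by
    intro a a' h1 h2 h3
    have ha := hcell a h1 (by omega)
    have ha' := hcell a' (by omega) h3
    rw [hval a ha, hval a' ha']
    exact_mod_cast T.2.2.2 ⟨(a, b), ha⟩ ⟨(a', b), ha'⟩ rfl h2
  have hwit : ∀ a, L + 1 ≤ a → a < K → ∃ i ∈ D, val (a - 1) + 1 ≤ i ∧ i ≤ val a := by
    intro a h1 h2
    have ha1 := hcell (a - 1) (by omega) (by omega)
    have ha := hcell a (by omega) h2
    obtain ⟨i, hi, hi1, hi2⟩ := exists_descent T (skewCells lam mu).card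
      ⟨(a - 1, b), ha1⟩ ⟨(a, b), ha⟩ (by have := (T.1 ⟨(a, b), ha⟩).2; omega)
      (by simp; omega) (by
        have := hmono (a - 1) a (by omega) (by omega) h2
        rw [hval _ ha1, hval _ ha] at this; exact this)
    exact ⟨i, hi, by rw [hval _ ha1]; exact hi1, by rw [hval _ ha]; exact hi2⟩
  let f : ℕ → ℕ := fun a => (D.filter (· ≤ val a)).sup id
  have hfne : ∀ a, L + 1 ≤ a → a < K → (D.filter (· ≤ val a)).Nonempty := by
    intro a h1 h2
    obtain ⟨i, hi, _, hi2⟩ := hwit a h1 h2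
    exact ⟨i, Finset.mem_filter.2 ⟨hi, hi2⟩⟩
  have hfmem : ∀ a, L + 1 ≤ a → a < K → f a ∈ D := by
    intro a h1 h2
    have := sup_id_mem (hfne a h1 h2)
    exact (Finset.mem_filter.1 this).1
  have hfle : ∀ a, f a ≤ val a := by
    intro a
    apply Finset.sup_le
    intro i hi
    exact (Finset.mem_filter.1 hi).2
  have hflt : ∀ a a', L + 1 ≤ a → a < a' → a' < K → f a < f a' := by
    intro a a' h1 h2 h3
    obtain ⟨i, hi, hi1, hi2⟩ := hwit a' (by omega) h3
    have h4 : val a ≤ val (a' - 1) := by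
      rcases Nat.lt_or_ge a (a' - 1) with h | h
      · exact le_of_lt (hmono a (a' - 1) (by omega) h (by omega))
      · have : a = a' - 1 := by omega
        rw [this]
    have h5 : i ≤ f a' := Finset.le_sup (f := id) (Finset.mem_filter.2 ⟨hi, hi2⟩)
    have := hfle a
    omega
  have key : (Finset.Ico (L + 1) K).card ≤ D.card := by
    apply Finset.card_le_card_of_injOn f
    · intro a ha
      rw [Finset.mem_coe, Finset.mem_Ico] at ha
      exact hfmem a ha.1 ha.2
    · intro a ha a' ha' heq
      rw [Finset.mem_coe, Finset.mem_Ico] at ha ha'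
      by_contra hne
      rcases Nat.lt_or_ge a a' with h | h
      · exact absurd heq (Nat.ne_of_lt (hflt a a' ha.1 h ha'.2))
      · have h' : a' < a := by omega
        exact absurd heq.symm (Nat.ne_of_lt (hflt a' a ha'.1 h' ha.2))
  rw [Nat.card_Ico] at key
  omega

lemma card_des_lower (T : SkewSYT lam mu) :
    colMax lam mu - 1 ≤ (DesT lam mu T).card := by
  have h : colMax lam mu ≤ (DesT lam mu T).card + 1 := by
    apply Finset.sup_le
    intro p hp
    rw [col_card]
    exact col_bound T p hp
  omega

lemma row_bound (T : SkewSYT lam mu) (p : ℕ × ℕ) (hp : p ∈ skewCells lam mu) :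
    lam.rowLen p.1 - mu.rowLen p.1 ≤
      ((Finset.Icc 1 ((skewCells lam mu).card - 1)) \ DesT lam mu T).card + 1 := by
  set D := (Finset.Icc 1 ((skewCells lam mu).card - 1)) \ DesT lam mu T with hD
  set a := p.1
  set L := mu.rowLen a with hL
  set K := lam.rowLen a with hK
  have hcell : ∀ b, L ≤ b → b < K → (a, b) ∈ skewCells lam mu := fun b h1 h2 =>
    mem_skew_row.2 ⟨h1, h2⟩
  let val : ℕ → ℕ := fun b =>
    if h : (a, b) ∈ skewCells lam mu then (T.1 ⟨(a, b), h⟩ : ℕ) else 0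
  have hval : ∀ b (h : (a, b) ∈ skewCells lam mu), val b = (T.1 ⟨(a, b), h⟩ : ℕ) :=
    fun b h => dif_pos h
  have hmono : ∀ b b', L ≤ b → b < b' → b' < K → val b < val b' := by
    intro b b' h1 h2 h3
    have hb := hcell b h1 (by omega)
    have hb' := hcell b' (by omega) h3
    rw [hval b hb, hval b' hb']
    exact_mod_cast T.2.2.1 ⟨(a, b), hb⟩ ⟨(a, b'), hb'⟩ rfl h2
  have hwit : ∀ b, L + 1 ≤ b → b < K → ∃ i ∈ D, val (b - 1) + 1 ≤ i ∧ i ≤ val b := by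
    intro b h1 h2
    have hb1 := hcell (b - 1) (by omega) (by omega)
    have hb := hcell b (by omega) h2
    obtain ⟨i, hi, hi1, hi2⟩ := exists_nondescent T (skewCells lam mu).card
      ⟨(a, b - 1), hb1⟩ ⟨(a, b), hb⟩ (by have := (T.1 ⟨(a, b), hb⟩).2; omega)
      (by simp) (by
        have := hmono (b - 1) b (by omega) (by omega) h2
        rw [hval _ hb1, hval _ hb] at this; exact this)
    exact ⟨i, hi, by rw [hval _ hb1]; exact hi1, by rw [hval _ hb]; exact hi2⟩
  let f : ℕ → ℕ := fun b => (D.filter (· ≤ val b)).sup id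
  have hfne : ∀ b, L + 1 ≤ b → b < K → (D.filter (· ≤ val b)).Nonempty := by
    intro b h1 h2
    obtain ⟨i, hi, _, hi2⟩ := hwit b h1 h2
    exact ⟨i, Finset.mem_filter.2 ⟨hi, hi2⟩⟩
  have hfmem : ∀ b, L + 1 ≤ b → b < K → f b ∈ D := by
    intro b h1 h2
    have := sup_id_mem (hfne b h1 h2)
    exact (Finset.mem_filter.1 this).1
  have hfle : ∀ b, f b ≤ val b := by
    intro b
    apply Finset.sup_le
    intro i hi
    exact (Finset.mem_filter.1 hi).2
  have hflt : ∀ b b', L + 1 ≤ b → b < b' → b' < K → f b < f b' := by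
    intro b b' h1 h2 h3
    obtain ⟨i, hi, hi1, hi2⟩ := hwit b' (by omega) h3
    have h4 : val b ≤ val (b' - 1) := by
      rcases Nat.lt_or_ge b (b' - 1) with h | h
      · exact le_of_lt (hmono b (b' - 1) (by omega) h (by omega))
      · have : b = b' - 1 := by omega
        rw [this]
    have h5 : i ≤ f b' := Finset.le_sup (f := id) (Finset.mem_filter.2 ⟨hi, hi2⟩)
    have := hfle b
    omega
  have key : (Finset.Ico (L + 1) K).card ≤ D.card := by
    apply Finset.card_le_card_of_injOn f
    · intro b hb
      rw [Finset.mem_coe, Finset.mem_Ico] at hb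
      exact hfmem b hb.1 hb.2
    · intro b hb b' hb' heq
      rw [Finset.mem_coe, Finset.mem_Ico] at hb hb'
      by_contra hne
      rcases Nat.lt_or_ge b b' with h | h
      · exact absurd heq (Nat.ne_of_lt (hflt b b' hb.1 h hb'.2))
      · have h' : b' < b := by omega
        exact absurd heq.symm (Nat.ne_of_lt (hflt b' b hb'.1 h' hb.2))
  rw [Nat.card_Ico] at key
  omega

lemma card_des_upper (T : SkewSYT lam mu) :
    (DesT lam mu T).card ≤ (skewCells lam mu).card - rowMax lam mu := by
  set n := (skewCells lam mu).card with hn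
  set D := DesT lam mu T with hDdef
  set ND := (Finset.Icc 1 (n - 1)) \ D with hND
  have hsub : D ⊆ Finset.Icc 1 (n - 1) := Finset.filter_subset _ _
  have hcards : ND.card = (n - 1) - D.card := by
    rw [hND, Finset.card_sdiff_of_subset hsub, Nat.card_Icc]; omega
  have hDle : D.card ≤ n - 1 := by
    have := Finset.card_le_card hsub
    rwa [Nat.card_Icc] at this
  have hr : rowMax lam mu ≤ ND.card + 1 := by
    apply Finset.sup_le
    intro p hp
    rw [row_card]
    exact row_bound T p hp
  omega

lemma lex3 {N a b c a' b' c' : ℕ} (hb : b < N) (hc : c < N) (hc' : c' < N)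
    (h : a < a' ∨ (a = a' ∧ (b < b' ∨ (b = b' ∧ c < c')))) :
    a * (N * N) + b * N + c < a' * (N * N) + b' * N + c' := by
  rcases h with h | ⟨rfl, h | ⟨rfl, h⟩⟩
  · have h1 : b * N + c < N * N := by
      calc b * N + c < b * N + N := by omega
        _ = (b + 1) * N := by ring
        _ ≤ N * N := Nat.mul_le_mul_right N (by omega)
    have h2 : a * (N * N) + (N * N) ≤ a' * (N * N) := by
      calc a * (N * N) + (N * N) = (a + 1) * (N * N) := by ring
        _ ≤ a' * (N * N) := Nat.mul_le_mul_right _ (by omega)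
    omega
  · have h1 : b * N + c < b' * N := by
      calc b * N + c < b * N + N := by omega
        _ = (b + 1) * N := by ring
        _ ≤ b' * N := Nat.mul_le_mul_right N (by omega)
    omega
  · omega

noncomputable def mkT (lam mu : YoungDiagram) (key : ℕ × ℕ → ℕ)
    (hinj : ∀ p ∈ skewCells lam mu, ∀ q ∈ skewCells lam mu, key p = key q → p = q) :
    {c // c ∈ skewCells lam mu} → Fin (skewCells lam mu).card :=
  fun p =>
    ((skewCells lam mu).image key).orderIsoOfFin
      (by rw [Finset.card_image_of_injOn (fun p hp q hq h => hinj p hp q hq h)]) |>.symm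
      ⟨key p, Finset.mem_image_of_mem key p.2⟩

lemma mkT_lt_iff (key : ℕ × ℕ → ℕ)
    (hinj : ∀ p ∈ skewCells lam mu, ∀ q ∈ skewCells lam mu, key p = key q → p = q)
    (p q : {c // c ∈ skewCells lam mu}) :
    mkT lam mu key hinj p < mkT lam mu key hinj q ↔ key p < key q := by
  simp only [mkT]
  rw [OrderIso.lt_iff_lt]
  exact Subtype.mk_lt_mk

lemma mkT_bijective (key : ℕ × ℕ → ℕ)
    (hinj : ∀ p ∈ skewCells lam mu, ∀ q ∈ skewCells lam mu, key p = key q → p = q) :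
    Function.Bijective (mkT lam mu key hinj) := by
  rw [Fintype.bijective_iff_injective_and_card]
  constructor
  · intro p q h
    have : key p = key q := by
      by_contra hne
      rcases Nat.lt_or_ge (key p) (key q) with h' | h'
      · exact absurd h (ne_of_lt ((mkT_lt_iff key hinj p q).2 h'))
      · have h'' : key q < key p := by omega
        exact absurd h.symm (ne_of_lt ((mkT_lt_iff key hinj q p).2 h''))
    exact Subtype.ext (hinj p p.2 q q.2 this)
  · simp [Fintype.card_coe]

/-- A large bound. -/
def NB (lam : YoungDiagram) : ℕ := (lam.cells.sup fun p => p.1 + p.2) + 2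

lemma coord_lt {p : ℕ × ℕ} (hp : p ∈ skewCells lam mu) :
    p.1 + 1 < NB lam ∧ p.2 + 1 < NB lam := by
  have h1 : p ∈ lam.cells := (Finset.mem_sdiff.1 hp).1
  have h2 : p.1 + p.2 ≤ lam.cells.sup fun p => p.1 + p.2 :=
    Finset.le_sup (f := fun p : ℕ × ℕ => p.1 + p.2) h1
  unfold NB
  omega

/-- Index of a cell within its column. -/
def hcol (mu : YoungDiagram) (p : ℕ × ℕ) : ℕ := p.1 - mu.colLen p.2

def keyMin (lam mu : YoungDiagram) (p : ℕ × ℕ) : ℕ :=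
  hcol mu p * (NB lam * NB lam) + (NB lam - 1 - p.1) * NB lam + p.2

lemma keyMin_lt {p q : ℕ × ℕ} (hp : p ∈ skewCells lam mu) (hq : q ∈ skewCells lam mu)
    (h : hcol mu p < hcol mu q ∨
      (hcol mu p = hcol mu q ∧ (q.1 < p.1 ∨ (p.1 = q.1 ∧ p.2 < q.2)))) :
    keyMin lam mu p < keyMin lam mu q := by
  have h1 := coord_lt hp
  have h2 := coord_lt hq
  apply lex3 (by omega) (by omega) (by omega)
  rcases h with h | ⟨h, h' | ⟨h', h''⟩⟩
  · exact Or.inl h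
  · exact Or.inr ⟨h, Or.inl (by omega)⟩
  · exact Or.inr ⟨h, Or.inr ⟨by omega, h''⟩⟩

lemma keyMin_inj : ∀ p ∈ skewCells lam mu, ∀ q ∈ skewCells lam mu,
    keyMin lam mu p = keyMin lam mu q → p = q := by
  intro p hp q hq h
  by_contra hne
  rcases Nat.lt_trichotomy (hcol mu p) (hcol mu q) with hc | hc | hc
  · exact absurd h (ne_of_lt (keyMin_lt hp hq (Or.inl hc)))
  · rcases Nat.lt_trichotomy p.1 q.1 with hr | hr | hr
    · exact absurd h.symm (ne_of_lt (keyMin_lt hq hp (Or.inr ⟨hc.symm, Or.inl hr⟩)))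
    · rcases Nat.lt_trichotomy p.2 q.2 with hcc | hcc | hcc
      · exact absurd h (ne_of_lt (keyMin_lt hp hq (Or.inr ⟨hc, Or.inr ⟨hr, hcc⟩⟩)))
      · exact hne (Prod.ext hr hcc)
      · exact absurd h.symm
          (ne_of_lt (keyMin_lt hq hp (Or.inr ⟨hc.symm, Or.inr ⟨hr.symm, hcc⟩⟩)))
    · exact absurd h (ne_of_lt (keyMin_lt hp hq (Or.inr ⟨hc, Or.inl hr⟩)))
  · exact absurd h.symm (ne_of_lt (keyMin_lt hq hp (Or.inl hc)))

lemma hcol_le_of_keyMin_lt {p q : ℕ × ℕ} (hp : p ∈ skewCells lam mu)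
    (hq : q ∈ skewCells lam mu) (h : keyMin lam mu p < keyMin lam mu q) :
    hcol mu p ≤ hcol mu q := by
  by_contra hc
  exact absurd (keyMin_lt hq hp (Or.inl (by omega))) (by omega)

lemma hcol_lt_of_keyMin_lt {p q : ℕ × ℕ} (hp : p ∈ skewCells lam mu)
    (hq : q ∈ skewCells lam mu) (hrow : p.1 < q.1) (h : keyMin lam mu p < keyMin lam mu q) :
    hcol mu p < hcol mu q := by
  have hle := hcol_le_of_keyMin_lt hp hq h
  rcases Nat.lt_or_ge (hcol mu p) (hcol mu q) with h' | h'
  · exact h'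
  · have he : hcol mu q = hcol mu p := by omega
    exact absurd (keyMin_lt hq hp (Or.inr ⟨he, Or.inl hrow⟩)) (by omega)

noncomputable def TMin (lam mu : YoungDiagram) : SkewSYT lam mu := by
  refine ⟨mkT lam mu (keyMin lam mu) keyMin_inj, mkT_bijective _ _, ?_, ?_⟩
  · intro c c' h1 h2
    rw [mkT_lt_iff]
    apply keyMin_lt c.2 c'.2
    have hanti := mu.colLen_anti (c : ℕ × ℕ).2 (c' : ℕ × ℕ).2 (le_of_lt h2)
    unfold hcol
    rcases Nat.lt_or_ge ((c : ℕ × ℕ).1 - mu.colLen (c : ℕ × ℕ).2)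
      ((c' : ℕ × ℕ).1 - mu.colLen (c' : ℕ × ℕ).2) with h | h
    · exact Or.inl h
    · exact Or.inr ⟨by omega, Or.inr ⟨h1, h2⟩⟩
  · intro c c' h1 h2
    rw [mkT_lt_iff]
    apply keyMin_lt c.2 c'.2
    have hm := mem_skew_col.1 c.2
    left
    unfold hcol
    rw [h1] at hm ⊢
    omega

lemma hcol_le_colMax {p : ℕ × ℕ} (hp : p ∈ skewCells lam mu) :
    hcol mu p + 1 ≤ colMax lam mu := by
  have h1 := mem_skew_col.1 hp
  have h2 : ((skewCells lam mu).filter fun q => q.2 = p.2).card ≤ colMax lam mu := by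
    rw [colMax]
    exact Finset.le_sup
      (f := fun p : ℕ × ℕ => ((skewCells lam mu).filter (fun q => q.2 = p.2)).card) hp
  rw [col_card] at h2
  unfold hcol
  omega

lemma card_des_TMin :
    (DesT lam mu (TMin lam mu)).card ≤ colMax lam mu - 1 := by
  classical
  set n := (skewCells lam mu).card with hn
  set T := TMin lam mu with hT
  have hbij : Function.Bijective T.1 := T.2.1
  set E := Equiv.ofBijective T.1 hbij with hE
  have hEapp : ∀ j : Fin n, (T.1 (E.symm j) : ℕ) = (j : ℕ) := by
    intro j
    have : E (E.symm j) = j := E.apply_symm_apply j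
    rw [hE] at this
    exact congrArg Fin.val this
  have hkeylt : ∀ c c' : {c // c ∈ skewCells lam mu}, (T.1 c : ℕ) < (T.1 c' : ℕ) →
      keyMin lam mu c < keyMin lam mu c' := by
    intro c c' h
    have : T.1 c < T.1 c' := h
    rwa [hT, TMin, mkT_lt_iff] at this
  let φ : ℕ → ℕ := fun i => if h : i < n then hcol mu (E.symm ⟨i, h⟩ : {c // c ∈ skewCells lam mu}).1 else 0
  have hφmono : ∀ j j' (hj : j < n) (hj' : j' < n), j ≤ j' → φ j ≤ φ j' := by
    intro j j' hj hj' hle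
    rcases Nat.eq_or_lt_of_le hle with rfl | hlt
    · exact le_refl _
    · have h1 : (T.1 (E.symm ⟨j, hj⟩) : ℕ) < (T.1 (E.symm ⟨j', hj'⟩) : ℕ) := by
        rw [hEapp, hEapp]; exact hlt
      have h2 := hkeylt _ _ h1
      have h3 := hcol_le_of_keyMin_lt (E.symm ⟨j, hj⟩).2 (E.symm ⟨j', hj'⟩).2 h2
      simp only [φ, dif_pos hj, dif_pos hj']
      exact h3
  have hdes : ∀ i ∈ DesT lam mu T, ∃ (hi : i < n) (hi1 : i - 1 < n),
      φ i = hcol mu (E.symm ⟨i, hi⟩ : {c // c ∈ skewCells lam mu}).1 ∧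
      hcol mu (E.symm ⟨i - 1, hi1⟩ : {c // c ∈ skewCells lam mu}).1 < φ i := by
    intro i hi
    rw [DesT, Finset.mem_filter, Finset.mem_Icc] at hi
    obtain ⟨⟨hge, hle⟩, c, c', hc, hc', hrow⟩ := hi
    have hin : i < n := by omega
    have hin1 : i - 1 < n := by omega
    have hceq : E.symm ⟨i - 1, hin1⟩ = c := by
      apply E.injective
      rw [E.apply_symm_apply]
      exact Fin.ext (by rw [hE]; simp only [Equiv.ofBijective_apply]; omega)
    have hceq' : E.symm ⟨i, hin⟩ = c' := by
      apply E.injective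
      rw [E.apply_symm_apply]
      exact Fin.ext (by rw [hE]; simp only [Equiv.ofBijective_apply]; omega)
    refine ⟨hin, hin1, by simp only [φ, dif_pos hin], ?_⟩
    simp only [φ, dif_pos hin, hceq, hceq']
    exact hcol_lt_of_keyMin_lt c.2 c'.2 hrow (hkeylt c c' (by omega))
  have key : (DesT lam mu T).card ≤ (Finset.Icc 1 (colMax lam mu - 1)).card := by
    apply Finset.card_le_card_of_injOn φ
    · intro i hi
      obtain ⟨hin, hin1, heq, hlt⟩ := hdes i hi
      rw [Finset.mem_coe, Finset.mem_Icc]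
      have hub := hcol_le_colMax (E.symm ⟨i, hin⟩).2
      rw [heq] at hlt ⊢
      omega
    · intro i hi i' hi' heq
      rw [Finset.mem_coe] at hi hi'
      by_contra hne
      have key2 : ∀ a b, a ∈ DesT lam mu T → b ∈ DesT lam mu T → a < b → φ a < φ b := by
        intro a b ha hb hab
        obtain ⟨han, _, haeq, _⟩ := hdes a ha
        obtain ⟨hbn, hbn1, hbeq, hblt⟩ := hdes b hb
        have h1 : φ a ≤ φ (b - 1) := hφmono a (b - 1) han hbn1 (by
          rw [DesT, Finset.mem_filter, Finset.mem_Icc] at ha; omega)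
        have h2 : φ (b - 1) = hcol mu (E.symm ⟨b - 1, hbn1⟩ : {c // c ∈ skewCells lam mu}).1 := by
          simp only [φ, dif_pos hbn1]
        omega
      rcases Nat.lt_or_ge i i' with h | h
      · exact absurd heq (ne_of_lt (key2 i i' hi hi' h))
      · have h' : i' < i := by omega
        exact absurd heq.symm (ne_of_lt (key2 i' i hi' hi h'))
  rwa [Nat.card_Icc, Nat.add_sub_cancel] at key

/-- Index of a cell within its row. -/
def grow (mu : YoungDiagram) (p : ℕ × ℕ) : ℕ := p.2 - mu.rowLen p.1

def keyMax (lam mu : YoungDiagram) (p : ℕ × ℕ) : ℕ :=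
  grow mu p * (NB lam * NB lam) + p.1 * NB lam + p.2

lemma keyMax_lt {p q : ℕ × ℕ} (hp : p ∈ skewCells lam mu) (hq : q ∈ skewCells lam mu)
    (h : grow mu p < grow mu q ∨
      (grow mu p = grow mu q ∧ (p.1 < q.1 ∨ (p.1 = q.1 ∧ p.2 < q.2)))) :
    keyMax lam mu p < keyMax lam mu q := by
  have h1 := coord_lt hp
  have h2 := coord_lt hq
  apply lex3 (by omega) (by omega) (by omega)
  rcases h with h | ⟨h, h' | ⟨h', h''⟩⟩
  · exact Or.inl h
  · exact Or.inr ⟨h, Or.inl h'⟩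
  · exact Or.inr ⟨h, Or.inr ⟨h', h''⟩⟩

lemma keyMax_inj : ∀ p ∈ skewCells lam mu, ∀ q ∈ skewCells lam mu,
    keyMax lam mu p = keyMax lam mu q → p = q := by
  intro p hp q hq h
  by_contra hne
  rcases Nat.lt_trichotomy (grow mu p) (grow mu q) with hc | hc | hc
  · exact absurd h (ne_of_lt (keyMax_lt hp hq (Or.inl hc)))
  · rcases Nat.lt_trichotomy p.1 q.1 with hr | hr | hr
    · exact absurd h (ne_of_lt (keyMax_lt hp hq (Or.inr ⟨hc, Or.inl hr⟩)))
    · rcases Nat.lt_trichotomy p.2 q.2 with hcc | hcc | hcc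
      · exact absurd h (ne_of_lt (keyMax_lt hp hq (Or.inr ⟨hc, Or.inr ⟨hr, hcc⟩⟩)))
      · exact hne (Prod.ext hr hcc)
      · exact absurd h.symm
          (ne_of_lt (keyMax_lt hq hp (Or.inr ⟨hc.symm, Or.inr ⟨hr.symm, hcc⟩⟩)))
    · exact absurd h.symm (ne_of_lt (keyMax_lt hq hp (Or.inr ⟨hc.symm, Or.inl hr⟩)))
  · exact absurd h.symm (ne_of_lt (keyMax_lt hq hp (Or.inl hc)))

lemma grow_le_of_keyMax_lt {p q : ℕ × ℕ} (hp : p ∈ skewCells lam mu)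
    (hq : q ∈ skewCells lam mu) (h : keyMax lam mu p < keyMax lam mu q) :
    grow mu p ≤ grow mu q := by
  by_contra hc
  exact absurd (keyMax_lt hq hp (Or.inl (by omega))) (by omega)

lemma grow_lt_of_keyMax_lt {p q : ℕ × ℕ} (hp : p ∈ skewCells lam mu)
    (hq : q ∈ skewCells lam mu) (hrow : q.1 ≤ p.1) (h : keyMax lam mu p < keyMax lam mu q) :
    grow mu p < grow mu q := by
  have hle := grow_le_of_keyMax_lt hp hq h
  rcases Nat.lt_or_ge (grow mu p) (grow mu q) with h' | h'
  · exact h'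
  · have he : grow mu q = grow mu p := by omega
    exfalso
    rcases Nat.lt_or_ge q.1 p.1 with hr | hr
    · exact absurd (keyMax_lt hq hp (Or.inr ⟨he, Or.inl hr⟩)) (by omega)
    · have hre : p.1 = q.1 := by omega
      have hmp := mem_skew_row.1 hp
      have hmq := mem_skew_row.1 hq
      have hcc : p.2 = q.2 := by
        have : grow mu p = grow mu q := by omega
        unfold grow at this
        rw [hre] at this hmp
        omega
      have hpq : p = q := Prod.ext hre hcc
      rw [hpq] at h
      exact lt_irrefl _ h

noncomputable def TMax (lam mu : YoungDiagram) : SkewSYT lam mu := by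
  refine ⟨mkT lam mu (keyMax lam mu) keyMax_inj, mkT_bijective _ _, ?_, ?_⟩
  · intro c c' h1 h2
    rw [mkT_lt_iff]
    apply keyMax_lt c.2 c'.2
    have hm := mem_skew_row.1 c.2
    left
    unfold grow
    rw [h1] at hm ⊢
    omega
  · intro c c' h1 h2
    rw [mkT_lt_iff]
    apply keyMax_lt c.2 c'.2
    have hanti := mu.rowLen_anti (c : ℕ × ℕ).1 (c' : ℕ × ℕ).1 (le_of_lt h2)
    unfold grow
    rcases Nat.lt_or_ge ((c : ℕ × ℕ).2 - mu.rowLen (c : ℕ × ℕ).1)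
      ((c' : ℕ × ℕ).2 - mu.rowLen (c' : ℕ × ℕ).1) with h | h
    · exact Or.inl h
    · exact Or.inr ⟨by omega, Or.inl h2⟩

lemma grow_le_rowMax {p : ℕ × ℕ} (hp : p ∈ skewCells lam mu) :
    grow mu p + 1 ≤ rowMax lam mu := by
  have h1 := mem_skew_row.1 hp
  have h2 : ((skewCells lam mu).filter fun q => q.1 = p.1).card ≤ rowMax lam mu := by
    rw [rowMax]
    exact Finset.le_sup
      (f := fun p : ℕ × ℕ => ((skewCells lam mu).filter (fun q => q.1 = p.1)).card) hp
  rw [row_card] at h2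
  unfold grow
  omega

lemma card_nondes_TMax :
    ((Finset.Icc 1 ((skewCells lam mu).card - 1)) \ DesT lam mu (TMax lam mu)).card ≤
      rowMax lam mu - 1 := by
  classical
  set n := (skewCells lam mu).card with hn
  set T := TMax lam mu with hT
  set ND := (Finset.Icc 1 (n - 1)) \ DesT lam mu T with hND
  have hbij : Function.Bijective T.1 := T.2.1
  set E := Equiv.ofBijective T.1 hbij with hE
  have hEapp : ∀ j : Fin n, (T.1 (E.symm j) : ℕ) = (j : ℕ) := by
    intro j
    have : E (E.symm j) = j := E.apply_symm_apply j
    rw [hE] at this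
    exact congrArg Fin.val this
  have hkeylt : ∀ c c' : {c // c ∈ skewCells lam mu}, (T.1 c : ℕ) < (T.1 c' : ℕ) →
      keyMax lam mu c < keyMax lam mu c' := by
    intro c c' h
    have : T.1 c < T.1 c' := h
    rwa [hT, TMax, mkT_lt_iff] at this
  let ψ : ℕ → ℕ := fun i => if h : i < n then grow mu (E.symm ⟨i, h⟩ : {c // c ∈ skewCells lam mu}).1 else 0
  have hψmono : ∀ j j' (hj : j < n) (hj' : j' < n), j ≤ j' → ψ j ≤ ψ j' := by
    intro j j' hj hj' hle
    rcases Nat.eq_or_lt_of_le hle with rfl | hlt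
    · exact le_refl _
    · have h1 : (T.1 (E.symm ⟨j, hj⟩) : ℕ) < (T.1 (E.symm ⟨j', hj'⟩) : ℕ) := by
        rw [hEapp, hEapp]; exact hlt
      have h2 := hkeylt _ _ h1
      have h3 := grow_le_of_keyMax_lt (E.symm ⟨j, hj⟩).2 (E.symm ⟨j', hj'⟩).2 h2
      simp only [ψ, dif_pos hj, dif_pos hj']
      exact h3
  have hdes : ∀ i ∈ ND, ∃ (hi : i < n) (hi1 : i - 1 < n),
      ψ i = grow mu (E.symm ⟨i, hi⟩ : {c // c ∈ skewCells lam mu}).1 ∧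
      grow mu (E.symm ⟨i - 1, hi1⟩ : {c // c ∈ skewCells lam mu}).1 < ψ i := by
    intro i hi
    rw [hND, Finset.mem_sdiff, Finset.mem_Icc] at hi
    obtain ⟨⟨hge, hle⟩, hnot⟩ := hi
    have hin : i < n := by omega
    have hin1 : i - 1 < n := by omega
    set c := E.symm ⟨i - 1, hin1⟩ with hc
    set c' := E.symm ⟨i, hin⟩ with hc'
    have hvc : (T.1 c : ℕ) = i - 1 := hEapp _
    have hvc' : (T.1 c' : ℕ) = i := hEapp _
    have hrow : ¬ ((c : ℕ × ℕ).1 < (c' : ℕ × ℕ).1) := by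
      intro hr
      apply hnot
      rw [DesT, Finset.mem_filter, Finset.mem_Icc]
      exact ⟨⟨hge, hle⟩, c, c', by omega, by omega, hr⟩
    refine ⟨hin, hin1, by simp only [ψ, dif_pos hin], ?_⟩
    simp only [ψ, dif_pos hin, dif_pos hin1]
    rw [← hc, ← hc']
    exact grow_lt_of_keyMax_lt c.2 c'.2 (by omega) (hkeylt c c' (by omega))
  have key : ND.card ≤ (Finset.Icc 1 (rowMax lam mu - 1)).card := by
    apply Finset.card_le_card_of_injOn ψ
    · intro i hi
      obtain ⟨hin, hin1, heq, hlt⟩ := hdes i hi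
      rw [Finset.mem_coe, Finset.mem_Icc]
      have hub := grow_le_rowMax (E.symm ⟨i, hin⟩).2
      rw [heq] at hlt ⊢
      omega
    · intro i hi i' hi' heq
      rw [Finset.mem_coe] at hi hi'
      by_contra hne
      have key2 : ∀ a b, a ∈ ND → b ∈ ND → a < b → ψ a < ψ b := by
        intro a b ha hb hab
        obtain ⟨han, _, haeq, _⟩ := hdes a ha
        obtain ⟨hbn, hbn1, hbeq, hblt⟩ := hdes b hb
        have h1 : ψ a ≤ ψ (b - 1) := hψmono a (b - 1) han hbn1 (by
          rw [hND, Finset.mem_sdiff, Finset.mem_Icc] at ha; omega)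
        have h2 : ψ (b - 1) = grow mu (E.symm ⟨b - 1, hbn1⟩ : {c // c ∈ skewCells lam mu}).1 := by
          simp only [ψ, dif_pos hbn1]
        omega
      rcases Nat.lt_or_ge i i' with h | h
      · exact absurd heq (ne_of_lt (key2 i i' hi hi' h))
      · have h' : i' < i := by omega
        exact absurd heq.symm (ne_of_lt (key2 i' i hi' hi h'))
  rwa [Nat.card_Icc, Nat.add_sub_cancel] at key

end SkewProof

/-- For a skew shape `λ/μ` with `n ≥ 1` cells, the minimum of `|Des(T)|` over SYT `T` of
shape `λ/μ` is `c - 1` and the maximum is `n - r`, where `c` (resp. `r`) is the maximum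
column (resp. row) length; in particular `(c-1) + (r-1) ≤ n - 1`. -/
theorem stmt_12 (lam mu : YoungDiagram) (hmu : mu ≤ lam) (n : ℕ)
    (hn : n = (skewCells lam mu).card) (hpos : 0 < n) :
    IsLeast {d | ∃ T : SkewSYT lam mu, (DesT lam mu T).card = d} (colMax lam mu - 1) ∧
    IsGreatest {d | ∃ T : SkewSYT lam mu, (DesT lam mu T).card = d} (n - rowMax lam mu) ∧
    (colMax lam mu - 1) + (rowMax lam mu - 1) ≤ n - 1 := by
  open SkewProof in
  subst hn
  have hne : (skewCells lam mu).Nonempty := Finset.card_pos.1 hpos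
  obtain ⟨p0, hp0⟩ := hne
  have hr1 : 1 ≤ rowMax lam mu := by
    have h1 : 0 < ((skewCells lam mu).filter fun q => q.1 = p0.1).card :=
      Finset.card_pos.2 ⟨p0, Finset.mem_filter.2 ⟨hp0, rfl⟩⟩
    have h2 : ((skewCells lam mu).filter fun q => q.1 = p0.1).card ≤ rowMax lam mu := by
      rw [rowMax]
      exact Finset.le_sup
        (f := fun p : ℕ × ℕ => ((skewCells lam mu).filter (fun q => q.1 = p.1)).card) hp0
    omega
  have hrn : rowMax lam mu ≤ (skewCells lam mu).card := by
    rw [rowMax]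
    apply Finset.sup_le
    intro p hp
    exact Finset.card_le_card (Finset.filter_subset _ _)
  have hminmem : (DesT lam mu (TMin lam mu)).card = colMax lam mu - 1 :=
    le_antisymm card_des_TMin (card_des_lower _)
  have hmaxmem : (DesT lam mu (TMax lam mu)).card = (skewCells lam mu).card - rowMax lam mu := by
    have h1 := card_des_upper (TMax lam mu)
    have h2 := card_nondes_TMax (lam := lam) (mu := mu)
    have hsub : DesT lam mu (TMax lam mu) ⊆ Finset.Icc 1 ((skewCells lam mu).card - 1) :=
      Finset.filter_subset _ _
    have hDle : (DesT lam mu (TMax lam mu)).card ≤ (skewCells lam mu).card - 1 := by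
      have := Finset.card_le_card hsub
      rwa [Nat.card_Icc] at this
    have hndeq : ((Finset.Icc 1 ((skewCells lam mu).card - 1)) \ DesT lam mu (TMax lam mu)).card
        = ((skewCells lam mu).card - 1) - (DesT lam mu (TMax lam mu)).card := by
      rw [Finset.card_sdiff_of_subset hsub, Nat.card_Icc]; omega
    omega
  refine ⟨⟨⟨TMin lam mu, hminmem⟩, ?_⟩, ⟨⟨TMax lam mu, hmaxmem⟩, ?_⟩, ?_⟩
  · rintro d ⟨T, rfl⟩
    exact card_des_lower T
  · rintro d ⟨T, rfl⟩
    exact card_des_upper T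
  · have h1 := card_des_lower (TMax lam mu)
    rw [hmaxmem] at h1
    omega
end

section
/- Let λ/μ be a skew shape with n cells such that every standard Young tableau of shape λ/μ has either k−1 or k descents for some fixed 1 ≤ k ≤ n−1, both values occurring, and suppose a cyclic descent map cDes exists for λ/μ (a map to subsets of {1,...,n} restricting to Des on {1,...,n-1}, with multiset of values closed under cyclic rotation mod n, and satisfying ∅ ⊊ cDes(T) ⊊ {1,...,n}). Then cDes is unique and is given by: n ∈ cDes(T) if and only if |Des(T)| = k−1; equivalently, |cDes(T)| = k for all T. -/
open Finset

instance (lam mu : YoungDiagram) : DecidablePred (IsSkewSYT lam mu) := fun T => by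
  unfold IsSkewSYT; infer_instance

instance (lam mu : YoungDiagram) : Fintype (SkewSYT lam mu) :=
  Subtype.fintype _

lemma rot_modInj {n i j : ℕ} (hi : 1 ≤ i) (hi' : i ≤ n) (hj : 1 ≤ j) (hj' : j ≤ n)
    (h : i % n = j % n) : i = j := by
  rcases eq_or_lt_of_le hi' with h1 | h1
  · rcases eq_or_lt_of_le hj' with h2 | h2
    · omega
    · subst h1; rw [Nat.mod_self, Nat.mod_eq_of_lt h2] at h; omega
  · rcases eq_or_lt_of_le hj' with h2 | h2
    · subst h2; rw [Nat.mod_self, Nat.mod_eq_of_lt h1] at h; omega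
    · rw [Nat.mod_eq_of_lt h1, Nat.mod_eq_of_lt h2] at h; omega

lemma rot_subset {n : ℕ} (hn : 1 ≤ n) {J : Finset ℕ} (hJ : J ⊆ Finset.Icc 1 n) :
    J.image (fun i => i % n + 1) ⊆ Finset.Icc 1 n := by
  intro x hx
  simp only [Finset.mem_image] at hx
  obtain ⟨i, hi, rfl⟩ := hx
  have : i % n < n := Nat.mod_lt _ (by omega)
  simp only [Finset.mem_Icc]; omega

lemma rot_card {n : ℕ} {J : Finset ℕ} (hJ : J ⊆ Finset.Icc 1 n) :
    (J.image (fun i => i % n + 1)).card = J.card := by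
  apply Finset.card_image_of_injOn
  intro i hi j hj h
  have hi' := hJ hi; have hj' := hJ hj
  simp only [Finset.mem_Icc] at hi' hj'
  exact rot_modInj hi'.1 hi'.2 hj'.1 hj'.2 (by dsimp only at h; omega)

lemma rot_mem {n : ℕ} {J : Finset ℕ} (hJ : J ⊆ Finset.Icc 1 n) {j : ℕ}
    (h2 : 2 ≤ j) (hjn : j ≤ n) :
    j ∈ J.image (fun i => i % n + 1) ↔ j - 1 ∈ J := by
  simp only [Finset.mem_image]
  constructor
  · rintro ⟨i, hi, hij⟩
    have hi' := hJ hi; simp only [Finset.mem_Icc] at hi'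
    have hlt : i < n := by
      rcases eq_or_lt_of_le hi'.2 with h | h
      · subst h; rw [Nat.mod_self] at hij; omega
      · exact h
    rw [Nat.mod_eq_of_lt hlt] at hij
    have : i = j - 1 := by omega
    rwa [← this]
  · intro h
    refine ⟨j - 1, h, ?_⟩
    rw [Nat.mod_eq_of_lt (by omega)]
    omega

/-- Uniqueness of cyclic descent maps when all descent numbers lie in `{k-1, k}`:
if every SYT of the skew shape `λ/μ` (with `n` cells) has `k-1` or `k` descents, both
values occurring, then any cyclic descent map `cDes` (a map to subsets of `{1,…,n}`
restricting to `Des` on `{1,…,n-1}`, with multiset of values closed under cyclic rotation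
mod `n`, and with `∅ ⊊ cDes(T) ⊊ {1,…,n}`) satisfies: `n ∈ cDes(T) ↔ |Des(T)| = k-1`;
equivalently `|cDes(T)| = k` for all `T`. -/
theorem stmt_13 (lam mu : YoungDiagram) (hmu : mu ≤ lam) (n k : ℕ)
    (hn : n = (skewCells lam mu).card) (hk1 : 1 ≤ k) (hk2 : k ≤ n - 1)
    (hD : ∀ T : SkewSYT lam mu,
      (DesT lam mu T).card = k - 1 ∨ (DesT lam mu T).card = k)
    (hDk1 : ∃ T : SkewSYT lam mu, (DesT lam mu T).card = k - 1)
    (hDk : ∃ T : SkewSYT lam mu, (DesT lam mu T).card = k)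
    (cDes : SkewSYT lam mu → Finset ℕ)
    (hsub : ∀ T, cDes T ⊆ Finset.Icc 1 n)
    (hext : ∀ T, cDes T ∩ Finset.Icc 1 (n - 1) = DesT lam mu T)
    (hrot : ∀ J : Finset ℕ,
      ((Finset.univ : Finset (SkewSYT lam mu)).filter (fun T => cDes T = J)).card =
      ((Finset.univ : Finset (SkewSYT lam mu)).filter
        (fun T => cDes T = J.image (fun i => i % n + 1))).card)
    (hne : ∀ T, cDes T ≠ ∅ ∧ cDes T ≠ Finset.Icc 1 n) :
    ∀ T, (n ∈ cDes T ↔ (DesT lam mu T).card = k - 1) ∧ (cDes T).card = k := by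
  have hn2 : 2 ≤ n := by omega
  have hsplit : ∀ T, cDes T \ {n} = DesT lam mu T := by
    intro T
    rw [← hext T]
    ext x
    simp only [Finset.mem_sdiff, Finset.mem_inter, Finset.mem_Icc, Finset.mem_singleton]
    constructor
    · rintro ⟨hx, hxn⟩
      have hx' := hsub T hx
      simp only [Finset.mem_Icc] at hx'
      exact ⟨hx, hx'.1, by omega⟩
    · rintro ⟨hx, h1, h2⟩
      exact ⟨hx, by omega⟩
  have hcardsplit : ∀ T, (cDes T).card =
      (DesT lam mu T).card + (if n ∈ cDes T then 1 else 0) := by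
    intro T
    rw [← hsplit T]
    by_cases h : n ∈ cDes T
    · rw [if_pos h, Finset.card_sdiff_of_subset (by simpa using h)]
      have h1 : 1 ≤ (cDes T).card := Finset.card_pos.mpr ⟨n, h⟩
      simp only [Finset.card_singleton]
      omega
    · rw [if_neg h]
      have he : cDes T \ {n} = cDes T := by
        ext x
        simp only [Finset.mem_sdiff, Finset.mem_singleton]
        exact ⟨fun hx => hx.1, fun hx => ⟨hx, fun e => h (e ▸ hx)⟩⟩
      rw [he, Nat.add_zero]
  set P : Finset ℕ → Prop := fun J => ∃ T, cDes T = J with hP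
  have hPsub : ∀ K, P K → K ⊆ Finset.Icc 1 n := by
    rintro K ⟨T, rfl⟩; exact hsub T
  have hProt : ∀ K, P K → P (K.image (fun i => i % n + 1)) := by
    rintro K ⟨T, hT⟩
    have h1 : 0 < ((Finset.univ : Finset (SkewSYT lam mu)).filter
        (fun T => cDes T = K)).card :=
      Finset.card_pos.mpr ⟨T, by simp [hT]⟩
    rw [hrot K] at h1
    obtain ⟨T', hT'⟩ := Finset.card_pos.mp h1
    simp only [Finset.mem_filter] at hT'
    exact ⟨T', hT'.2⟩
  have hPcard : ∀ K, P K →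
      K.card = k ∨ (K.card = k - 1 ∧ n ∉ K) ∨ (K.card = k + 1 ∧ n ∈ K) := by
    rintro K ⟨T, rfl⟩
    have hc := hcardsplit T
    by_cases h : n ∈ cDes T
    · rw [if_pos h] at hc
      rcases hD T with h' | h'
      · left; omega
      · right; right; exact ⟨by omega, h⟩
    · rw [if_neg h] at hc
      rcases hD T with h' | h'
      · right; left; exact ⟨by omega, h⟩
      · left; omega
  have key : ∀ (J : Finset ℕ), P J → ∀ i : ℕ, ∃ K : Finset ℕ, P K ∧
      K ⊆ Finset.Icc 1 n ∧ K.card = J.card ∧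
      ∀ j, i + 1 ≤ j → j ≤ n → (j ∈ K ↔ j - i ∈ J) := by
    intro J hJ i
    induction i with
    | zero => exact ⟨J, hJ, hPsub J hJ, rfl, fun j _ _ => by simp⟩
    | succ i ih =>
      obtain ⟨K, hPK, hKsub, hKcard, hKmem⟩ := ih
      refine ⟨K.image (fun i => i % n + 1), hProt K hPK, rot_subset (by omega) hKsub,
        by rw [rot_card hKsub, hKcard], ?_⟩
      intro j hj1 hj2
      rw [rot_mem hKsub (by omega) hj2, hKmem (j - 1) (by omega) (by omega)]
      have : j - 1 - i = j - (i + 1) := by omega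
      rw [this]
  have hcardk : ∀ T, (cDes T).card = k := by
    intro T
    rcases hPcard (cDes T) ⟨T, rfl⟩ with h | ⟨h1, _⟩ | ⟨h1, _⟩
    · exact h
    · exfalso
      apply (hne T).1
      rw [Finset.eq_empty_iff_forall_notMem]
      intro x hx
      have hx' := hsub T hx
      simp only [Finset.mem_Icc] at hx'
      obtain ⟨K, hPK, hKsub, hKcard, hKmem⟩ := key (cDes T) ⟨T, rfl⟩ (n - x)
      have hnK : n ∉ K := by
        rcases hPcard K hPK with h | ⟨_, h⟩ | ⟨h, _⟩
        · omega
        · exact h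
        · omega
      have hmem := hKmem n (by omega) le_rfl
      have hxx : n - (n - x) = x := by omega
      rw [hxx] at hmem
      exact hnK (hmem.mpr hx)
    · exfalso
      apply (hne T).2
      apply Finset.Subset.antisymm (hsub T)
      intro x hx
      simp only [Finset.mem_Icc] at hx
      obtain ⟨K, hPK, hKsub, hKcard, hKmem⟩ := key (cDes T) ⟨T, rfl⟩ (n - x)
      have hnK : n ∈ K := by
        rcases hPcard K hPK with h | ⟨h, _⟩ | ⟨_, h⟩
        · omega
        · omega
        · exact h
      have hmem := (hKmem n (by omega) le_rfl).mp hnK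
      have hxx : n - (n - x) = x := by omega
      rwa [hxx] at hmem
  intro T
  have hc := hcardsplit T
  have hck := hcardk T
  refine ⟨⟨fun h => ?_, fun h => ?_⟩, hck⟩
  · rw [if_pos h] at hc; omega
  · by_contra hn'
    rw [if_neg hn'] at hc
    omega
end

section
/- For n ≥ 2, the following polynomial identity holds: Σ_{∅ ⊊ J ⊊ {1,...,n}} r(J)·q^{|J|} = n·q·(1+q)^{n-2}, where r(J) denotes the number of cyclic runs of J, i.e., r(J) = |{j ∈ J : j−1 ∉ J}| with j−1 computed modulo n. -/
open Finset

/-- The number of cyclic runs of `J`: maximal cyclic intervals mod `n` contained in `J`,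
counted as `|{j ∈ J : j - 1 ∉ J}|` (subtraction in `Fin n`, i.e. mod `n`). Subsets of
`{1,…,n}` with their cyclic structure are modelled as subsets of `Fin n`. -/
def cRuns (n : ℕ) [NeZero n] (J : Finset (Fin n)) : ℕ :=
  (J.filter (fun j => j - 1 ∉ J)).card

lemma sum_pow_card {α : Type*} [DecidableEq α] {R : Type*} [CommRing R]
    (s : Finset α) (x : R) :
    ∑ t ∈ s.powerset, x ^ t.card = (1 + x) ^ s.card := by
  rw [add_comm, ← Finset.prod_const, Finset.prod_add]
  simp

lemma sub_one_ne {n : ℕ} [NeZero n] (hn : 2 ≤ n) (j : Fin n) : j - 1 ≠ j := by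
  intro h
  rw [sub_eq_self] at h
  have h2 : (1 : Fin n).val = (0 : Fin n).val := congrArg Fin.val h
  simp [Fin.val_one'] at h2
  omega

lemma crInnerSum (n : ℕ) [NeZero n] (hn : 2 ≤ n) (j : Fin n) :
    ∑ J ∈ (Finset.univ : Finset (Fin n)).powerset.filter
        (fun J => j ∈ J ∧ j - 1 ∉ J),
      (Polynomial.X : Polynomial ℚ) ^ J.card
      = Polynomial.X * (1 + Polynomial.X) ^ (n - 2) := by
  have hne : j - 1 ≠ j := sub_one_ne hn j
  set s : Finset (Fin n) := Finset.univ \ {j, j - 1} with hs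
  have hcard : s.card = n - 2 := by
    rw [hs, Finset.card_sdiff_of_subset (by simp)]
    simp [Finset.card_insert_of_notMem, hne.symm, Finset.card_univ]
  rw [← hcard, ← sum_pow_card s Polynomial.X, Finset.mul_sum]
  rw [Finset.sum_nbij' (i := fun J => J.erase j) (j := fun A => insert j A)]
  · intro J hJ
    simp only [Finset.mem_filter, Finset.mem_powerset] at hJ
    simp only [Finset.mem_powerset, hs]
    intro a ha
    simp only [Finset.mem_erase] at ha
    simp only [Finset.mem_sdiff, Finset.mem_univ, Finset.mem_insert,
      Finset.mem_singleton, true_and]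
    push_neg
    exact ⟨ha.1, fun h => hJ.2.2 (h ▸ ha.2)⟩
  · intro A hA
    simp only [Finset.mem_powerset, hs] at hA
    simp only [Finset.mem_filter, Finset.mem_powerset]
    refine ⟨fun a _ => Finset.mem_univ a, Finset.mem_insert_self _ _, ?_⟩
    intro h
    rcases Finset.mem_insert.mp h with h | h
    · exact hne h
    · have := hA h
      simp at this
  · intro J hJ
    simp only [Finset.mem_filter, Finset.mem_powerset] at hJ
    exact Finset.insert_erase hJ.2.1
  · intro A hA
    simp only [Finset.mem_powerset, hs] at hA
    apply Finset.erase_insert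
    intro h
    have := hA h
    simp at this
  · intro J hJ
    simp only [Finset.mem_filter, Finset.mem_powerset] at hJ
    rw [Finset.card_erase_of_mem hJ.2.1, ← pow_succ']
    congr 1
    have : 1 ≤ J.card := Finset.card_pos.mpr ⟨j, hJ.2.1⟩
    omega

/-- For `n ≥ 2`: `Σ_{∅ ⊊ J ⊊ {1,…,n}} r(J)·q^{|J|} = n·q·(1+q)^{n-2}`. -/
theorem stmt_17 (n : ℕ) (hn : 2 ≤ n) [NeZero n] :
    ∑ J ∈ (Finset.univ : Finset (Fin n)).powerset.filter
        (fun J => J ≠ ∅ ∧ J ≠ Finset.univ),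
      (cRuns n J : Polynomial ℚ) * Polynomial.X ^ J.card =
    (n : Polynomial ℚ) * Polynomial.X * (1 + Polynomial.X) ^ (n - 2) := by
  have step : ∀ J : Finset (Fin n), (cRuns n J : Polynomial ℚ) * Polynomial.X ^ J.card
      = ∑ j : Fin n, if j ∈ J ∧ j - 1 ∉ J then Polynomial.X ^ J.card else 0 := by
    intro J
    rw [← Finset.sum_filter, Finset.sum_const, cRuns]
    have h : Finset.filter (fun j => j ∈ J ∧ j - 1 ∉ J) Finset.univ
        = J.filter (fun j => j - 1 ∉ J) := by
      ext a; simp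
    rw [h, nsmul_eq_mul]
  have hzero : ∀ J ∈ (Finset.univ : Finset (Fin n)).powerset,
      J ∉ (Finset.univ : Finset (Fin n)).powerset.filter
        (fun J => J ≠ ∅ ∧ J ≠ Finset.univ) →
      (cRuns n J : Polynomial ℚ) * Polynomial.X ^ J.card = 0 := by
    intro J hJ hJ'
    simp only [Finset.mem_filter, hJ, true_and, not_and_or, not_not] at hJ'
    rcases hJ' with h | h
    · subst h; simp [cRuns]
    · subst h; simp [cRuns]
  rw [Finset.sum_subset (Finset.filter_subset _ _) hzero]
  calc ∑ J ∈ (Finset.univ : Finset (Fin n)).powerset,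
        (cRuns n J : Polynomial ℚ) * Polynomial.X ^ J.card
        = ∑ J ∈ (Finset.univ : Finset (Fin n)).powerset, ∑ j : Fin n,
            if j ∈ J ∧ j - 1 ∉ J then Polynomial.X ^ J.card else 0 :=
          Finset.sum_congr rfl (fun J _ => step J)
      _ = ∑ j : Fin n, ∑ J ∈ (Finset.univ : Finset (Fin n)).powerset,
            if j ∈ J ∧ j - 1 ∉ J then Polynomial.X ^ J.card else 0 := Finset.sum_comm
      _ = ∑ _j : Fin n, Polynomial.X * (1 + Polynomial.X) ^ (n - 2) := by
          refine Finset.sum_congr rfl (fun j _ => ?_)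
          rw [← Finset.sum_filter]
          exact crInnerSum n hn j
      _ = (n : Polynomial ℚ) * Polynomial.X * (1 + Polynomial.X) ^ (n - 2) := by
          rw [Finset.sum_const, Finset.card_univ, Fintype.card_fin, nsmul_eq_mul, mul_assoc]
end
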